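/- arXiv:1911.00318 — 8 statements merged into one kernel-verified Lean document; each statement's English description precedes it below -/
import Mathlib

section
/- Let f : ℝ → (Fin n → ℝ) → (Fin n → ℝ) be C^∞ (smooth), let y : ℝ → (Fin n → ℝ) be differentiable with y′(t) = f(t, y(t)) for all t, and let t₀ ∈ ℝ with y(t₀) = y₀. Define k₁(h) := h • f(t₀, y₀), k₂(h) := h • f(t₀ + h/2, y₀ + (1/2) • k₁(h)), and y₁(h) := y₀ + k₂(h). Then ‖y₁(h) − y(t₀ + h)‖ = O(h³) as h → 0. (The midpoint method is a 2-stage Runge–Kutta method of order 2.) -/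
open Asymptotics

lemma isBigO_pow_succ_of_deriv {E : Type*} [NormedAddCommGroup E] [NormedSpace ℝ E]
    {F : ℝ → E} (hF : Differentiable ℝ F) (h0 : F 0 = 0) {m : ℕ}
    (hd : (deriv F) =O[nhds 0] fun h : ℝ => h ^ m) :
    F =O[nhds 0] fun h : ℝ => h ^ (m + 1) := by
  obtain ⟨C, hC0, hC⟩ := hd.exists_nonneg
  rw [isBigOWith_iff] at hC
  rw [Metric.eventually_nhds_iff] at hC
  obtain ⟨δ, hδ, hball⟩ := hC
  rw [isBigO_iff]
  refine ⟨C, Metric.eventually_nhds_iff.mpr ⟨δ, hδ, fun h hh => ?_⟩⟩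
  have key : ‖F h - F 0‖ ≤ (C * ‖h‖ ^ m) * ‖h - 0‖ := by
    refine Convex.norm_image_sub_le_of_norm_hasDerivWithin_le (𝕜 := ℝ)
      (f' := deriv F) (s := Metric.closedBall 0 ‖h‖)
      (fun x _ => (hF x).hasDerivAt.hasDerivWithinAt) (fun x hx => ?_)
      (convex_closedBall _ _) ?_ ?_
    · have hx' : ‖x‖ ≤ ‖h‖ := by simpa [Metric.mem_closedBall] using hx
      have hxδ : dist x 0 < δ := by
        simp only [dist_zero_right] at *
        exact lt_of_le_of_lt hx' (by simpa [dist_zero_right] using hh)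
      calc ‖deriv F x‖ ≤ C * ‖x ^ m‖ := hball hxδ
        _ ≤ C * ‖h‖ ^ m := by
            rw [norm_pow]
            exact mul_le_mul_of_nonneg_left (pow_le_pow_left₀ (norm_nonneg _) hx' m) hC0
    · simp
    · simp [Metric.mem_closedBall, dist_zero_right]
  rw [h0, sub_zero, sub_zero] at key
  calc ‖F h‖ ≤ C * ‖h‖ ^ m * ‖h‖ := key
    _ = C * ‖h ^ (m + 1)‖ := by rw [norm_pow]; ring

lemma isBigO_pow_zero {E : Type*} [NormedAddCommGroup E] {F : ℝ → E}
    (hF : ContinuousAt F 0) : F =O[nhds 0] fun h : ℝ => h ^ 0 := by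
  simpa [pow_zero] using (hF.tendsto.isBigO_one ℝ)

/-- Core of the midpoint-method local error estimate, abstracted. -/
lemma midpoint_core {E : Type*} [NormedAddCommGroup E] [NormedSpace ℝ E]
    (Uf : ℝ × E → E) (hf : ContDiff ℝ (⊤ : ℕ∞) Uf)
    (y : ℝ → E) (hy : ∀ t, HasDerivAt y (Uf (t, y t)) t)
    (t₀ : ℝ) (y₀ : E) (hy₀ : y t₀ = y₀) (c : E) (hc : c = Uf (t₀, y₀)) :
    (fun h : ℝ => y₀ + h • Uf (t₀ + h / 2, y₀ + (h / 2) • c) - y (t₀ + h))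
      =O[nhds 0] (fun h : ℝ => h ^ 3) := by
  have hone : (1 : WithTop ℕ∞) ≤ ((⊤:ℕ∞) : WithTop ℕ∞) := by exact_mod_cast le_top
  have hf' : ContDiff ℝ ((⊤:ℕ∞) : WithTop ℕ∞) Uf := hf.of_le (by simp)
  have hfd : ∀ p : ℝ × E, HasFDerivAt Uf (fderiv ℝ Uf p) p := fun p =>
    ((hf.differentiable (by simp)) p).hasFDerivAt
  -- smoothness of y
  have hysm : ContDiff ℝ ((⊤:ℕ∞) : WithTop ℕ∞) y := by
    rw [contDiff_infty]
    intro m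
    induction m with
    | zero =>
      exact contDiff_zero.mpr (continuous_iff_continuousAt.mpr
        fun t => ((hy t).differentiableAt.continuousAt))
    | succ m ih =>
      have key : ContDiff ℝ ((m : WithTop ℕ∞) + 1) y := by
        rw [contDiff_succ_iff_deriv]
        refine ⟨fun t => (hy t).differentiableAt, by simp, ?_⟩
        have hde : deriv y = fun t => Uf (t, y t) := funext fun t => (hy t).deriv
        rw [hde]
        exact (hf.of_le (by exact_mod_cast le_top)).comp (contDiff_id.prodMk ih)
      exact_mod_cast key
  set u : ℝ → ℝ × E := fun h => (t₀ + h / 2, y₀ + (h / 2) • c) with hu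
  set g : ℝ → E := fun h => Uf (u h) with hg
  set Y : ℝ → E := fun h => y (t₀ + h) with hY
  set G' : ℝ → E := fun h => fderiv ℝ Uf (u h) (1/2, (1/2 : ℝ) • c) with hG'
  have husm : ContDiff ℝ ((⊤:ℕ∞) : WithTop ℕ∞) u := by
    apply ContDiff.prodMk
    · exact contDiff_const.add (contDiff_id.div_const 2)
    · exact contDiff_const.add ((contDiff_id.div_const 2).smul contDiff_const)
  have hgsm : ContDiff ℝ ((⊤:ℕ∞) : WithTop ℕ∞) g := hf'.comp husm
  have hYsm : ContDiff ℝ ((⊤:ℕ∞) : WithTop ℕ∞) Y :=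
    hysm.comp (contDiff_const.add contDiff_id)
  have hG'sm : ContDiff ℝ ((⊤:ℕ∞) : WithTop ℕ∞) G' := by
    have h1 : ContDiff ℝ ((⊤:ℕ∞) : WithTop ℕ∞) (fderiv ℝ Uf) :=
      hf.fderiv_right (by simp)
    exact (h1.comp husm).clm_apply contDiff_const
  set F : ℝ → E := fun h => y₀ + h • g h - Y h with hF
  have hFsm : ContDiff ℝ ((⊤:ℕ∞) : WithTop ℕ∞) F :=
    (contDiff_const.add (contDiff_id.smul hgsm)).sub hYsm
  have hu' : ∀ h : ℝ, HasDerivAt u (1/2, (1/2 : ℝ) • c) h := fun h => by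
    apply HasDerivAt.prodMk
    · simpa using (hasDerivAt_const h t₀).fun_add ((hasDerivAt_id h).div_const 2)
    · simpa using (hasDerivAt_const h y₀).fun_add (((hasDerivAt_id h).div_const 2).smul_const c)
  have hg' : ∀ h : ℝ, HasDerivAt g (G' h) h := fun h =>
    (hfd (u h)).comp_hasDerivAt h (hu' h)
  have hY' : ∀ h : ℝ, HasDerivAt Y (Uf (t₀ + h, Y h)) h := fun h => by
    have key := ((hy (t₀ + h)).scomp h (h := fun s : ℝ => t₀ + s)
      ((hasDerivAt_const h t₀).fun_add (hasDerivAt_id h)))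
    simpa [hY, Function.comp_def] using key
  have hF' : ∀ h : ℝ, HasDerivAt F (g h + h • G' h - Uf (t₀ + h, Y h)) h := fun h => by
    have h1 : HasDerivAt (fun s : ℝ => s • g s) (h • G' h + (1:ℝ) • g h) h :=
      (hasDerivAt_id h).smul (hg' h)
    have h2 := (hasDerivAt_const h y₀).fun_add h1
    have h3 := h2.fun_sub (hY' h)
    convert h3 using 1
    module
  have hderivF : deriv F = fun h => g h + h • G' h - Uf (t₀ + h, Y h) :=
    funext fun h => (hF' h).deriv
  have hF0 : F 0 = 0 := by simp [hF, hY, hy₀]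
  have hdF0 : deriv F 0 = 0 := by
    rw [hderivF]
    simp [hg, hu, hY, hy₀]
  set D := fderiv ℝ Uf (t₀, y₀) with hD
  have hu0 : u 0 = (t₀, y₀) := by simp [hu]
  have hG'0 : G' 0 = D (1/2, (1/2 : ℝ) • c) := by simp only [hG', hu0, hD]
  have hhalf : D (1/2, (1/2 : ℝ) • c) = (1/2 : ℝ) • D (1, c) := by
    have e : ((1/2 : ℝ), (1/2 : ℝ) • c) = (1/2 : ℝ) • ((1 : ℝ), c) := by
      simp [Prod.smul_def]
    rw [e, map_smul]
  have hd2 : HasDerivAt (deriv F) 0 0 := by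
    rw [hderivF]
    have e1 : HasDerivAt g (G' 0) 0 := hg' 0
    have e2 : HasDerivAt (fun h : ℝ => h • G' h) ((0:ℝ) • deriv G' 0 + (1:ℝ) • G' 0) 0 :=
      (hasDerivAt_id 0).smul ((hG'sm.differentiable (by simp)) 0).hasDerivAt
    have e3 : HasDerivAt (fun h : ℝ => Uf (t₀ + h, Y h)) (D (1, c)) 0 := by
      have hv : HasDerivAt (fun h : ℝ => ((t₀ + h, Y h) : ℝ × E)) (1, c) 0 := by
        apply HasDerivAt.prodMk
        · simpa using (hasDerivAt_const (0:ℝ) t₀).fun_add (hasDerivAt_id 0)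
        · have k := hY' 0
          simpa [hY, hy₀, hc] using k
      have hv0 : ((t₀ + (0:ℝ), Y 0) : ℝ × E) = (t₀, y₀) := by simp [hY, hy₀]
      have k := (hfd (t₀ + (0:ℝ), Y 0)).comp_hasDerivAt 0 hv
      rw [hv0] at k
      exact k
    have k := (e1.fun_add e2).fun_sub e3
    convert k using 1
    rw [hG'0, hhalf]
    module
  have hd2F0 : deriv (deriv F) 0 = 0 := hd2.deriv
  -- conclude
  have hFd : Differentiable ℝ F := hFsm.differentiable (by simp)
  have hdFsm : ContDiff ℝ ((⊤:ℕ∞) : WithTop ℕ∞) (deriv F) := by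
    rw [hderivF]
    refine (hgsm.add (contDiff_id.smul hG'sm)).sub ?_
    exact hf'.comp ((contDiff_const.add contDiff_id).prodMk hYsm)
  have hdFd : Differentiable ℝ (deriv F) := hdFsm.differentiable (by simp)
  have hd2Fsm : ContDiff ℝ ((⊤:ℕ∞) : WithTop ℕ∞) (deriv (deriv F)) :=
    (contDiff_infty_iff_deriv.mp hdFsm).2
  have hd2Fd : Differentiable ℝ (deriv (deriv F)) := hd2Fsm.differentiable (by simp)
  have hd3cont : ContinuousAt (deriv (deriv (deriv F))) 0 :=
    ((contDiff_infty_iff_deriv.mp hd2Fsm).2.continuous).continuousAt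
  have o0 : (deriv (deriv (deriv F))) =O[nhds 0] fun h : ℝ => h ^ 0 :=
    isBigO_pow_zero hd3cont
  have o1 : (deriv (deriv F)) =O[nhds 0] fun h : ℝ => h ^ (0 + 1) :=
    isBigO_pow_succ_of_deriv hd2Fd hd2F0 o0
  have o2 : (deriv F) =O[nhds 0] fun h : ℝ => h ^ (0 + 1 + 1) :=
    isBigO_pow_succ_of_deriv hdFd hdF0 o1
  have o3 : F =O[nhds 0] fun h : ℝ => h ^ (0 + 1 + 1 + 1) :=
    isBigO_pow_succ_of_deriv hFd hF0 o2
  exact o3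

/-- The midpoint method is a 2-stage Runge–Kutta method of order 2: its local
error is `O(h³)` as `h → 0`. -/
theorem midpoint_local_error
    (n : ℕ) (f : ℝ → (Fin n → ℝ) → (Fin n → ℝ))
    (hf : ContDiff ℝ (⊤ : ℕ∞) (Function.uncurry f))
    (y : ℝ → (Fin n → ℝ)) (hy : ∀ t, HasDerivAt y (f t (y t)) t)
    (t₀ : ℝ) (y₀ : Fin n → ℝ) (hy₀ : y t₀ = y₀)
    (k₁ k₂ y₁ : ℝ → (Fin n → ℝ))
    (hk₁ : ∀ h : ℝ, k₁ h = h • f t₀ y₀)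
    (hk₂ : ∀ h : ℝ, k₂ h = h • f (t₀ + h / 2) (y₀ + (1 / 2 : ℝ) • k₁ h))
    (hy₁ : ∀ h : ℝ, y₁ h = y₀ + k₂ h) :
    (fun h : ℝ => y₁ h - y (t₀ + h)) =O[nhds 0] (fun h : ℝ => h ^ 3) := by
  have key := midpoint_core (Function.uncurry f) hf y (fun t => hy t) t₀ y₀ hy₀
    (f t₀ y₀) rfl
  have e : (fun h : ℝ => y₁ h - y (t₀ + h)) =
      (fun h : ℝ => y₀ + h • Function.uncurry f (t₀ + h / 2, y₀ + (h / 2) • f t₀ y₀)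
        - y (t₀ + h)) := by
    funext h
    rw [hy₁ h, hk₂ h, hk₁ h]
    congr 2
    · simp [Function.uncurry]
      congr 1
      rw [smul_smul]
      ring_nf
  rw [e]
  exact key
end

section
/- Let f : ℝ → (Fin n → ℝ) → (Fin n → ℝ) be C^∞ (smooth), let y : ℝ → (Fin n → ℝ) be differentiable with y′(t) = f(t, y(t)) for all t, and let t₀ ∈ ℝ with y(t₀) = y₀. Define k₁(h) := h • f(t₀, y₀), k₂(h) := h • f(t₀ + h, y₀ + k₁(h)), and y₁(h) := y₀ + (1/2) • k₁(h) + (1/2) • k₂(h). Then ‖y₁(h) − y(t₀ + h)‖ = O(h³) as h → 0. (Heun's method is a 2-stage Runge–Kutta method of order 2.) -/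
open Asymptotics
open scoped ContDiff

private lemma isBigO_succ_of_deriv {E : Type*} [NormedAddCommGroup E] [NormedSpace ℝ E]
    {φ φ' : ℝ → E} (hd : ∀ x, HasDerivAt φ (φ' x) x) (h0 : φ 0 = 0) (k : ℕ)
    (hO : φ' =O[nhds 0] fun h : ℝ => h ^ k) :
    φ =O[nhds 0] fun h : ℝ => h ^ (k + 1) := by
  rw [isBigO_iff] at hO
  obtain ⟨C, hC⟩ := hO
  rw [Metric.eventually_nhds_iff] at hC
  obtain ⟨ε, hε, hball⟩ := hC
  have hC'0 : (0:ℝ) ≤ max C 0 := le_max_right _ _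
  rw [isBigO_iff]
  refine ⟨max C 0, Metric.eventually_nhds_iff.2 ⟨ε, hε, ?_⟩⟩
  intro x hx
  have hxε : |x| < ε := by simpa [Real.dist_eq] using hx
  have hnorm : ‖x ^ (k+1)‖ = |x| ^ k * |x| := by
    rw [Real.norm_eq_abs, abs_pow, pow_succ]
  have bound : ∀ t : ℝ, |t| ≤ |x| → ‖φ' t‖ ≤ max C 0 * |x| ^ k := by
    intro t ht
    have hdt : dist t 0 < ε := by
      rw [Real.dist_eq, sub_zero]; exact lt_of_le_of_lt ht hxε
    calc ‖φ' t‖ ≤ C * ‖t ^ k‖ := hball hdt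
      _ ≤ max C 0 * |t| ^ k := by
          rw [Real.norm_eq_abs, abs_pow]
          exact mul_le_mul_of_nonneg_right (le_max_left _ _) (by positivity)
      _ ≤ max C 0 * |x| ^ k := mul_le_mul_of_nonneg_left (pow_le_pow_left₀ (abs_nonneg t) ht k) hC'0
  rcases le_total 0 x with hx0 | hx0
  · have := norm_image_sub_le_of_norm_deriv_le_segment'
      (f := φ) (f' := φ') (a := 0) (b := x) (C := max C 0 * |x| ^ k)
      (fun t _ => (hd t).hasDerivWithinAt)
      (fun t ht => bound t (by rw [abs_of_nonneg ht.1, abs_of_nonneg hx0]; exact ht.2.le))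
      x (Set.right_mem_Icc.2 hx0)
    rw [h0, sub_zero, sub_zero] at this
    calc ‖φ x‖ ≤ max C 0 * |x| ^ k * x := this
      _ ≤ max C 0 * ‖x ^ (k+1)‖ := by
          rw [hnorm, abs_of_nonneg hx0, mul_assoc]
  · have := norm_image_sub_le_of_norm_deriv_le_segment'
      (f := φ) (f' := φ') (a := x) (b := 0) (C := max C 0 * |x| ^ k)
      (fun t _ => (hd t).hasDerivWithinAt)
      (fun t ht => bound t (by rw [abs_of_nonpos ht.2.le, abs_of_nonpos hx0]; linarith [ht.1]))
      0 (Set.right_mem_Icc.2 hx0)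
    rw [h0, zero_sub, norm_neg, zero_sub] at this
    calc ‖φ x‖ ≤ max C 0 * |x| ^ k * (-x) := this
      _ ≤ max C 0 * ‖x ^ (k+1)‖ := by
          rw [hnorm, abs_of_nonpos hx0, mul_assoc]

/-- Heun's method is a 2-stage Runge–Kutta method of order 2: its local error
is `O(h³)` as `h → 0`. -/
theorem heun_local_error
    (n : ℕ) (f : ℝ → (Fin n → ℝ) → (Fin n → ℝ))
    (hf : ContDiff ℝ (⊤ : ℕ∞) (Function.uncurry f))
    (y : ℝ → (Fin n → ℝ)) (hy : ∀ t, HasDerivAt y (f t (y t)) t)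
    (t₀ : ℝ) (y₀ : Fin n → ℝ) (hy₀ : y t₀ = y₀)
    (k₁ k₂ y₁ : ℝ → (Fin n → ℝ))
    (hk₁ : ∀ h : ℝ, k₁ h = h • f t₀ y₀)
    (hk₂ : ∀ h : ℝ, k₂ h = h • f (t₀ + h) (y₀ + k₁ h))
    (hy₁ : ∀ h : ℝ, y₁ h = y₀ + (1 / 2 : ℝ) • k₁ h + (1 / 2 : ℝ) • k₂ h) :
    (fun h : ℝ => y₁ h - y (t₀ + h)) =O[nhds 0] (fun h : ℝ => h ^ 3) := by
  have h1inf : (1 : WithTop ℕ∞) ≤ ∞ := by exact_mod_cast (le_top : (1:ℕ∞) ≤ ⊤)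
  have hf' : ContDiff ℝ ∞ (Function.uncurry f) := hf.of_le (by simp)
  -- smoothness of y
  have hy_diff : Differentiable ℝ y := fun t => (hy t).differentiableAt
  have hderiv_y : deriv y = fun t => f t (y t) := funext fun t => (hy t).deriv
  have hyCnat : ∀ m : ℕ, ContDiff ℝ (m : WithTop ℕ∞) y := by
    intro m
    induction m with
    | zero => exact contDiff_zero.2 hy_diff.continuous
    | succ m ih =>
      have hz : ContDiff ℝ (m : WithTop ℕ∞) (fun t => f t (y t)) :=
        (hf.of_le (by exact_mod_cast le_top)).comp (contDiff_id.prodMk ih)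
      have : ContDiff ℝ ((m : WithTop ℕ∞) + 1) y := by
        refine contDiff_succ_iff_deriv.2 ⟨hy_diff, ?_, hderiv_y ▸ hz⟩
        intro h
        exact absurd h (by exact_mod_cast WithTop.natCast_ne_top m)
      exact_mod_cast this
  have hyC : ContDiff ℝ ∞ y := contDiff_infty.2 fun m => hyCnat m
  -- abbreviations
  set c : Fin n → ℝ := f t₀ y₀ with hc
  set g : ℝ → Fin n → ℝ := fun h => f (t₀ + h) (y₀ + h • c) with hgdef
  have hgC : ContDiff ℝ ∞ g := by
    have : ContDiff ℝ ∞ (fun h : ℝ => (t₀ + h, y₀ + h • c)) :=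
      (contDiff_const.add contDiff_id).prodMk
        (contDiff_const.add (contDiff_id.smul contDiff_const))
    exact hf'.comp this
  set g1 : ℝ → Fin n → ℝ := deriv g with hg1def
  have hg1C : ContDiff ℝ ∞ g1 := (contDiff_infty_iff_deriv.1 hgC).2
  set g2 : ℝ → Fin n → ℝ := deriv g1 with hg2def
  have hg2C : ContDiff ℝ ∞ g2 := (contDiff_infty_iff_deriv.1 hg1C).2
  have hdg : ∀ x, HasDerivAt g (g1 x) x := fun x =>
    ((hgC.differentiable (by simp)) x).hasDerivAt
  have hdg1 : ∀ x, HasDerivAt g1 (g2 x) x := fun x =>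
    ((hg1C.differentiable (by simp)) x).hasDerivAt
  set z : ℝ → Fin n → ℝ := fun t => f t (y t) with hzdef
  have hzC : ContDiff ℝ ∞ z := hf'.comp (contDiff_id.prodMk hyC)
  set z1 : ℝ → Fin n → ℝ := deriv z with hz1def
  have hz1C : ContDiff ℝ ∞ z1 := (contDiff_infty_iff_deriv.1 hzC).2
  have hdz : ∀ t, HasDerivAt z (z1 t) t := fun t =>
    ((hzC.differentiable (by simp)) t).hasDerivAt
  -- shifted solution derivative
  have hY : ∀ x : ℝ, HasDerivAt (fun h : ℝ => y (t₀ + h)) (z (t₀ + x)) x := by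
    intro x
    have hshift : HasDerivAt (fun h : ℝ => t₀ + h) 1 x := by
      exact (hasDerivAt_id' x).const_add t₀
    have := (hy (t₀ + x)).scomp x hshift
    rw [one_smul] at this
    exact this
  have hY1 : ∀ x : ℝ, HasDerivAt (fun h : ℝ => z (t₀ + h)) (z1 (t₀ + x)) x := by
    intro x
    have hshift : HasDerivAt (fun h : ℝ => t₀ + h) 1 x := by
      exact (hasDerivAt_id' x).const_add t₀
    have := (hdz (t₀ + x)).scomp x hshift
    rw [one_smul] at this
    exact this
  -- the error function and its derivatives
  set E : ℝ → Fin n → ℝ := fun h => y₁ h - y (t₀ + h) with hEdef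
  set E' : ℝ → Fin n → ℝ :=
    fun h => ((1:ℝ)/2) • c + ((1:ℝ)/2) • (h • g1 h + g h) - z (t₀ + h) with hE'def
  set E'' : ℝ → Fin n → ℝ :=
    fun h => ((1:ℝ)/2) • ((h • g2 h + g1 h) + g1 h) - z1 (t₀ + h) with hE''def
  have hE_eq : E = fun h => y₀ + ((1:ℝ)/2) • (h • c) + ((1:ℝ)/2) • (h • g h) - y (t₀ + h) := by
    funext h
    simp only [hEdef, hy₁, hk₂, hk₁, hgdef, hc, one_div]
  have hdE : ∀ x, HasDerivAt E (E' x) x := by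
    intro x
    rw [hE_eq]
    have h₁ : HasDerivAt (fun h : ℝ => h • c) c x := by
      simpa using (hasDerivAt_id x).smul_const c
    have h₂ : HasDerivAt (fun h : ℝ => h • g h) (x • g1 x + (1:ℝ) • g x) x := by
      exact (hasDerivAt_id x).smul (hdg x)
    have := (((hasDerivAt_const x y₀).add (h₁.const_smul ((1:ℝ)/2))).add
      (h₂.const_smul ((1:ℝ)/2))).sub (hY x)
    refine this.congr_deriv ?_
    simp [hE'def, one_smul]
  have hdE' : ∀ x, HasDerivAt E' (E'' x) x := by
    intro x
    have h₂ : HasDerivAt (fun h : ℝ => h • g1 h + g h)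
        ((x • g2 x + (1:ℝ) • g1 x) + g1 x) x := by
      exact ((hasDerivAt_id x).smul (hdg1 x)).add (hdg x)
    have := ((hasDerivAt_const x (((1:ℝ)/2) • c)).add (h₂.const_smul ((1:ℝ)/2))).sub (hY1 x)
    refine this.congr_deriv ?_
    simp [hE''def, one_smul]
  -- values at 0
  have hE0 : E 0 = 0 := by
    rw [hE_eq]
    simp [hy₀]
  have hg0 : g 0 = c := by simp [hgdef, hc]
  have hE'0 : E' 0 = 0 := by
    have : ((1:ℝ)/2) • c + ((1:ℝ)/2) • c = c := by
      rw [← add_smul]; norm_num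
    simp only [hE'def, zero_smul, zero_add, hg0, add_zero, hzdef, hy₀]
    rw [this]
    simp [hc]
  -- second derivative at 0 matches
  have hE''0 : E'' 0 = 0 := by
    set L := fderiv ℝ (Function.uncurry f) (t₀, y₀) with hL
    have hFd : HasFDerivAt (Function.uncurry f) L (t₀, y₀) :=
      (hf.differentiable (by simp) (t₀, y₀)).hasFDerivAt
    -- g1 0 = L (1, c)
    have hu : HasDerivAt (fun h : ℝ => (t₀ + h, y₀ + h • c)) ((1:ℝ), c) 0 := by
      have ha : HasDerivAt (fun h : ℝ => t₀ + h) 1 0 := by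
        exact (hasDerivAt_id' (0:ℝ)).const_add t₀
      have hb : HasDerivAt (fun h : ℝ => y₀ + h • c) c 0 := by
        have := ((hasDerivAt_id' (0:ℝ)).smul_const c).const_add y₀
        rw [one_smul] at this
        exact this
      exact ha.prodMk hb
    have hgL : HasDerivAt g (L (1, c)) 0 := by
      have := hFd.comp_hasDerivAt_of_eq 0 hu (by simp)
      exact this
    have hg1_0 : g1 0 = L (1, c) := (hdg 0).unique hgL
    -- z1 t₀ = L (1, c)
    have hv : HasDerivAt (fun t : ℝ => (t, y t)) ((1:ℝ), c) t₀ := by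
      have := (hasDerivAt_id t₀).prodMk (hy t₀)
      simpa [hy₀, hc] using this
    have hzL : HasDerivAt z (L (1, c)) t₀ := by
      have := hFd.comp_hasDerivAt_of_eq t₀ hv (by simp [hy₀])
      exact this
    have hz1_0 : z1 t₀ = L (1, c) := (hdz t₀).unique hzL
    simp only [hE''def, zero_smul, zero_add, add_zero, hg1_0, hz1_0]
    rw [smul_add, ← add_smul]
    norm_num
  -- E'' is O(h)
  have hE''C : ContDiff ℝ ∞ E'' := by
    have h1 : ContDiff ℝ ∞ (fun h : ℝ => (h • g2 h + g1 h) + g1 h) :=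
      ((contDiff_id.smul hg2C).add hg1C).add hg1C
    have h2 : ContDiff ℝ ∞ (fun h : ℝ => z1 (t₀ + h)) :=
      hz1C.comp (contDiff_const.add contDiff_id)
    exact (h1.const_smul _).sub h2
  have hO2 : E'' =O[nhds 0] fun h : ℝ => h ^ 1 := by
    have := (hE''C.differentiable (by simp) 0).isBigO_sub
    simp only [hE''0, sub_zero] at this
    simpa [pow_one] using this
  have hO1 : E' =O[nhds 0] fun h : ℝ => h ^ 2 :=
    isBigO_succ_of_deriv hdE' hE'0 1 hO2
  have hO0 : E =O[nhds 0] fun h : ℝ => h ^ 3 :=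
    isBigO_succ_of_deriv hdE hE0 2 hO1
  exact hO0
end

section
/- Let f : ℝ → (Fin n → ℝ) → (Fin n → ℝ) be C^∞ (smooth), let y : ℝ → (Fin n → ℝ) be differentiable with y′(t) = f(t, y(t)) for all t, and let t₀ ∈ ℝ with y(t₀) = y₀. Define k₁(h) := h • f(t₀, y₀), k₂(h) := h • f(t₀ + h/2, y₀ + (1/2) • k₁(h)), k₃(h) := h • f(t₀ + h/2, y₀ + (1/2) • k₂(h)), k₄(h) := h • f(t₀ + h, y₀ + k₃(h)), and y₁(h) := y₀ + (1/6) • k₁(h) + (1/3) • k₂(h) + (1/3) • k₃(h) + (1/6) • k₄(h). Then ‖y₁(h) − y(t₀ + h)‖ = O(h⁵) as h → 0. (The classical Runge–Kutta method RK4 is a 4-stage method of order 4.) -/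
set_option maxSynthPendingDepth 5

open Asymptotics Filter Set

namespace RK4Proof

theorem _root_.HasDerivAt.congr_d {G : Type*} [NormedAddCommGroup G] [NormedSpace ℝ G]
    {f : ℝ → G} {v w : G} {x : ℝ}
    (h : HasDerivAt f v x) (e : v = w) : HasDerivAt f w x := e ▸ h

variable {E : Type*} [NormedAddCommGroup E] [NormedSpace ℝ E]

theorem isBigO_succ_of_deriv
    (m : ℕ) (g g' : ℝ → E) (hg : ∀ h : ℝ, HasDerivAt g (g' h) h) (h0 : g 0 = 0)
    (hO : g' =O[nhds 0] fun h : ℝ => h ^ m) :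
    g =O[nhds 0] fun h : ℝ => h ^ (m + 1) := by
  rcases hO.exists_pos with ⟨C, hC, hbound⟩
  rw [isBigOWith_iff] at hbound
  rcases Metric.eventually_nhds_iff.mp hbound with ⟨ε, hε, hb⟩
  rw [isBigO_iff]
  refine ⟨C, Metric.eventually_nhds_iff.mpr ⟨ε, hε, ?_⟩⟩
  intro h hh
  simp only [Real.dist_eq, sub_zero] at hh
  have key : ∀ x : ℝ, |x| ≤ |h| → ‖g' x‖ ≤ C * |h| ^ m := by
    intro x hx
    have hxε : dist x 0 < ε := by simp only [Real.dist_eq, sub_zero]; exact lt_of_le_of_lt hx hh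
    have := hb hxε
    calc ‖g' x‖ ≤ C * ‖x ^ m‖ := this
      _ = C * |x| ^ m := by rw [norm_pow]; rfl
      _ ≤ C * |h| ^ m := by gcongr
  have goal_eq : ‖(fun h : ℝ => h ^ (m + 1)) h‖ = |h| ^ (m + 1) := by simp [abs_pow]
  rcases le_or_gt 0 h with hpos | hneg
  · have := norm_image_sub_le_of_norm_deriv_le_segment'
      (f := g) (f' := g') (a := 0) (b := h) (C := C * |h| ^ m)
      (fun x _ => (hg x).hasDerivWithinAt)
      (fun x hx => key x (by rw [abs_of_nonneg hx.1, abs_of_nonneg hpos]; exact le_of_lt hx.2))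
      h (right_mem_Icc.mpr hpos)
    rw [h0, sub_zero] at this
    calc ‖g h‖ ≤ C * |h| ^ m * (h - 0) := this
      _ = C * |h| ^ (m + 1) := by rw [sub_zero, abs_of_nonneg hpos]; ring
      _ = C * ‖(fun h : ℝ => h ^ (m + 1)) h‖ := by rw [goal_eq]
  · have := norm_image_sub_le_of_norm_deriv_le_segment'
      (f := g) (f' := g') (a := h) (b := 0) (C := C * |h| ^ m)
      (fun x _ => (hg x).hasDerivWithinAt)
      (fun x hx => key x (by
        rw [abs_of_neg hneg]
        rcases le_or_gt 0 x with h1 | h2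
        · rw [abs_of_nonneg h1]; linarith [hx.2, hx.1]
        · rw [abs_of_neg h2]; linarith [hx.1]))
      0 (right_mem_Icc.mpr (le_of_lt hneg))
    rw [h0, zero_sub, norm_neg] at this
    calc ‖g h‖ ≤ C * |h| ^ m * (0 - h) := this
      _ = C * |h| ^ (m + 1) := by rw [zero_sub, abs_of_neg hneg]; ring
      _ = C * ‖(fun h : ℝ => h ^ (m + 1)) h‖ := by rw [goal_eq]

noncomputable section Defs

variable (F : ℝ × E → E) (t₀ : ℝ) (y₀ : E) (y : ℝ → E)

def P1 : ℝ × E → (ℝ × E) →L[ℝ] E := fderiv ℝ F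
def P2 : ℝ × E → (ℝ × E) →L[ℝ] ((ℝ × E) →L[ℝ] E) := fderiv ℝ (P1 F)
def P3 : ℝ × E → (ℝ × E) →L[ℝ] ((ℝ × E) →L[ℝ] ((ℝ × E) →L[ℝ] E)) := fderiv ℝ (P2 F)

def a : E := F (t₀, y₀)
def k1 (h : ℝ) : E := h • a F t₀ y₀
def c2 (h : ℝ) : ℝ × E := (t₀ + h / 2, y₀ + (1 / 2 : ℝ) • k1 F t₀ y₀ h)
def k2 (h : ℝ) : E := h • F (c2 F t₀ y₀ h)
def c3 (h : ℝ) : ℝ × E := (t₀ + h / 2, y₀ + (1 / 2 : ℝ) • k2 F t₀ y₀ h)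
def k3 (h : ℝ) : E := h • F (c3 F t₀ y₀ h)
def c4 (h : ℝ) : ℝ × E := (t₀ + h, y₀ + k3 F t₀ y₀ h)
def k4 (h : ℝ) : E := h • F (c4 F t₀ y₀ h)
def r (h : ℝ) : E := y₀ + (1 / 6 : ℝ) • k1 F t₀ y₀ h + (1 / 3 : ℝ) • k2 F t₀ y₀ h
  + (1 / 3 : ℝ) • k3 F t₀ y₀ h + (1 / 6 : ℝ) • k4 F t₀ y₀ h

def u2 : ℝ × E := (1 / 2, (1 / 2 : ℝ) • a F t₀ y₀)
def g2 (h : ℝ) : E := F (c2 F t₀ y₀ h)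
def g2d1 (h : ℝ) : E := P1 F (c2 F t₀ y₀ h) (u2 F t₀ y₀)
def g2d2 (h : ℝ) : E := P2 F (c2 F t₀ y₀ h) (u2 F t₀ y₀) (u2 F t₀ y₀)
def g2d3 (h : ℝ) : E := P3 F (c2 F t₀ y₀ h) (u2 F t₀ y₀) (u2 F t₀ y₀) (u2 F t₀ y₀)
def k2d1 (h : ℝ) : E := g2 F t₀ y₀ h + h • g2d1 F t₀ y₀ h
def k2d2 (h : ℝ) : E := (2 : ℝ) • g2d1 F t₀ y₀ h + h • g2d2 F t₀ y₀ h
def k2d3 (h : ℝ) : E := (3 : ℝ) • g2d2 F t₀ y₀ h + h • g2d3 F t₀ y₀ h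

def c3d1 (h : ℝ) : ℝ × E := (1 / 2, (1 / 2 : ℝ) • k2d1 F t₀ y₀ h)
def c3d2 (h : ℝ) : ℝ × E := (0, (1 / 2 : ℝ) • k2d2 F t₀ y₀ h)
def c3d3 (h : ℝ) : ℝ × E := (0, (1 / 2 : ℝ) • k2d3 F t₀ y₀ h)
def g3 (h : ℝ) : E := F (c3 F t₀ y₀ h)
def g3d1 (h : ℝ) : E := P1 F (c3 F t₀ y₀ h) (c3d1 F t₀ y₀ h)
def g3d2 (h : ℝ) : E := P2 F (c3 F t₀ y₀ h) (c3d1 F t₀ y₀ h) (c3d1 F t₀ y₀ h)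
  + P1 F (c3 F t₀ y₀ h) (c3d2 F t₀ y₀ h)
def g3d3 (h : ℝ) : E :=
  (P3 F (c3 F t₀ y₀ h) (c3d1 F t₀ y₀ h) (c3d1 F t₀ y₀ h) (c3d1 F t₀ y₀ h)
    + P2 F (c3 F t₀ y₀ h) (c3d2 F t₀ y₀ h) (c3d1 F t₀ y₀ h)
    + P2 F (c3 F t₀ y₀ h) (c3d1 F t₀ y₀ h) (c3d2 F t₀ y₀ h))
  + (P2 F (c3 F t₀ y₀ h) (c3d1 F t₀ y₀ h) (c3d2 F t₀ y₀ h)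
    + P1 F (c3 F t₀ y₀ h) (c3d3 F t₀ y₀ h))
def k3d1 (h : ℝ) : E := g3 F t₀ y₀ h + h • g3d1 F t₀ y₀ h
def k3d2 (h : ℝ) : E := (2 : ℝ) • g3d1 F t₀ y₀ h + h • g3d2 F t₀ y₀ h
def k3d3 (h : ℝ) : E := (3 : ℝ) • g3d2 F t₀ y₀ h + h • g3d3 F t₀ y₀ h

def c4d1 (h : ℝ) : ℝ × E := (1, k3d1 F t₀ y₀ h)
def c4d2 (h : ℝ) : ℝ × E := (0, k3d2 F t₀ y₀ h)
def c4d3 (h : ℝ) : ℝ × E := (0, k3d3 F t₀ y₀ h)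
def g4 (h : ℝ) : E := F (c4 F t₀ y₀ h)
def g4d1 (h : ℝ) : E := P1 F (c4 F t₀ y₀ h) (c4d1 F t₀ y₀ h)
def g4d2 (h : ℝ) : E := P2 F (c4 F t₀ y₀ h) (c4d1 F t₀ y₀ h) (c4d1 F t₀ y₀ h)
  + P1 F (c4 F t₀ y₀ h) (c4d2 F t₀ y₀ h)
def g4d3 (h : ℝ) : E :=
  (P3 F (c4 F t₀ y₀ h) (c4d1 F t₀ y₀ h) (c4d1 F t₀ y₀ h) (c4d1 F t₀ y₀ h)
    + P2 F (c4 F t₀ y₀ h) (c4d2 F t₀ y₀ h) (c4d1 F t₀ y₀ h)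
    + P2 F (c4 F t₀ y₀ h) (c4d1 F t₀ y₀ h) (c4d2 F t₀ y₀ h))
  + (P2 F (c4 F t₀ y₀ h) (c4d1 F t₀ y₀ h) (c4d2 F t₀ y₀ h)
    + P1 F (c4 F t₀ y₀ h) (c4d3 F t₀ y₀ h))
def k4d1 (h : ℝ) : E := g4 F t₀ y₀ h + h • g4d1 F t₀ y₀ h
def k4d2 (h : ℝ) : E := (2 : ℝ) • g4d1 F t₀ y₀ h + h • g4d2 F t₀ y₀ h
def k4d3 (h : ℝ) : E := (3 : ℝ) • g4d2 F t₀ y₀ h + h • g4d3 F t₀ y₀ h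

def rd1 (h : ℝ) : E := (1 / 6 : ℝ) • a F t₀ y₀ + (1 / 3 : ℝ) • k2d1 F t₀ y₀ h
  + (1 / 3 : ℝ) • k3d1 F t₀ y₀ h + (1 / 6 : ℝ) • k4d1 F t₀ y₀ h
def rd2 (h : ℝ) : E := (1 / 3 : ℝ) • k2d2 F t₀ y₀ h
  + (1 / 3 : ℝ) • k3d2 F t₀ y₀ h + (1 / 6 : ℝ) • k4d2 F t₀ y₀ h
def rd3 (h : ℝ) : E := (1 / 3 : ℝ) • k2d3 F t₀ y₀ h
  + (1 / 3 : ℝ) • k3d3 F t₀ y₀ h + (1 / 6 : ℝ) • k4d3 F t₀ y₀ h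

def z (h : ℝ) : ℝ × E := (t₀ + h, y (t₀ + h))
def yd1 (h : ℝ) : E := F (z t₀ y h)
def zd1 (h : ℝ) : ℝ × E := (1, yd1 F t₀ y h)
def yd2 (h : ℝ) : E := P1 F (z t₀ y h) (zd1 F t₀ y h)
def zd2 (h : ℝ) : ℝ × E := (0, yd2 F t₀ y h)
def yd3 (h : ℝ) : E := P2 F (z t₀ y h) (zd1 F t₀ y h) (zd1 F t₀ y h)
  + P1 F (z t₀ y h) (zd2 F t₀ y h)
def zd3 (h : ℝ) : ℝ × E := (0, yd3 F t₀ y h)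
def yd4 (h : ℝ) : E :=
  (P3 F (z t₀ y h) (zd1 F t₀ y h) (zd1 F t₀ y h) (zd1 F t₀ y h)
    + P2 F (z t₀ y h) (zd2 F t₀ y h) (zd1 F t₀ y h)
    + P2 F (z t₀ y h) (zd1 F t₀ y h) (zd2 F t₀ y h))
  + (P2 F (z t₀ y h) (zd1 F t₀ y h) (zd2 F t₀ y h)
    + P1 F (z t₀ y h) (zd3 F t₀ y h))

end Defs

section Derivs

variable {F : ℝ × E → E} {t₀ : ℝ} {y₀ : E} {y : ℝ → E}

theorem topcast : ((⊤:ℕ∞) + 1 : WithTop ℕ∞) ≤ ((⊤:ℕ∞) : WithTop ℕ∞) := by exact_mod_cast le_top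
theorem onecast : ((⊤:ℕ∞) : WithTop ℕ∞) ≠ 0 := by simp

theorem hP1 (hF : ContDiff ℝ (⊤:ℕ∞) F) (p : ℝ × E) : HasFDerivAt F (P1 F p) p :=
  ((hF.differentiable onecast) p).hasFDerivAt

theorem cP1 (hF : ContDiff ℝ (⊤:ℕ∞) F) : ContDiff ℝ (⊤:ℕ∞) (P1 F) := hF.fderiv_right topcast

theorem hP2 (hF : ContDiff ℝ (⊤:ℕ∞) F) (p : ℝ × E) : HasFDerivAt (P1 F) (P2 F p) p :=
  (((cP1 hF).differentiable onecast) p).hasFDerivAt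

theorem cP2 (hF : ContDiff ℝ (⊤:ℕ∞) F) : ContDiff ℝ (⊤:ℕ∞) (P2 F) := (cP1 hF).fderiv_right topcast

theorem hP3 (hF : ContDiff ℝ (⊤:ℕ∞) F) (p : ℝ × E) : HasFDerivAt (P2 F) (P3 F p) p :=
  (((cP2 hF).differentiable onecast) p).hasFDerivAt

theorem cP3 (hF : ContDiff ℝ (⊤:ℕ∞) F) : ContDiff ℝ (⊤:ℕ∞) (P3 F) := (cP2 hF).fderiv_right topcast

theorem comp0 (hF : ContDiff ℝ (⊤:ℕ∞) F) {c : ℝ → ℝ × E} {c' : ℝ × E} {x : ℝ}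
    (hc : HasDerivAt c c' x) : HasDerivAt (fun t => F (c t)) (P1 F (c x) c') x :=
  (hP1 hF (c x)).comp_hasDerivAt x hc

theorem comp1 (hF : ContDiff ℝ (⊤:ℕ∞) F) {c : ℝ → ℝ × E} {c' : ℝ × E} {x : ℝ}
    (hc : HasDerivAt c c' x) : HasDerivAt (fun t => P1 F (c t)) (P2 F (c x) c') x :=
  (hP2 hF (c x)).comp_hasDerivAt x hc

theorem comp2 (hF : ContDiff ℝ (⊤:ℕ∞) F) {c : ℝ → ℝ × E} {c' : ℝ × E} {x : ℝ}
    (hc : HasDerivAt c c' x) : HasDerivAt (fun t => P2 F (c t)) (P3 F (c x) c') x :=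
  (hP3 hF (c x)).comp_hasDerivAt x hc

theorem hk1D (x : ℝ) : HasDerivAt (k1 F t₀ y₀) (a F t₀ y₀) x :=
  ((hasDerivAt_id x).smul_const (a F t₀ y₀)).congr_d (one_smul _ _)

theorem hc2D (x : ℝ) : HasDerivAt (c2 F t₀ y₀) (u2 F t₀ y₀) x := by
  refine HasDerivAt.prodMk ?_ ?_
  · exact ((hasDerivAt_id x).div_const 2).const_add t₀
  · exact ((hk1D x).const_smul (1/2:ℝ)).const_add y₀

theorem hg2D (hF : ContDiff ℝ (⊤:ℕ∞) F) (x : ℝ) :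
    HasDerivAt (g2 F t₀ y₀) (g2d1 F t₀ y₀ x) x := comp0 hF (hc2D x)

theorem hg2d1D (hF : ContDiff ℝ (⊤:ℕ∞) F) (x : ℝ) :
    HasDerivAt (g2d1 F t₀ y₀) (g2d2 F t₀ y₀ x) x := by
  have h0 : HasDerivAt (fun t => P1 F (c2 F t₀ y₀ t)) (P2 F (c2 F t₀ y₀ x) (u2 F t₀ y₀)) x :=
    comp1 hF (hc2D x)
  have h1 : HasDerivAt (fun t => P1 F (c2 F t₀ y₀ t) (u2 F t₀ y₀))
      (P2 F (c2 F t₀ y₀ x) (u2 F t₀ y₀) (u2 F t₀ y₀) + P1 F (c2 F t₀ y₀ x) 0) x :=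
    h0.clm_apply (hasDerivAt_const x (u2 F t₀ y₀))
  exact h1.congr_d (by simp [g2d2])

theorem hg2d2D (hF : ContDiff ℝ (⊤:ℕ∞) F) (x : ℝ) :
    HasDerivAt (g2d2 F t₀ y₀) (g2d3 F t₀ y₀ x) x := by
  have h0 : HasDerivAt (fun t => P2 F (c2 F t₀ y₀ t)) (P3 F (c2 F t₀ y₀ x) (u2 F t₀ y₀)) x :=
    comp2 hF (hc2D x)
  have h1 : HasDerivAt (fun t => P2 F (c2 F t₀ y₀ t) (u2 F t₀ y₀))
      (P3 F (c2 F t₀ y₀ x) (u2 F t₀ y₀) (u2 F t₀ y₀) + P2 F (c2 F t₀ y₀ x) 0) x :=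
    h0.clm_apply (hasDerivAt_const x (u2 F t₀ y₀))
  have h2 : HasDerivAt (fun t => P2 F (c2 F t₀ y₀ t) (u2 F t₀ y₀) (u2 F t₀ y₀))
      ((P3 F (c2 F t₀ y₀ x) (u2 F t₀ y₀) (u2 F t₀ y₀) + P2 F (c2 F t₀ y₀ x) 0) (u2 F t₀ y₀)
        + P2 F (c2 F t₀ y₀ x) (u2 F t₀ y₀) 0) x :=
    h1.clm_apply (hasDerivAt_const x (u2 F t₀ y₀))
  exact h2.congr_d (by simp [g2d3, ContinuousLinearMap.add_apply])

theorem hk2D (hF : ContDiff ℝ (⊤:ℕ∞) F) (x : ℝ) :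
    HasDerivAt (k2 F t₀ y₀) (k2d1 F t₀ y₀ x) x := by
  have h1 : HasDerivAt (fun t : ℝ => t • g2 F t₀ y₀ t)
      (x • g2d1 F t₀ y₀ x + (1:ℝ) • g2 F t₀ y₀ x) x := (hasDerivAt_id x).smul (hg2D hF x)
  exact h1.congr_d (by simp only [k2d1]; module)

theorem hk2d1D (hF : ContDiff ℝ (⊤:ℕ∞) F) (x : ℝ) :
    HasDerivAt (k2d1 F t₀ y₀) (k2d2 F t₀ y₀ x) x := by
  have h0 : HasDerivAt (fun t : ℝ => t • g2d1 F t₀ y₀ t)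
      (x • g2d2 F t₀ y₀ x + (1:ℝ) • g2d1 F t₀ y₀ x) x := (hasDerivAt_id x).smul (hg2d1D hF x)
  have h1 : HasDerivAt (fun t : ℝ => g2 F t₀ y₀ t + t • g2d1 F t₀ y₀ t)
      (g2d1 F t₀ y₀ x + (x • g2d2 F t₀ y₀ x + (1:ℝ) • g2d1 F t₀ y₀ x)) x := (hg2D hF x).add h0
  exact h1.congr_d (by simp only [k2d2]; module)

theorem hk2d2D (hF : ContDiff ℝ (⊤:ℕ∞) F) (x : ℝ) :
    HasDerivAt (k2d2 F t₀ y₀) (k2d3 F t₀ y₀ x) x := by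
  have h0 : HasDerivAt (fun t : ℝ => t • g2d2 F t₀ y₀ t)
      (x • g2d3 F t₀ y₀ x + (1:ℝ) • g2d2 F t₀ y₀ x) x := (hasDerivAt_id x).smul (hg2d2D hF x)
  have h1 : HasDerivAt (fun t : ℝ => (2:ℝ) • g2d1 F t₀ y₀ t + t • g2d2 F t₀ y₀ t)
      ((2:ℝ) • g2d2 F t₀ y₀ x + (x • g2d3 F t₀ y₀ x + (1:ℝ) • g2d2 F t₀ y₀ x)) x :=
    ((hg2d1D hF x).const_smul (2:ℝ)).add h0
  exact h1.congr_d (by simp only [k2d3]; module)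

theorem hc3D (hF : ContDiff ℝ (⊤:ℕ∞) F) (x : ℝ) :
    HasDerivAt (c3 F t₀ y₀) (c3d1 F t₀ y₀ x) x := by
  refine HasDerivAt.prodMk (((hasDerivAt_id x).div_const 2).const_add t₀) ?_
  exact ((hk2D hF x).const_smul (1/2:ℝ)).const_add y₀

theorem hc3d1D (hF : ContDiff ℝ (⊤:ℕ∞) F) (x : ℝ) :
    HasDerivAt (c3d1 F t₀ y₀) (c3d2 F t₀ y₀ x) x :=
  (hasDerivAt_const x (1/2:ℝ)).prodMk ((hk2d1D hF x).const_smul (1/2:ℝ))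

theorem hc3d2D (hF : ContDiff ℝ (⊤:ℕ∞) F) (x : ℝ) :
    HasDerivAt (c3d2 F t₀ y₀) (c3d3 F t₀ y₀ x) x :=
  (hasDerivAt_const x (0:ℝ)).prodMk ((hk2d2D hF x).const_smul (1/2:ℝ))

theorem hg3D (hF : ContDiff ℝ (⊤:ℕ∞) F) (x : ℝ) :
    HasDerivAt (g3 F t₀ y₀) (g3d1 F t₀ y₀ x) x := comp0 hF (hc3D hF x)

theorem hg3d1D (hF : ContDiff ℝ (⊤:ℕ∞) F) (x : ℝ) :
    HasDerivAt (g3d1 F t₀ y₀) (g3d2 F t₀ y₀ x) x := by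
  have h0 : HasDerivAt (fun t => P1 F (c3 F t₀ y₀ t)) (P2 F (c3 F t₀ y₀ x) (c3d1 F t₀ y₀ x)) x :=
    comp1 hF (hc3D hF x)
  exact h0.clm_apply (hc3d1D hF x)

theorem hg3d2D (hF : ContDiff ℝ (⊤:ℕ∞) F) (x : ℝ) :
    HasDerivAt (g3d2 F t₀ y₀) (g3d3 F t₀ y₀ x) x := by
  have h0 : HasDerivAt (fun t => P2 F (c3 F t₀ y₀ t)) (P3 F (c3 F t₀ y₀ x) (c3d1 F t₀ y₀ x)) x :=
    comp2 hF (hc3D hF x)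
  have h1 : HasDerivAt (fun t => P2 F (c3 F t₀ y₀ t) (c3d1 F t₀ y₀ t))
      (P3 F (c3 F t₀ y₀ x) (c3d1 F t₀ y₀ x) (c3d1 F t₀ y₀ x) + P2 F (c3 F t₀ y₀ x) (c3d2 F t₀ y₀ x)) x :=
    h0.clm_apply (hc3d1D hF x)
  have h2 : HasDerivAt (fun t => P2 F (c3 F t₀ y₀ t) (c3d1 F t₀ y₀ t) (c3d1 F t₀ y₀ t))
      ((P3 F (c3 F t₀ y₀ x) (c3d1 F t₀ y₀ x) (c3d1 F t₀ y₀ x) + P2 F (c3 F t₀ y₀ x) (c3d2 F t₀ y₀ x)) (c3d1 F t₀ y₀ x)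
        + P2 F (c3 F t₀ y₀ x) (c3d1 F t₀ y₀ x) (c3d2 F t₀ y₀ x)) x :=
    h1.clm_apply (hc3d1D hF x)
  have h3 : HasDerivAt (fun t => P1 F (c3 F t₀ y₀ t)) (P2 F (c3 F t₀ y₀ x) (c3d1 F t₀ y₀ x)) x :=
    comp1 hF (hc3D hF x)
  have h4 : HasDerivAt (fun t => P1 F (c3 F t₀ y₀ t) (c3d2 F t₀ y₀ t))
      (P2 F (c3 F t₀ y₀ x) (c3d1 F t₀ y₀ x) (c3d2 F t₀ y₀ x) + P1 F (c3 F t₀ y₀ x) (c3d3 F t₀ y₀ x)) x :=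
    h3.clm_apply (hc3d2D hF x)
  exact (h2.add h4).congr_d (by simp only [g3d3, ContinuousLinearMap.add_apply])

theorem hk3D (hF : ContDiff ℝ (⊤:ℕ∞) F) (x : ℝ) :
    HasDerivAt (k3 F t₀ y₀) (k3d1 F t₀ y₀ x) x := by
  have h1 : HasDerivAt (fun t : ℝ => t • g3 F t₀ y₀ t)
      (x • g3d1 F t₀ y₀ x + (1:ℝ) • g3 F t₀ y₀ x) x := (hasDerivAt_id x).smul (hg3D hF x)
  exact h1.congr_d (by simp only [k3d1]; module)

theorem hk3d1D (hF : ContDiff ℝ (⊤:ℕ∞) F) (x : ℝ) :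
    HasDerivAt (k3d1 F t₀ y₀) (k3d2 F t₀ y₀ x) x := by
  have h0 : HasDerivAt (fun t : ℝ => t • g3d1 F t₀ y₀ t)
      (x • g3d2 F t₀ y₀ x + (1:ℝ) • g3d1 F t₀ y₀ x) x := (hasDerivAt_id x).smul (hg3d1D hF x)
  have h1 : HasDerivAt (fun t : ℝ => g3 F t₀ y₀ t + t • g3d1 F t₀ y₀ t)
      (g3d1 F t₀ y₀ x + (x • g3d2 F t₀ y₀ x + (1:ℝ) • g3d1 F t₀ y₀ x)) x := (hg3D hF x).add h0
  exact h1.congr_d (by simp only [k3d2]; module)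

theorem hk3d2D (hF : ContDiff ℝ (⊤:ℕ∞) F) (x : ℝ) :
    HasDerivAt (k3d2 F t₀ y₀) (k3d3 F t₀ y₀ x) x := by
  have h0 : HasDerivAt (fun t : ℝ => t • g3d2 F t₀ y₀ t)
      (x • g3d3 F t₀ y₀ x + (1:ℝ) • g3d2 F t₀ y₀ x) x := (hasDerivAt_id x).smul (hg3d2D hF x)
  have h1 : HasDerivAt (fun t : ℝ => (2:ℝ) • g3d1 F t₀ y₀ t + t • g3d2 F t₀ y₀ t)
      ((2:ℝ) • g3d2 F t₀ y₀ x + (x • g3d3 F t₀ y₀ x + (1:ℝ) • g3d2 F t₀ y₀ x)) x :=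
    ((hg3d1D hF x).const_smul (2:ℝ)).add h0
  exact h1.congr_d (by simp only [k3d3]; module)

theorem hc4D (hF : ContDiff ℝ (⊤:ℕ∞) F) (x : ℝ) :
    HasDerivAt (c4 F t₀ y₀) (c4d1 F t₀ y₀ x) x :=
  ((hasDerivAt_id x).const_add t₀).prodMk ((hk3D hF x).const_add y₀)

theorem hc4d1D (hF : ContDiff ℝ (⊤:ℕ∞) F) (x : ℝ) :
    HasDerivAt (c4d1 F t₀ y₀) (c4d2 F t₀ y₀ x) x :=
  (hasDerivAt_const x (1:ℝ)).prodMk (hk3d1D hF x)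

theorem hc4d2D (hF : ContDiff ℝ (⊤:ℕ∞) F) (x : ℝ) :
    HasDerivAt (c4d2 F t₀ y₀) (c4d3 F t₀ y₀ x) x :=
  (hasDerivAt_const x (0:ℝ)).prodMk (hk3d2D hF x)

theorem hg4D (hF : ContDiff ℝ (⊤:ℕ∞) F) (x : ℝ) :
    HasDerivAt (g4 F t₀ y₀) (g4d1 F t₀ y₀ x) x := comp0 hF (hc4D hF x)

theorem hg4d1D (hF : ContDiff ℝ (⊤:ℕ∞) F) (x : ℝ) :
    HasDerivAt (g4d1 F t₀ y₀) (g4d2 F t₀ y₀ x) x := by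
  have h0 : HasDerivAt (fun t => P1 F (c4 F t₀ y₀ t)) (P2 F (c4 F t₀ y₀ x) (c4d1 F t₀ y₀ x)) x :=
    comp1 hF (hc4D hF x)
  exact h0.clm_apply (hc4d1D hF x)

theorem hg4d2D (hF : ContDiff ℝ (⊤:ℕ∞) F) (x : ℝ) :
    HasDerivAt (g4d2 F t₀ y₀) (g4d3 F t₀ y₀ x) x := by
  have h0 : HasDerivAt (fun t => P2 F (c4 F t₀ y₀ t)) (P3 F (c4 F t₀ y₀ x) (c4d1 F t₀ y₀ x)) x :=
    comp2 hF (hc4D hF x)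
  have h1 : HasDerivAt (fun t => P2 F (c4 F t₀ y₀ t) (c4d1 F t₀ y₀ t))
      (P3 F (c4 F t₀ y₀ x) (c4d1 F t₀ y₀ x) (c4d1 F t₀ y₀ x) + P2 F (c4 F t₀ y₀ x) (c4d2 F t₀ y₀ x)) x :=
    h0.clm_apply (hc4d1D hF x)
  have h2 : HasDerivAt (fun t => P2 F (c4 F t₀ y₀ t) (c4d1 F t₀ y₀ t) (c4d1 F t₀ y₀ t))
      ((P3 F (c4 F t₀ y₀ x) (c4d1 F t₀ y₀ x) (c4d1 F t₀ y₀ x) + P2 F (c4 F t₀ y₀ x) (c4d2 F t₀ y₀ x)) (c4d1 F t₀ y₀ x)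
        + P2 F (c4 F t₀ y₀ x) (c4d1 F t₀ y₀ x) (c4d2 F t₀ y₀ x)) x :=
    h1.clm_apply (hc4d1D hF x)
  have h3 : HasDerivAt (fun t => P1 F (c4 F t₀ y₀ t)) (P2 F (c4 F t₀ y₀ x) (c4d1 F t₀ y₀ x)) x :=
    comp1 hF (hc4D hF x)
  have h4 : HasDerivAt (fun t => P1 F (c4 F t₀ y₀ t) (c4d2 F t₀ y₀ t))
      (P2 F (c4 F t₀ y₀ x) (c4d1 F t₀ y₀ x) (c4d2 F t₀ y₀ x) + P1 F (c4 F t₀ y₀ x) (c4d3 F t₀ y₀ x)) x :=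
    h3.clm_apply (hc4d2D hF x)
  exact (h2.add h4).congr_d (by simp only [g4d3, ContinuousLinearMap.add_apply])

theorem hk4D (hF : ContDiff ℝ (⊤:ℕ∞) F) (x : ℝ) :
    HasDerivAt (k4 F t₀ y₀) (k4d1 F t₀ y₀ x) x := by
  have h1 : HasDerivAt (fun t : ℝ => t • g4 F t₀ y₀ t)
      (x • g4d1 F t₀ y₀ x + (1:ℝ) • g4 F t₀ y₀ x) x := (hasDerivAt_id x).smul (hg4D hF x)
  exact h1.congr_d (by simp only [k4d1]; module)

theorem hk4d1D (hF : ContDiff ℝ (⊤:ℕ∞) F) (x : ℝ) :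
    HasDerivAt (k4d1 F t₀ y₀) (k4d2 F t₀ y₀ x) x := by
  have h0 : HasDerivAt (fun t : ℝ => t • g4d1 F t₀ y₀ t)
      (x • g4d2 F t₀ y₀ x + (1:ℝ) • g4d1 F t₀ y₀ x) x := (hasDerivAt_id x).smul (hg4d1D hF x)
  have h1 : HasDerivAt (fun t : ℝ => g4 F t₀ y₀ t + t • g4d1 F t₀ y₀ t)
      (g4d1 F t₀ y₀ x + (x • g4d2 F t₀ y₀ x + (1:ℝ) • g4d1 F t₀ y₀ x)) x := (hg4D hF x).add h0
  exact h1.congr_d (by simp only [k4d2]; module)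

theorem hk4d2D (hF : ContDiff ℝ (⊤:ℕ∞) F) (x : ℝ) :
    HasDerivAt (k4d2 F t₀ y₀) (k4d3 F t₀ y₀ x) x := by
  have h0 : HasDerivAt (fun t : ℝ => t • g4d2 F t₀ y₀ t)
      (x • g4d3 F t₀ y₀ x + (1:ℝ) • g4d2 F t₀ y₀ x) x := (hasDerivAt_id x).smul (hg4d2D hF x)
  have h1 : HasDerivAt (fun t : ℝ => (2:ℝ) • g4d1 F t₀ y₀ t + t • g4d2 F t₀ y₀ t)
      ((2:ℝ) • g4d2 F t₀ y₀ x + (x • g4d3 F t₀ y₀ x + (1:ℝ) • g4d2 F t₀ y₀ x)) x :=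
    ((hg4d1D hF x).const_smul (2:ℝ)).add h0
  exact h1.congr_d (by simp only [k4d3]; module)

theorem hrD (hF : ContDiff ℝ (⊤:ℕ∞) F) (x : ℝ) :
    HasDerivAt (r F t₀ y₀) (rd1 F t₀ y₀ x) x := by
  have h1 : HasDerivAt (fun t : ℝ => y₀ + (1/6:ℝ) • k1 F t₀ y₀ t + (1/3:ℝ) • k2 F t₀ y₀ t
      + (1/3:ℝ) • k3 F t₀ y₀ t + (1/6:ℝ) • k4 F t₀ y₀ t)
      ((1/6:ℝ) • a F t₀ y₀ + (1/3:ℝ) • k2d1 F t₀ y₀ x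
        + (1/3:ℝ) • k3d1 F t₀ y₀ x + (1/6:ℝ) • k4d1 F t₀ y₀ x) x :=
    (((((hk1D x).const_smul (1/6:ℝ)).const_add y₀).add
      ((hk2D hF x).const_smul (1/3:ℝ))).add
      ((hk3D hF x).const_smul (1/3:ℝ))).add
      ((hk4D hF x).const_smul (1/6:ℝ))
  exact h1

theorem hrd1D (hF : ContDiff ℝ (⊤:ℕ∞) F) (x : ℝ) :
    HasDerivAt (rd1 F t₀ y₀) (rd2 F t₀ y₀ x) x := by
  have h1 : HasDerivAt (fun t : ℝ => (1/6:ℝ) • a F t₀ y₀ + (1/3:ℝ) • k2d1 F t₀ y₀ t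
      + (1/3:ℝ) • k3d1 F t₀ y₀ t + (1/6:ℝ) • k4d1 F t₀ y₀ t)
      (0 + (1/3:ℝ) • k2d2 F t₀ y₀ x + (1/3:ℝ) • k3d2 F t₀ y₀ x + (1/6:ℝ) • k4d2 F t₀ y₀ x) x :=
    (((hasDerivAt_const x ((1/6:ℝ) • a F t₀ y₀)).add
      ((hk2d1D hF x).const_smul (1/3:ℝ))).add
      ((hk3d1D hF x).const_smul (1/3:ℝ))).add
      ((hk4d1D hF x).const_smul (1/6:ℝ))
  exact h1.congr_d (by simp only [rd2]; module)

theorem hrd2D (hF : ContDiff ℝ (⊤:ℕ∞) F) (x : ℝ) :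
    HasDerivAt (rd2 F t₀ y₀) (rd3 F t₀ y₀ x) x := by
  have h1 : HasDerivAt (fun t : ℝ => (1/3:ℝ) • k2d2 F t₀ y₀ t
      + (1/3:ℝ) • k3d2 F t₀ y₀ t + (1/6:ℝ) • k4d2 F t₀ y₀ t)
      ((1/3:ℝ) • k2d3 F t₀ y₀ x + (1/3:ℝ) • k3d3 F t₀ y₀ x + (1/6:ℝ) • k4d3 F t₀ y₀ x) x :=
    (((hk2d2D hF x).const_smul (1/3:ℝ)).add
      ((hk3d2D hF x).const_smul (1/3:ℝ))).add
      ((hk4d2D hF x).const_smul (1/6:ℝ))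
  exact h1

-- the solution chain
theorem hYD (hy : ∀ t, HasDerivAt y (F (t, y t)) t) (x : ℝ) :
    HasDerivAt (fun h : ℝ => y (t₀ + h)) (yd1 F t₀ y x) x := by
  have h1 : HasDerivAt (fun h : ℝ => y (t₀ + h)) ((1:ℝ) • F (t₀ + x, y (t₀ + x))) x :=
    HasDerivAt.scomp x (hy (t₀ + x)) ((hasDerivAt_id x).const_add t₀)
  exact h1.congr_d (by simp [yd1, z])

theorem hzD (hy : ∀ t, HasDerivAt y (F (t, y t)) t) (x : ℝ) :
    HasDerivAt (z t₀ y) (zd1 F t₀ y x) x :=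
  ((hasDerivAt_id x).const_add t₀).prodMk (hYD hy x)

theorem hzd1D (hF : ContDiff ℝ (⊤:ℕ∞) F) (hy : ∀ t, HasDerivAt y (F (t, y t)) t) (x : ℝ) :
    HasDerivAt (zd1 F t₀ y) (zd2 F t₀ y x) x :=
  (hasDerivAt_const x (1:ℝ)).prodMk (comp0 hF (hzD hy x))

theorem hzd2D (hF : ContDiff ℝ (⊤:ℕ∞) F) (hy : ∀ t, HasDerivAt y (F (t, y t)) t) (x : ℝ) :
    HasDerivAt (zd2 F t₀ y) (zd3 F t₀ y x) x := by
  have h0 : HasDerivAt (fun t => P1 F (z t₀ y t)) (P2 F (z t₀ y x) (zd1 F t₀ y x)) x :=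
    comp1 hF (hzD hy x)
  exact (hasDerivAt_const x (0:ℝ)).prodMk (h0.clm_apply (hzd1D hF hy x))

theorem hyd1D (hF : ContDiff ℝ (⊤:ℕ∞) F) (hy : ∀ t, HasDerivAt y (F (t, y t)) t) (x : ℝ) :
    HasDerivAt (yd1 F t₀ y) (yd2 F t₀ y x) x := comp0 hF (hzD hy x)

theorem hyd2D (hF : ContDiff ℝ (⊤:ℕ∞) F) (hy : ∀ t, HasDerivAt y (F (t, y t)) t) (x : ℝ) :
    HasDerivAt (yd2 F t₀ y) (yd3 F t₀ y x) x := by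
  have h0 : HasDerivAt (fun t => P1 F (z t₀ y t)) (P2 F (z t₀ y x) (zd1 F t₀ y x)) x :=
    comp1 hF (hzD hy x)
  exact h0.clm_apply (hzd1D hF hy x)

theorem hyd3D (hF : ContDiff ℝ (⊤:ℕ∞) F) (hy : ∀ t, HasDerivAt y (F (t, y t)) t) (x : ℝ) :
    HasDerivAt (yd3 F t₀ y) (yd4 F t₀ y x) x := by
  have h0 : HasDerivAt (fun t => P2 F (z t₀ y t)) (P3 F (z t₀ y x) (zd1 F t₀ y x)) x :=
    comp2 hF (hzD hy x)
  have h1 : HasDerivAt (fun t => P2 F (z t₀ y t) (zd1 F t₀ y t))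
      (P3 F (z t₀ y x) (zd1 F t₀ y x) (zd1 F t₀ y x) + P2 F (z t₀ y x) (zd2 F t₀ y x)) x :=
    h0.clm_apply (hzd1D hF hy x)
  have h2 : HasDerivAt (fun t => P2 F (z t₀ y t) (zd1 F t₀ y t) (zd1 F t₀ y t))
      ((P3 F (z t₀ y x) (zd1 F t₀ y x) (zd1 F t₀ y x) + P2 F (z t₀ y x) (zd2 F t₀ y x)) (zd1 F t₀ y x)
        + P2 F (z t₀ y x) (zd1 F t₀ y x) (zd2 F t₀ y x)) x :=
    h1.clm_apply (hzd1D hF hy x)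
  have h3 : HasDerivAt (fun t => P1 F (z t₀ y t)) (P2 F (z t₀ y x) (zd1 F t₀ y x)) x :=
    comp1 hF (hzD hy x)
  have h4 : HasDerivAt (fun t => P1 F (z t₀ y t) (zd2 F t₀ y t))
      (P2 F (z t₀ y x) (zd1 F t₀ y x) (zd2 F t₀ y x) + P1 F (z t₀ y x) (zd3 F t₀ y x)) x :=
    h3.clm_apply (hzd2D hF hy x)
  exact (h2.add h4).congr_d (by simp only [yd4, ContinuousLinearMap.add_apply])

end Derivs


section Smooth

variable {F : ℝ × E → E} {t₀ : ℝ} {y₀ : E} {y : ℝ → E}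

theorem lecast {m : ℕ} : (m : WithTop ℕ∞) ≤ ((⊤:ℕ∞) : WithTop ℕ∞) := by exact_mod_cast le_top

theorem ysmooth (hF : ContDiff ℝ (⊤:ℕ∞) F) (hy : ∀ t, HasDerivAt y (F (t, y t)) t) :
    ContDiff ℝ (⊤:ℕ∞) y := by
  have key : ∀ m : ℕ, ContDiff ℝ (m : ℕ) y := by
    intro m
    induction m with
    | zero =>
      exact contDiff_zero.mpr (continuous_iff_continuousAt.mpr fun t => (hy t).continuousAt)
    | succ m ih =>
      have hdy : deriv y = fun t => F (t, y t) := funext fun t => (hy t).deriv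
      have h2 : ContDiff ℝ ((m : WithTop ℕ∞) + 1) y := by
        rw [contDiff_succ_iff_deriv]
        refine ⟨fun t => (hy t).differentiableAt, ?_, ?_⟩
        · intro hcon; exact absurd hcon (by simp)
        · rw [hdy]
          exact (hF.of_le lecast).comp (contDiff_id.prodMk ih)
      exact_mod_cast h2
  exact contDiff_infty.mpr key

theorem ca : ContDiff ℝ (⊤:ℕ∞) (fun _ : ℝ => a F t₀ y₀) := contDiff_const
theorem ck1 : ContDiff ℝ (⊤:ℕ∞) (k1 F t₀ y₀) := contDiff_id.smul contDiff_const
theorem cc2 : ContDiff ℝ (⊤:ℕ∞) (c2 F t₀ y₀) :=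
  (contDiff_const.add (contDiff_id.div_const 2)).prodMk
    (contDiff_const.add (ck1.const_smul (1/2:ℝ)))
theorem cg2 (hF : ContDiff ℝ (⊤:ℕ∞) F) : ContDiff ℝ (⊤:ℕ∞) (g2 F t₀ y₀) := hF.comp cc2
theorem cg2d1 (hF : ContDiff ℝ (⊤:ℕ∞) F) : ContDiff ℝ (⊤:ℕ∞) (g2d1 F t₀ y₀) :=
  ((cP1 hF).comp cc2).clm_apply contDiff_const
theorem cg2d2 (hF : ContDiff ℝ (⊤:ℕ∞) F) : ContDiff ℝ (⊤:ℕ∞) (g2d2 F t₀ y₀) :=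
  (((cP2 hF).comp cc2).clm_apply contDiff_const).clm_apply contDiff_const
theorem cg2d3 (hF : ContDiff ℝ (⊤:ℕ∞) F) : ContDiff ℝ (⊤:ℕ∞) (g2d3 F t₀ y₀) :=
  ((((cP3 hF).comp cc2).clm_apply contDiff_const).clm_apply contDiff_const).clm_apply
    contDiff_const
theorem ck2 (hF : ContDiff ℝ (⊤:ℕ∞) F) : ContDiff ℝ (⊤:ℕ∞) (k2 F t₀ y₀) := contDiff_id.smul (cg2 hF)
theorem ck2d1 (hF : ContDiff ℝ (⊤:ℕ∞) F) : ContDiff ℝ (⊤:ℕ∞) (k2d1 F t₀ y₀) :=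
  (cg2 hF).add (contDiff_id.smul (cg2d1 hF))
theorem ck2d2 (hF : ContDiff ℝ (⊤:ℕ∞) F) : ContDiff ℝ (⊤:ℕ∞) (k2d2 F t₀ y₀) :=
  ((cg2d1 hF).const_smul (2:ℝ)).add (contDiff_id.smul (cg2d2 hF))
theorem ck2d3 (hF : ContDiff ℝ (⊤:ℕ∞) F) : ContDiff ℝ (⊤:ℕ∞) (k2d3 F t₀ y₀) :=
  ((cg2d2 hF).const_smul (3:ℝ)).add (contDiff_id.smul (cg2d3 hF))

theorem cc3 (hF : ContDiff ℝ (⊤:ℕ∞) F) : ContDiff ℝ (⊤:ℕ∞) (c3 F t₀ y₀) :=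
  (contDiff_const.add ((contDiff_id.div_const 2))).prodMk
    (contDiff_const.add ((ck2 hF).const_smul (1/2:ℝ)))
theorem cc3d1 (hF : ContDiff ℝ (⊤:ℕ∞) F) : ContDiff ℝ (⊤:ℕ∞) (c3d1 F t₀ y₀) :=
  contDiff_const.prodMk ((ck2d1 hF).const_smul (1/2:ℝ))
theorem cc3d2 (hF : ContDiff ℝ (⊤:ℕ∞) F) : ContDiff ℝ (⊤:ℕ∞) (c3d2 F t₀ y₀) :=
  contDiff_const.prodMk ((ck2d2 hF).const_smul (1/2:ℝ))
theorem cc3d3 (hF : ContDiff ℝ (⊤:ℕ∞) F) : ContDiff ℝ (⊤:ℕ∞) (c3d3 F t₀ y₀) :=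
  contDiff_const.prodMk ((ck2d3 hF).const_smul (1/2:ℝ))
theorem cg3 (hF : ContDiff ℝ (⊤:ℕ∞) F) : ContDiff ℝ (⊤:ℕ∞) (g3 F t₀ y₀) := hF.comp (cc3 hF)
theorem cg3d1 (hF : ContDiff ℝ (⊤:ℕ∞) F) : ContDiff ℝ (⊤:ℕ∞) (g3d1 F t₀ y₀) :=
  ((cP1 hF).comp (cc3 hF)).clm_apply (cc3d1 hF)
theorem cg3d2 (hF : ContDiff ℝ (⊤:ℕ∞) F) : ContDiff ℝ (⊤:ℕ∞) (g3d2 F t₀ y₀) :=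
  ((((cP2 hF).comp (cc3 hF)).clm_apply (cc3d1 hF)).clm_apply (cc3d1 hF)).add
    (((cP1 hF).comp (cc3 hF)).clm_apply (cc3d2 hF))
theorem cg3d3 (hF : ContDiff ℝ (⊤:ℕ∞) F) : ContDiff ℝ (⊤:ℕ∞) (g3d3 F t₀ y₀) := by
  refine ContDiff.add (ContDiff.add (ContDiff.add ?_ ?_) ?_) (ContDiff.add ?_ ?_)
  · exact (((((cP3 hF).comp (cc3 hF)).clm_apply (cc3d1 hF)).clm_apply
      (cc3d1 hF)).clm_apply (cc3d1 hF))
  · exact ((((cP2 hF).comp (cc3 hF)).clm_apply (cc3d2 hF)).clm_apply (cc3d1 hF))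
  · exact ((((cP2 hF).comp (cc3 hF)).clm_apply (cc3d1 hF)).clm_apply (cc3d2 hF))
  · exact ((((cP2 hF).comp (cc3 hF)).clm_apply (cc3d1 hF)).clm_apply (cc3d2 hF))
  · exact (((cP1 hF).comp (cc3 hF)).clm_apply (cc3d3 hF))
theorem ck3 (hF : ContDiff ℝ (⊤:ℕ∞) F) : ContDiff ℝ (⊤:ℕ∞) (k3 F t₀ y₀) := contDiff_id.smul (cg3 hF)
theorem ck3d1 (hF : ContDiff ℝ (⊤:ℕ∞) F) : ContDiff ℝ (⊤:ℕ∞) (k3d1 F t₀ y₀) :=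
  (cg3 hF).add (contDiff_id.smul (cg3d1 hF))
theorem ck3d2 (hF : ContDiff ℝ (⊤:ℕ∞) F) : ContDiff ℝ (⊤:ℕ∞) (k3d2 F t₀ y₀) :=
  ((cg3d1 hF).const_smul (2:ℝ)).add (contDiff_id.smul (cg3d2 hF))
theorem ck3d3 (hF : ContDiff ℝ (⊤:ℕ∞) F) : ContDiff ℝ (⊤:ℕ∞) (k3d3 F t₀ y₀) :=
  ((cg3d2 hF).const_smul (3:ℝ)).add (contDiff_id.smul (cg3d3 hF))

theorem cc4 (hF : ContDiff ℝ (⊤:ℕ∞) F) : ContDiff ℝ (⊤:ℕ∞) (c4 F t₀ y₀) :=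
  (contDiff_const.add (contDiff_id)).prodMk
    (contDiff_const.add (ck3 hF))
theorem cc4d1 (hF : ContDiff ℝ (⊤:ℕ∞) F) : ContDiff ℝ (⊤:ℕ∞) (c4d1 F t₀ y₀) :=
  contDiff_const.prodMk (ck3d1 hF)
theorem cc4d2 (hF : ContDiff ℝ (⊤:ℕ∞) F) : ContDiff ℝ (⊤:ℕ∞) (c4d2 F t₀ y₀) :=
  contDiff_const.prodMk (ck3d2 hF)
theorem cc4d3 (hF : ContDiff ℝ (⊤:ℕ∞) F) : ContDiff ℝ (⊤:ℕ∞) (c4d3 F t₀ y₀) :=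
  contDiff_const.prodMk (ck3d3 hF)
theorem cg4 (hF : ContDiff ℝ (⊤:ℕ∞) F) : ContDiff ℝ (⊤:ℕ∞) (g4 F t₀ y₀) := hF.comp (cc4 hF)
theorem cg4d1 (hF : ContDiff ℝ (⊤:ℕ∞) F) : ContDiff ℝ (⊤:ℕ∞) (g4d1 F t₀ y₀) :=
  ((cP1 hF).comp (cc4 hF)).clm_apply (cc4d1 hF)
theorem cg4d2 (hF : ContDiff ℝ (⊤:ℕ∞) F) : ContDiff ℝ (⊤:ℕ∞) (g4d2 F t₀ y₀) :=
  ((((cP2 hF).comp (cc4 hF)).clm_apply (cc4d1 hF)).clm_apply (cc4d1 hF)).add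
    (((cP1 hF).comp (cc4 hF)).clm_apply (cc4d2 hF))
theorem cg4d3 (hF : ContDiff ℝ (⊤:ℕ∞) F) : ContDiff ℝ (⊤:ℕ∞) (g4d3 F t₀ y₀) := by
  refine ContDiff.add (ContDiff.add (ContDiff.add ?_ ?_) ?_) (ContDiff.add ?_ ?_)
  · exact (((((cP3 hF).comp (cc4 hF)).clm_apply (cc4d1 hF)).clm_apply
      (cc4d1 hF)).clm_apply (cc4d1 hF))
  · exact ((((cP2 hF).comp (cc4 hF)).clm_apply (cc4d2 hF)).clm_apply (cc4d1 hF))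
  · exact ((((cP2 hF).comp (cc4 hF)).clm_apply (cc4d1 hF)).clm_apply (cc4d2 hF))
  · exact ((((cP2 hF).comp (cc4 hF)).clm_apply (cc4d1 hF)).clm_apply (cc4d2 hF))
  · exact (((cP1 hF).comp (cc4 hF)).clm_apply (cc4d3 hF))
theorem ck4 (hF : ContDiff ℝ (⊤:ℕ∞) F) : ContDiff ℝ (⊤:ℕ∞) (k4 F t₀ y₀) := contDiff_id.smul (cg4 hF)
theorem ck4d1 (hF : ContDiff ℝ (⊤:ℕ∞) F) : ContDiff ℝ (⊤:ℕ∞) (k4d1 F t₀ y₀) :=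
  (cg4 hF).add (contDiff_id.smul (cg4d1 hF))
theorem ck4d2 (hF : ContDiff ℝ (⊤:ℕ∞) F) : ContDiff ℝ (⊤:ℕ∞) (k4d2 F t₀ y₀) :=
  ((cg4d1 hF).const_smul (2:ℝ)).add (contDiff_id.smul (cg4d2 hF))
theorem ck4d3 (hF : ContDiff ℝ (⊤:ℕ∞) F) : ContDiff ℝ (⊤:ℕ∞) (k4d3 F t₀ y₀) :=
  ((cg4d2 hF).const_smul (3:ℝ)).add (contDiff_id.smul (cg4d3 hF))

theorem crd3 (hF : ContDiff ℝ (⊤:ℕ∞) F) : ContDiff ℝ (⊤:ℕ∞) (rd3 F t₀ y₀) :=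
  (((ck2d3 hF).const_smul (1/3:ℝ)).add ((ck3d3 hF).const_smul (1/3:ℝ))).add
    ((ck4d3 hF).const_smul (1/6:ℝ))

theorem cz (hF : ContDiff ℝ (⊤:ℕ∞) F) (hy : ∀ t, HasDerivAt y (F (t, y t)) t) : ContDiff ℝ (⊤:ℕ∞) (z t₀ y) :=
  (contDiff_const.add contDiff_id).prodMk
    ((ysmooth hF hy).comp (contDiff_const.add contDiff_id))
theorem cyd1 (hF : ContDiff ℝ (⊤:ℕ∞) F) (hy : ∀ t, HasDerivAt y (F (t, y t)) t) :
    ContDiff ℝ (⊤:ℕ∞) (yd1 F t₀ y) := hF.comp (cz hF hy)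
theorem czd1 (hF : ContDiff ℝ (⊤:ℕ∞) F) (hy : ∀ t, HasDerivAt y (F (t, y t)) t) :
    ContDiff ℝ (⊤:ℕ∞) (zd1 F t₀ y) := contDiff_const.prodMk (cyd1 hF hy)
theorem cyd2 (hF : ContDiff ℝ (⊤:ℕ∞) F) (hy : ∀ t, HasDerivAt y (F (t, y t)) t) :
    ContDiff ℝ (⊤:ℕ∞) (yd2 F t₀ y) :=
  ((cP1 hF).comp (cz hF hy)).clm_apply (czd1 hF hy)
theorem czd2 (hF : ContDiff ℝ (⊤:ℕ∞) F) (hy : ∀ t, HasDerivAt y (F (t, y t)) t) :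
    ContDiff ℝ (⊤:ℕ∞) (zd2 F t₀ y) := contDiff_const.prodMk (cyd2 hF hy)
theorem cyd3 (hF : ContDiff ℝ (⊤:ℕ∞) F) (hy : ∀ t, HasDerivAt y (F (t, y t)) t) :
    ContDiff ℝ (⊤:ℕ∞) (yd3 F t₀ y) :=
  ((((cP2 hF).comp (cz hF hy)).clm_apply (czd1 hF hy)).clm_apply (czd1 hF hy)).add
    (((cP1 hF).comp (cz hF hy)).clm_apply (czd2 hF hy))

end Smooth

section Values

variable {F : ℝ × E → E} {t₀ : ℝ} {y₀ : E} {y : ℝ → E}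

theorem pair_add (u w : E) : (((0:ℝ), u + w) : ℝ × E) = ((0:ℝ), u) + ((0:ℝ), w) := by simp

theorem c2zero : c2 F t₀ y₀ 0 = (t₀, y₀) := by simp [c2, k1]
theorem g2zero : g2 F t₀ y₀ 0 = a F t₀ y₀ := by simp only [g2, c2zero]; rfl
theorem u2zero : u2 F t₀ y₀ = (2⁻¹:ℝ) • ((1:ℝ), a F t₀ y₀) := by
  simp only [u2, Prod.smul_mk, smul_eq_mul, mul_one]; norm_num
theorem k2d1zero : k2d1 F t₀ y₀ 0 = a F t₀ y₀ := by
  simp only [k2d1, g2zero, zero_smul, add_zero]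
theorem g2d1zero : g2d1 F t₀ y₀ 0 = (2⁻¹:ℝ) • P1 F (t₀, y₀) ((1:ℝ), a F t₀ y₀) := by
  simp only [g2d1, c2zero, u2zero, map_smul]
theorem g2d2zero : g2d2 F t₀ y₀ 0 = ((4:ℝ)⁻¹) • P2 F (t₀, y₀) ((1:ℝ), a F t₀ y₀) ((1:ℝ), a F t₀ y₀) := by
  simp only [g2d2, c2zero, u2zero, map_smul, ContinuousLinearMap.smul_apply, smul_smul]
  norm_num
theorem g2d3zero : g2d3 F t₀ y₀ 0 = ((8:ℝ)⁻¹) • P3 F (t₀, y₀) ((1:ℝ), a F t₀ y₀) ((1:ℝ), a F t₀ y₀) ((1:ℝ), a F t₀ y₀) := by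
  simp only [g2d3, c2zero, u2zero, map_smul, ContinuousLinearMap.smul_apply, smul_smul]
  norm_num
theorem k2d2zero : k2d2 F t₀ y₀ 0 = P1 F (t₀, y₀) ((1:ℝ), a F t₀ y₀) := by
  simp only [k2d2, g2d1zero, zero_smul, add_zero]; module
theorem k2d3zero : k2d3 F t₀ y₀ 0 = (3/4:ℝ) • P2 F (t₀, y₀) ((1:ℝ), a F t₀ y₀) ((1:ℝ), a F t₀ y₀) := by
  simp only [k2d3, g2d2zero, zero_smul, add_zero]; module

theorem c3zero : c3 F t₀ y₀ 0 = (t₀, y₀) := by simp [c3, k2]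
theorem g3zero : g3 F t₀ y₀ 0 = a F t₀ y₀ := by simp only [g3, c3zero]; rfl
theorem c3d1zero : c3d1 F t₀ y₀ 0 = (2⁻¹:ℝ) • ((1:ℝ), a F t₀ y₀) := by
  simp only [c3d1, k2d1zero, Prod.smul_mk, smul_eq_mul, mul_one]; norm_num
theorem c3d2zero : c3d2 F t₀ y₀ 0 = (2⁻¹:ℝ) • ((0:ℝ), P1 F (t₀, y₀) ((1:ℝ), a F t₀ y₀)) := by
  simp only [c3d2, k2d2zero, Prod.smul_mk, smul_zero, smul_eq_mul, mul_zero]; norm_num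
theorem c3d3zero : c3d3 F t₀ y₀ 0 = (3/8:ℝ) • (((0:ℝ), P2 F (t₀, y₀) ((1:ℝ), a F t₀ y₀) ((1:ℝ), a F t₀ y₀)) : ℝ × E) := by
  simp only [c3d3, k2d3zero, Prod.smul_mk, smul_smul, smul_zero, smul_eq_mul, mul_zero]
  norm_num
theorem k3d1zero : k3d1 F t₀ y₀ 0 = a F t₀ y₀ := by
  simp only [k3d1, g3zero, zero_smul, add_zero]
theorem g3d1zero : g3d1 F t₀ y₀ 0 = (2⁻¹:ℝ) • P1 F (t₀, y₀) ((1:ℝ), a F t₀ y₀) := by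
  simp only [g3d1, c3zero, c3d1zero, map_smul]
theorem g3d2zero : g3d2 F t₀ y₀ 0 = ((4:ℝ)⁻¹) • P2 F (t₀, y₀) ((1:ℝ), a F t₀ y₀) ((1:ℝ), a F t₀ y₀) + (2⁻¹:ℝ) • P1 F (t₀, y₀) ((0:ℝ), P1 F (t₀, y₀) ((1:ℝ), a F t₀ y₀)) := by
  simp only [g3d2, c3zero, c3d1zero, c3d2zero, map_smul, ContinuousLinearMap.smul_apply,
    smul_smul]
  norm_num
theorem g3d3zero : g3d3 F t₀ y₀ 0 = ((8:ℝ)⁻¹) • P3 F (t₀, y₀) ((1:ℝ), a F t₀ y₀) ((1:ℝ), a F t₀ y₀) ((1:ℝ), a F t₀ y₀) + ((4:ℝ)⁻¹) • P2 F (t₀, y₀) ((0:ℝ), P1 F (t₀, y₀) ((1:ℝ), a F t₀ y₀)) ((1:ℝ), a F t₀ y₀) + ((4:ℝ)⁻¹) • P2 F (t₀, y₀) ((1:ℝ), a F t₀ y₀) ((0:ℝ), P1 F (t₀, y₀) ((1:ℝ), a F t₀ y₀))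
    + (((4:ℝ)⁻¹) • P2 F (t₀, y₀) ((1:ℝ), a F t₀ y₀) ((0:ℝ), P1 F (t₀, y₀) ((1:ℝ), a F t₀ y₀)) + (3/8:ℝ) • P1 F (t₀, y₀) ((0:ℝ), P2 F (t₀, y₀) ((1:ℝ), a F t₀ y₀) ((1:ℝ), a F t₀ y₀))) := by
  simp only [g3d3, c3zero, c3d1zero, c3d2zero, c3d3zero, map_smul,
    ContinuousLinearMap.smul_apply, smul_smul]
  module
theorem k3d2zero : k3d2 F t₀ y₀ 0 = P1 F (t₀, y₀) ((1:ℝ), a F t₀ y₀) := by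
  simp only [k3d2, g3d1zero, zero_smul, add_zero]; module
theorem k3d3zero : k3d3 F t₀ y₀ 0 = (3/4:ℝ) • P2 F (t₀, y₀) ((1:ℝ), a F t₀ y₀) ((1:ℝ), a F t₀ y₀) + (3/2:ℝ) • P1 F (t₀, y₀) ((0:ℝ), P1 F (t₀, y₀) ((1:ℝ), a F t₀ y₀)) := by
  simp only [k3d3, g3d2zero, zero_smul, add_zero]; module

theorem c4zero : c4 F t₀ y₀ 0 = (t₀, y₀) := by simp [c4, k3]
theorem g4zero : g4 F t₀ y₀ 0 = a F t₀ y₀ := by simp only [g4, c4zero]; rfl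
theorem c4d1zero : c4d1 F t₀ y₀ 0 = ((1:ℝ), a F t₀ y₀) := by simp only [c4d1, k3d1zero]
theorem c4d2zero : c4d2 F t₀ y₀ 0 = ((0:ℝ), P1 F (t₀, y₀) ((1:ℝ), a F t₀ y₀)) := by simp only [c4d2, k3d2zero]
theorem c4d3zero : c4d3 F t₀ y₀ 0
    = (3/4:ℝ) • (((0:ℝ), P2 F (t₀, y₀) ((1:ℝ), a F t₀ y₀) ((1:ℝ), a F t₀ y₀)) : ℝ × E) + (3/2:ℝ) • (((0:ℝ), P1 F (t₀, y₀) ((0:ℝ), P1 F (t₀, y₀) ((1:ℝ), a F t₀ y₀))) : ℝ × E) := by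
  simp only [c4d3, k3d3zero, Prod.smul_mk, Prod.mk_add_mk, smul_zero, add_zero]
theorem k4d1zero : k4d1 F t₀ y₀ 0 = a F t₀ y₀ := by
  simp only [k4d1, g4zero, zero_smul, add_zero]
theorem g4d1zero : g4d1 F t₀ y₀ 0 = P1 F (t₀, y₀) ((1:ℝ), a F t₀ y₀) := by
  simp only [g4d1, c4zero, c4d1zero]
theorem g4d2zero : g4d2 F t₀ y₀ 0 = P2 F (t₀, y₀) ((1:ℝ), a F t₀ y₀) ((1:ℝ), a F t₀ y₀) + P1 F (t₀, y₀) ((0:ℝ), P1 F (t₀, y₀) ((1:ℝ), a F t₀ y₀)) := by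
  simp only [g4d2, c4zero, c4d1zero, c4d2zero]
theorem g4d3zero : g4d3 F t₀ y₀ 0 = P3 F (t₀, y₀) ((1:ℝ), a F t₀ y₀) ((1:ℝ), a F t₀ y₀) ((1:ℝ), a F t₀ y₀) + P2 F (t₀, y₀) ((0:ℝ), P1 F (t₀, y₀) ((1:ℝ), a F t₀ y₀)) ((1:ℝ), a F t₀ y₀) + P2 F (t₀, y₀) ((1:ℝ), a F t₀ y₀) ((0:ℝ), P1 F (t₀, y₀) ((1:ℝ), a F t₀ y₀))
    + (P2 F (t₀, y₀) ((1:ℝ), a F t₀ y₀) ((0:ℝ), P1 F (t₀, y₀) ((1:ℝ), a F t₀ y₀)) + ((3/4:ℝ) • P1 F (t₀, y₀) ((0:ℝ), P2 F (t₀, y₀) ((1:ℝ), a F t₀ y₀) ((1:ℝ), a F t₀ y₀)) + (3/2:ℝ) • P1 F (t₀, y₀) ((0:ℝ), P1 F (t₀, y₀) ((0:ℝ), P1 F (t₀, y₀) ((1:ℝ), a F t₀ y₀))))) := by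
  simp only [g4d3, c4zero, c4d1zero, c4d2zero, c4d3zero, map_add, map_smul,
    ContinuousLinearMap.add_apply, ContinuousLinearMap.smul_apply]
theorem k4d2zero : k4d2 F t₀ y₀ 0 = (2:ℝ) • P1 F (t₀, y₀) ((1:ℝ), a F t₀ y₀) := by
  simp only [k4d2, g4d1zero, zero_smul, add_zero]
theorem k4d3zero : k4d3 F t₀ y₀ 0 = (3:ℝ) • (P2 F (t₀, y₀) ((1:ℝ), a F t₀ y₀) ((1:ℝ), a F t₀ y₀) + P1 F (t₀, y₀) ((0:ℝ), P1 F (t₀, y₀) ((1:ℝ), a F t₀ y₀))) := by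
  simp only [k4d3, g4d2zero, zero_smul, add_zero]

theorem zzero (hy₀ : y t₀ = y₀) : z t₀ y 0 = (t₀, y₀) := by simp [z, hy₀]
theorem yd1zero (hy₀ : y t₀ = y₀) : yd1 F t₀ y 0 = a F t₀ y₀ := by
  simp only [yd1, zzero hy₀]; rfl
theorem zd1zero (hy₀ : y t₀ = y₀) : zd1 F t₀ y 0 = ((1:ℝ), a F t₀ y₀) := by
  simp only [zd1, yd1zero hy₀]
theorem yd2zero (hy₀ : y t₀ = y₀) : yd2 F t₀ y 0 = P1 F (t₀, y₀) ((1:ℝ), a F t₀ y₀) := by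
  simp only [yd2, zzero hy₀, zd1zero hy₀]
theorem zd2zero (hy₀ : y t₀ = y₀) : zd2 F t₀ y 0 = ((0:ℝ), P1 F (t₀, y₀) ((1:ℝ), a F t₀ y₀)) := by
  simp only [zd2, yd2zero hy₀]
theorem yd3zero (hy₀ : y t₀ = y₀) : yd3 F t₀ y 0 = P2 F (t₀, y₀) ((1:ℝ), a F t₀ y₀) ((1:ℝ), a F t₀ y₀) + P1 F (t₀, y₀) ((0:ℝ), P1 F (t₀, y₀) ((1:ℝ), a F t₀ y₀)) := by
  simp only [yd3, zzero hy₀, zd1zero hy₀, zd2zero hy₀]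
theorem zd3zero (hy₀ : y t₀ = y₀) : zd3 F t₀ y 0 = ((0:ℝ), P2 F (t₀, y₀) ((1:ℝ), a F t₀ y₀) ((1:ℝ), a F t₀ y₀) + P1 F (t₀, y₀) ((0:ℝ), P1 F (t₀, y₀) ((1:ℝ), a F t₀ y₀))) := by
  simp only [zd3, yd3zero hy₀]
theorem yd4zero (hy₀ : y t₀ = y₀) : yd4 F t₀ y 0 = P3 F (t₀, y₀) ((1:ℝ), a F t₀ y₀) ((1:ℝ), a F t₀ y₀) ((1:ℝ), a F t₀ y₀) + P2 F (t₀, y₀) ((0:ℝ), P1 F (t₀, y₀) ((1:ℝ), a F t₀ y₀)) ((1:ℝ), a F t₀ y₀) + P2 F (t₀, y₀) ((1:ℝ), a F t₀ y₀) ((0:ℝ), P1 F (t₀, y₀) ((1:ℝ), a F t₀ y₀))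
    + (P2 F (t₀, y₀) ((1:ℝ), a F t₀ y₀) ((0:ℝ), P1 F (t₀, y₀) ((1:ℝ), a F t₀ y₀)) + (P1 F (t₀, y₀) ((0:ℝ), P2 F (t₀, y₀) ((1:ℝ), a F t₀ y₀) ((1:ℝ), a F t₀ y₀)) + P1 F (t₀, y₀) ((0:ℝ), P1 F (t₀, y₀) ((0:ℝ), P1 F (t₀, y₀) ((1:ℝ), a F t₀ y₀))))) := by
  simp only [yd4, zzero hy₀, zd1zero hy₀, zd2zero hy₀, zd3zero hy₀, pair_add, map_add]

theorem q1zero (F : ℝ × E → E) (hy₀ : y t₀ = y₀) : rd1 F t₀ y₀ 0 - yd1 F t₀ y 0 = 0 := by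
  simp only [rd1, k2d1zero, k3d1zero, k4d1zero, yd1zero hy₀]; module
theorem q2zero (F : ℝ × E → E) (hy₀ : y t₀ = y₀) : rd2 F t₀ y₀ 0 - yd2 F t₀ y 0 = 0 := by
  simp only [rd2, k2d2zero, k3d2zero, k4d2zero, yd2zero hy₀]; module
theorem q3zero (F : ℝ × E → E) (hy₀ : y t₀ = y₀) : rd3 F t₀ y₀ 0 - yd3 F t₀ y 0 = 0 := by
  simp only [rd3, k2d3zero, k3d3zero, k4d3zero, yd3zero hy₀]; module

theorem hq3at0 (hF : ContDiff ℝ (⊤:ℕ∞) F) (hy : ∀ t, HasDerivAt y (F (t, y t)) t)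
    (hy₀ : y t₀ = y₀) :
    HasDerivAt (fun h : ℝ => rd3 F t₀ y₀ h - yd3 F t₀ y h) 0 0 := by
  have dg2 : DifferentiableAt ℝ (g2d3 F t₀ y₀) 0 := ((cg2d3 hF).differentiable onecast) 0
  have dg3 : DifferentiableAt ℝ (g3d3 F t₀ y₀) 0 := ((cg3d3 hF).differentiable onecast) 0
  have dg4 : DifferentiableAt ℝ (g4d3 F t₀ y₀) 0 := ((cg4d3 hF).differentiable onecast) 0
  have hk2 : HasDerivAt (k2d3 F t₀ y₀) ((4:ℝ) • g2d3 F t₀ y₀ 0) 0 := by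
    have h0 : HasDerivAt (fun t : ℝ => t • g2d3 F t₀ y₀ t)
        ((0:ℝ) • deriv (g2d3 F t₀ y₀) 0 + (1:ℝ) • g2d3 F t₀ y₀ 0) 0 :=
      (hasDerivAt_id 0).smul dg2.hasDerivAt
    have h1 : HasDerivAt (fun t : ℝ => (3:ℝ) • g2d2 F t₀ y₀ t + t • g2d3 F t₀ y₀ t)
        ((3:ℝ) • g2d3 F t₀ y₀ 0
          + ((0:ℝ) • deriv (g2d3 F t₀ y₀) 0 + (1:ℝ) • g2d3 F t₀ y₀ 0)) 0 :=
      ((hg2d2D hF 0).const_smul (3:ℝ)).add h0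
    exact h1.congr_d (by module)
  have hk3 : HasDerivAt (k3d3 F t₀ y₀) ((4:ℝ) • g3d3 F t₀ y₀ 0) 0 := by
    have h0 : HasDerivAt (fun t : ℝ => t • g3d3 F t₀ y₀ t)
        ((0:ℝ) • deriv (g3d3 F t₀ y₀) 0 + (1:ℝ) • g3d3 F t₀ y₀ 0) 0 :=
      (hasDerivAt_id 0).smul dg3.hasDerivAt
    have h1 : HasDerivAt (fun t : ℝ => (3:ℝ) • g3d2 F t₀ y₀ t + t • g3d3 F t₀ y₀ t)
        ((3:ℝ) • g3d3 F t₀ y₀ 0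
          + ((0:ℝ) • deriv (g3d3 F t₀ y₀) 0 + (1:ℝ) • g3d3 F t₀ y₀ 0)) 0 :=
      ((hg3d2D hF 0).const_smul (3:ℝ)).add h0
    exact h1.congr_d (by module)
  have hk4 : HasDerivAt (k4d3 F t₀ y₀) ((4:ℝ) • g4d3 F t₀ y₀ 0) 0 := by
    have h0 : HasDerivAt (fun t : ℝ => t • g4d3 F t₀ y₀ t)
        ((0:ℝ) • deriv (g4d3 F t₀ y₀) 0 + (1:ℝ) • g4d3 F t₀ y₀ 0) 0 :=
      (hasDerivAt_id 0).smul dg4.hasDerivAt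
    have h1 : HasDerivAt (fun t : ℝ => (3:ℝ) • g4d2 F t₀ y₀ t + t • g4d3 F t₀ y₀ t)
        ((3:ℝ) • g4d3 F t₀ y₀ 0
          + ((0:ℝ) • deriv (g4d3 F t₀ y₀) 0 + (1:ℝ) • g4d3 F t₀ y₀ 0)) 0 :=
      ((hg4d2D hF 0).const_smul (3:ℝ)).add h0
    exact h1.congr_d (by module)
  have hrd3 : HasDerivAt (rd3 F t₀ y₀)
      ((1/3:ℝ) • ((4:ℝ) • g2d3 F t₀ y₀ 0) + (1/3:ℝ) • ((4:ℝ) • g3d3 F t₀ y₀ 0)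
        + (1/6:ℝ) • ((4:ℝ) • g4d3 F t₀ y₀ 0)) 0 := by
    have h1 : HasDerivAt (fun t : ℝ => (1/3:ℝ) • k2d3 F t₀ y₀ t
        + (1/3:ℝ) • k3d3 F t₀ y₀ t + (1/6:ℝ) • k4d3 F t₀ y₀ t)
        ((1/3:ℝ) • ((4:ℝ) • g2d3 F t₀ y₀ 0) + (1/3:ℝ) • ((4:ℝ) • g3d3 F t₀ y₀ 0)
          + (1/6:ℝ) • ((4:ℝ) • g4d3 F t₀ y₀ 0)) 0 :=
      ((hk2.const_smul (1/3:ℝ)).add (hk3.const_smul (1/3:ℝ))).add (hk4.const_smul (1/6:ℝ))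
    exact h1
  have hfinal := hrd3.sub (hyd3D (t₀ := t₀) hF hy 0)
  refine hfinal.congr_d ?_
  rw [g2d3zero, g3d3zero, g4d3zero, yd4zero hy₀]
  module

end Values

theorem rk4_general (F : ℝ × E → E) (hF : ContDiff ℝ (⊤:ℕ∞) F)
    (y : ℝ → E) (hy : ∀ t, HasDerivAt y (F (t, y t)) t)
    (t₀ : ℝ) (y₀ : E) (hy₀ : y t₀ = y₀) :
    (fun h : ℝ => r F t₀ y₀ h - y (t₀ + h)) =O[nhds 0] fun h : ℝ => h ^ 5 := by
  have cq3 : ContDiff ℝ (⊤:ℕ∞) (fun h : ℝ => rd3 F t₀ y₀ h - yd3 F t₀ y h) :=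
    (crd3 hF).sub (cyd3 hF hy)
  have hdq3 : Differentiable ℝ (fun h : ℝ => rd3 F t₀ y₀ h - yd3 F t₀ y h) :=
    cq3.differentiable onecast
  have hq3d : ∀ h : ℝ, HasDerivAt (fun h : ℝ => rd3 F t₀ y₀ h - yd3 F t₀ y h)
      (deriv (fun h : ℝ => rd3 F t₀ y₀ h - yd3 F t₀ y h) h) h :=
    fun h => (hdq3 h).hasDerivAt
  have hq40 : deriv (fun h : ℝ => rd3 F t₀ y₀ h - yd3 F t₀ y h) 0 = 0 :=
    (hq3at0 hF hy hy₀).deriv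
  have cq4 : ContDiff ℝ (⊤:ℕ∞) (deriv (fun h : ℝ => rd3 F t₀ y₀ h - yd3 F t₀ y h)) :=
    (contDiff_infty_iff_deriv.mp cq3).2
  have o4 : (deriv (fun h : ℝ => rd3 F t₀ y₀ h - yd3 F t₀ y h)) =O[nhds 0]
      fun h : ℝ => h ^ 1 := by
    have h1 := ((cq4.differentiable onecast) 0).hasFDerivAt.isBigO_sub
    have e1 : (fun x : ℝ => deriv (fun h : ℝ => rd3 F t₀ y₀ h - yd3 F t₀ y h) x
        - deriv (fun h : ℝ => rd3 F t₀ y₀ h - yd3 F t₀ y h) 0)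
        = deriv (fun h : ℝ => rd3 F t₀ y₀ h - yd3 F t₀ y h) := by
      funext x; rw [hq40, sub_zero]
    have e2 : (fun x : ℝ => x - (0:ℝ)) = fun x : ℝ => x ^ 1 := by funext x; simp
    rwa [e1, e2] at h1
  have o3 : (fun h : ℝ => rd3 F t₀ y₀ h - yd3 F t₀ y h) =O[nhds 0] fun h : ℝ => h ^ 2 :=
    isBigO_succ_of_deriv 1 _ _ hq3d (q3zero F hy₀) o4
  have o2 : (fun h : ℝ => rd2 F t₀ y₀ h - yd2 F t₀ y h) =O[nhds 0] fun h : ℝ => h ^ 3 :=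
    isBigO_succ_of_deriv 2 _ _ (fun h => (hrd2D hF h).sub (hyd2D hF hy h)) (q2zero F hy₀) o3
  have o1 : (fun h : ℝ => rd1 F t₀ y₀ h - yd1 F t₀ y h) =O[nhds 0] fun h : ℝ => h ^ 4 :=
    isBigO_succ_of_deriv 3 _ _ (fun h => (hrd1D hF h).sub (hyd1D hF hy h)) (q1zero F hy₀) o2
  have o0 : (fun h : ℝ => r F t₀ y₀ h - y (t₀ + h)) =O[nhds 0] fun h : ℝ => h ^ 5 :=
    isBigO_succ_of_deriv 4 _ _ (fun h => (hrD hF h).sub (hYD hy h))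
      (by simp [r, k1, k2, k3, k4, hy₀]) o1
  exact o0

end RK4Proof

open RK4Proof in
/-- The classical Runge–Kutta method RK4 is a 4-stage method of order 4: its
local error is `O(h⁵)` as `h → 0`. -/
theorem rk4_local_error
    (n : ℕ) (f : ℝ → (Fin n → ℝ) → (Fin n → ℝ))
    (hf : ContDiff ℝ (⊤ : ℕ∞) (Function.uncurry f))
    (y : ℝ → (Fin n → ℝ)) (hy : ∀ t, HasDerivAt y (f t (y t)) t)
    (t₀ : ℝ) (y₀ : Fin n → ℝ) (hy₀ : y t₀ = y₀)
    (k₁ k₂ k₃ k₄ y₁ : ℝ → (Fin n → ℝ))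
    (hk₁ : ∀ h : ℝ, k₁ h = h • f t₀ y₀)
    (hk₂ : ∀ h : ℝ, k₂ h = h • f (t₀ + h / 2) (y₀ + (1 / 2 : ℝ) • k₁ h))
    (hk₃ : ∀ h : ℝ, k₃ h = h • f (t₀ + h / 2) (y₀ + (1 / 2 : ℝ) • k₂ h))
    (hk₄ : ∀ h : ℝ, k₄ h = h • f (t₀ + h) (y₀ + k₃ h))
    (hy₁ : ∀ h : ℝ, y₁ h = y₀ + (1 / 6 : ℝ) • k₁ h + (1 / 3 : ℝ) • k₂ h
      + (1 / 3 : ℝ) • k₃ h + (1 / 6 : ℝ) • k₄ h) :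
    (fun h : ℝ => y₁ h - y (t₀ + h)) =O[nhds 0] (fun h : ℝ => h ^ 5) := by
  have hF : ContDiff ℝ (⊤:ℕ∞) (Function.uncurry f) := hf.of_le (by simp)
  have key := rk4_general (Function.uncurry f) hF y (fun t => hy t) t₀ y₀ hy₀
  have e : (fun h : ℝ => y₁ h - y (t₀ + h))
      = (fun h : ℝ => RK4Proof.r (Function.uncurry f) t₀ y₀ h - y (t₀ + h)) := by
    funext h
    rw [hy₁ h, hk₄ h, hk₃ h, hk₂ h, hk₁ h]
    simp only [RK4Proof.r, RK4Proof.k4, RK4Proof.k3, RK4Proof.k2, RK4Proof.k1,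
      RK4Proof.c4, RK4Proof.c3, RK4Proof.c2, RK4Proof.a, Function.uncurry_apply_pair]
  rw [e]
  exact key
end

section
/- Let s ∈ ℕ, let A : Fin s → Fin s → ℝ be strictly lower-triangular (A i j = 0 whenever j ≥ i), let b : Fin s → ℝ, and let c := A·𝟙 (cᵢ = Σⱼ A i j). The explicit Runge–Kutta method (A, b) has order 2 — that is, for every n, every smooth f : ℝ × (Fin n → ℝ) → (Fin n → ℝ), and every initial value problem with solution y, the output satisfies ‖y₁(h) − y(t₀ + h)‖ = O(h³) as h → 0 — if and only if Σᵢ b i = 1 and Σᵢ b i * c i = 1/2. (The Runge–Kutta order conditions for order p = 2.) -/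
open Asymptotics
open scoped ContDiff

-- scalar extraction lemma
lemma coef_zero_of_isBigO (C : ℝ) (m : ℕ) (hm : m < 3)
    (h : (fun h : ℝ => C * h ^ m) =O[nhds 0] (fun h : ℝ => h ^ 3)) : C = 0 := by
  obtain ⟨K, hK⟩ := h.bound
  have h1 : ∀ᶠ x : ℝ in nhdsWithin 0 {0}ᶜ, |C| ≤ K * |x| ^ (3 - m) := by
    filter_upwards [nhdsWithin_le_nhds hK, self_mem_nhdsWithin] with x hx hx0
    have hxm : (0:ℝ) < |x| ^ m := pow_pos (abs_pos.2 hx0) m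
    have : |C| * |x| ^ m ≤ (K * |x| ^ (3 - m)) * |x| ^ m := by
      calc |C| * |x| ^ m = ‖C * x ^ m‖ := by rw [norm_mul]; simp [abs_pow]
        _ ≤ K * ‖x ^ 3‖ := hx
        _ = (K * |x| ^ (3 - m)) * |x| ^ m := by
            rw [mul_assoc, ← pow_add]
            simp [abs_pow, Nat.sub_add_cancel hm.le]
    exact le_of_mul_le_mul_right this hxm
  have h2 : Filter.Tendsto (fun x : ℝ => K * |x| ^ (3 - m)) (nhdsWithin 0 {0}ᶜ) (nhds 0) := by
    have : Filter.Tendsto (fun x : ℝ => K * |x| ^ (3 - m)) (nhds 0) (nhds (K * |0| ^ (3 - m))) := by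
      exact Filter.Tendsto.const_mul _ ((continuous_abs.tendsto 0).pow _)
    simp only [abs_zero, zero_pow (by omega : 3 - m ≠ 0), mul_zero] at this
    exact this.mono_left nhdsWithin_le_nhds
  have : |C| ≤ 0 := ge_of_tendsto h2 h1
  exact abs_nonpos_iff.mp this

lemma isBigO_integrate {E : Type*} [NormedAddCommGroup E] [NormedSpace ℝ E]
    {u : ℝ → E} (hu : Differentiable ℝ u) (hu0 : u 0 = 0) {m : ℕ}
    (hd : (deriv u) =O[nhds 0] (fun h : ℝ => h ^ m)) :
    u =O[nhds 0] (fun h : ℝ => h ^ (m + 1)) := by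
  obtain ⟨K, hK⟩ := hd.bound
  rw [Metric.eventually_nhds_iff] at hK
  obtain ⟨ε, hε, hKb⟩ := hK
  rw [isBigO_iff]
  refine ⟨K, Metric.eventually_nhds_iff.2 ⟨ε, hε, fun {h} hh => ?_⟩⟩
  have habs : ∀ x ∈ Set.uIcc (0:ℝ) h, ‖deriv u x‖ ≤ K * |h| ^ m := by
    intro x hx
    have hxh : |x| ≤ |h| := by
      rcases Set.mem_uIcc.1 hx with ⟨h1, h2⟩ | ⟨h1, h2⟩ <;> rw [abs_le] <;>
        constructor <;> nlinarith [abs_nonneg h, le_abs_self h, neg_abs_le h]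
    have hxd : dist x 0 < ε := by
      simp only [dist_zero_right, Real.norm_eq_abs] at hh ⊢
      exact lt_of_le_of_lt hxh hh
    calc ‖deriv u x‖ ≤ K * ‖x ^ m‖ := hKb hxd
      _ ≤ K * |h| ^ m := by
          have : ‖x ^ m‖ = |x| ^ m := by simp [abs_pow]
          rw [this]
          have hK0 : 0 ≤ K := by
            have h2 := hKb (show dist (ε/2:ℝ) 0 < ε by
              simp [abs_of_nonneg hε.le]; linarith)
            have hp : (0:ℝ) < ‖(ε/2) ^ m‖ := by
              simp [abs_pow]; positivity
            nlinarith [norm_nonneg (deriv u (ε/2))]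
          exact mul_le_mul_of_nonneg_left (pow_le_pow_left₀ (abs_nonneg x) hxh m) hK0
  have := Convex.norm_image_sub_le_of_norm_hasDerivWithin_le
    (f := u) (f' := deriv u) (s := Set.uIcc (0:ℝ) h)
    (fun x _ => (hu x).hasDerivAt.hasDerivWithinAt) habs (convex_uIcc _ _)
    Set.left_mem_uIcc Set.right_mem_uIcc
  rw [hu0, sub_zero] at this
  calc ‖u h‖ ≤ K * |h| ^ m * ‖h - 0‖ := this
    _ = K * ‖h ^ (m+1)‖ := by
        simp [Real.norm_eq_abs, abs_pow, pow_succ, mul_assoc]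

/-- The Runge–Kutta order conditions `b · 𝟙 = 1` and `b · c = 1/2` characterize
order `p = 2`. -/
theorem rk_order_two_iff
    (s : ℕ) (A : Fin s → Fin s → ℝ) (hA : ∀ i j : Fin s, i ≤ j → A i j = 0)
    (b : Fin s → ℝ) (c : Fin s → ℝ) (hc : ∀ i, c i = ∑ j, A i j) :
    (∀ (n : ℕ) (f : ℝ → (Fin n → ℝ) → (Fin n → ℝ)),
      ContDiff ℝ (⊤ : ℕ∞) (Function.uncurry f) →
      ∀ (t₀ : ℝ) (y₀ : Fin n → ℝ) (y : ℝ → (Fin n → ℝ)),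
        (∀ t, HasDerivAt y (f t (y t)) t) → y t₀ = y₀ →
        ∀ k : ℝ → Fin s → (Fin n → ℝ),
          (∀ (h : ℝ) (i : Fin s),
            k h i = h • f (t₀ + c i * h) (y₀ + ∑ j, A i j • k h j)) →
          (fun h : ℝ => (y₀ + ∑ i, b i • k h i) - y (t₀ + h))
            =O[nhds 0] (fun h : ℝ => h ^ 3))
    ↔ ((∑ i, b i) = 1 ∧ (∑ i, b i * c i) = 1 / 2) := by
  constructor
  · intro H
    constructor
    · -- test problem f = 1
      have H1 := H 1 (fun _ _ => fun _ => 1) contDiff_const 0 0 (fun t _ => t)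
        (fun t => hasDerivAt_pi.2 fun _ => hasDerivAt_id t) rfl
        (fun h _ _ => h)
        (by intro h i; funext x; simp)
      have key : (fun h : ℝ => ((∑ i, b i) - 1) * h) =O[nhds 0] (fun h : ℝ => h ^ 3) := by
        have hb : (fun h : ℝ => ((∑ i, b i) - 1) * h)
            = fun h : ℝ => (((0 : Fin 1 → ℝ) + ∑ i, b i • (fun _ : Fin 1 => h))
                - (fun t (_ : Fin 1) => t) (0 + h)) 0 := by
          funext h
          simp [Finset.sum_apply, ← Finset.sum_mul, sub_mul]
        rw [hb]
        exact (isBigO_of_le _ (fun x => norm_le_pi_norm _ 0)).trans H1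
      have := coef_zero_of_isBigO _ 1 (by norm_num) (by simpa using key)
      linarith
    · -- test problem f t y = t
      have H2 := H 1 (fun t _ => fun _ => t) (contDiff_pi.2 fun _ => contDiff_fst) 0 0
        (fun t _ => t ^ 2 / 2)
        (fun t => hasDerivAt_pi.2 fun _ => by
          simpa using (hasDerivAt_pow 2 t).div_const 2)
        (by funext x; simp)
        (fun h i _ => h * (c i * h))
        (by intro h i; funext x; simp)
      have key : (fun h : ℝ => ((∑ i, b i * c i) - 1 / 2) * h ^ 2) =O[nhds 0] (fun h : ℝ => h ^ 3) := by
        have hb : (fun h : ℝ => ((∑ i, b i * c i) - 1 / 2) * h ^ 2)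
            = fun h : ℝ => ((((0 : Fin 1 → ℝ) + ∑ i, b i • (fun _ : Fin 1 => h * (c i * h)))
                - (fun t (_ : Fin 1) => t ^ 2 / 2) (0 + h) : Fin 1 → ℝ)) 0 := by
          funext h
          simp only [Pi.add_apply, Pi.zero_apply, Finset.sum_apply, Pi.smul_apply,
            smul_eq_mul, Pi.sub_apply, zero_add]
          rw [sub_mul, Finset.sum_mul]
          congr 1
          · exact Finset.sum_congr rfl fun i _ => by ring
          · ring
        rw [hb]
        exact (isBigO_of_le _ (fun x => norm_le_pi_norm _ 0)).trans H2
      have := coef_zero_of_isBigO _ 2 (by norm_num) key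
      linarith
  · rintro ⟨hb1, hbc⟩ n f hf t₀ y₀ y hy hy0 k hk
    have h1le : (∞ : WithTop ℕ∞) ≠ 0 := by simp
    have hf' : ContDiff ℝ ∞ (Function.uncurry f) := hf.of_le (by simp)
    have hfd : Differentiable ℝ (Function.uncurry f) := hf.differentiable (by simp)
    set Df := fderiv ℝ (Function.uncurry f) (t₀, y₀) with hDf_def
    have hDf : HasFDerivAt (Function.uncurry f) Df (t₀, y₀) := (hfd _).hasFDerivAt
    set F₀ : Fin n → ℝ := f t₀ y₀ with hF₀
    set G : Fin n → ℝ := Df (1, F₀) with hG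
    have hk0 : ∀ j, k 0 j = 0 := fun j => by simpa using hk 0 j
    -- main induction on stages
    have key : ∀ i : Fin s, ContDiff ℝ ∞ (fun h => k h i) ∧
        HasDerivAt (fun h => k h i) F₀ 0 ∧
        HasDerivAt (deriv (fun h => k h i)) ((2 * c i) • G) 0 := by
      suffices H : ∀ m : ℕ, ∀ i : Fin s, i.val < m → (ContDiff ℝ ∞ (fun h => k h i) ∧
          HasDerivAt (fun h => k h i) F₀ 0 ∧
          HasDerivAt (deriv (fun h => k h i)) ((2 * c i) • G) 0) by
        exact fun i => H (i.val + 1) i (Nat.lt_succ_self _)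
      intro m
      induction m with
      | zero => exact fun i hi => absurd hi (Nat.not_lt_zero _)
      | succ m IHm =>
        intro i him
        have IH : ∀ j : Fin s, j < i → (ContDiff ℝ ∞ (fun h => k h j) ∧
            HasDerivAt (fun h => k h j) F₀ 0 ∧
            HasDerivAt (deriv (fun h => k h j)) ((2 * c j) • G) 0) :=
          fun j hj => IHm j (lt_of_lt_of_le hj (Nat.lt_succ_iff.mp him))
        set φ : ℝ → (Fin n → ℝ) :=
          fun h => f (t₀ + c i * h) (y₀ + ∑ j, A i j • k h j) with hφ_def
        have hkeq : (fun h => k h i) = fun h => h • φ h := funext fun h => hk h i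
        -- smoothness of the inner sum
        have hw_cd : ContDiff ℝ ∞ (fun h => y₀ + ∑ j, A i j • k h j) := by
          refine contDiff_const.add (ContDiff.sum fun j _ => ?_)
          by_cases hji : j < i
          · exact ((IH j hji).1).const_smul (A i j)
          · have hz : A i j = 0 := hA i j (le_of_not_gt hji)
            simp only [hz, zero_smul]
            exact contDiff_const
        have hφ_cd : ContDiff ℝ ∞ φ := by
          exact hf'.comp ((contDiff_const.add (contDiff_const.mul contDiff_id)).prodMk hw_cd)
        have hki_cd : ContDiff ℝ ∞ (fun h => k h i) := by
          rw [hkeq]; exact contDiff_id.smul hφ_cd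
        have hφ0 : φ 0 = F₀ := by simp [hφ_def, hk0, hF₀]
        -- derivative of the inner sum at 0
        have hw_d : HasDerivAt (fun h => y₀ + ∑ j, A i j • k h j) (c i • F₀) 0 := by
          have hsum : HasDerivAt (fun h => ∑ j, A i j • k h j) (∑ j, A i j • F₀) 0 := by
            refine HasDerivAt.fun_sum fun j _ => ?_
            by_cases hji : j < i
            · exact ((IH j hji).2.1).const_smul (A i j)
            · have hz : A i j = 0 := hA i j (le_of_not_gt hji)
              simp only [hz, zero_smul]
              exact hasDerivAt_const 0 0
          have : (∑ j, A i j • F₀) = c i • F₀ := by rw [← Finset.sum_smul, ← hc i]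
          rw [← this]
          simpa using (hasDerivAt_const (0:ℝ) y₀).fun_add hsum
        -- derivative of φ at 0
        have hφ_d : HasDerivAt φ (c i • G) 0 := by
          have hψ : HasDerivAt (fun h : ℝ => (t₀ + c i * h, y₀ + ∑ j, A i j • k h j))
              ((c i, c i • F₀) : ℝ × (Fin n → ℝ)) 0 := by
            refine HasDerivAt.prodMk ?_ hw_d
            simpa using ((hasDerivAt_id (0:ℝ)).const_mul (c i)).const_add t₀
          have hψ0 : ((t₀ + c i * 0, y₀ + ∑ j, A i j • k 0 j) : ℝ × (Fin n → ℝ))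
              = (t₀, y₀) := by simp [hk0]
          have hcomp := HasFDerivAt.comp_hasDerivAt 0 (hψ0 ▸ hDf) hψ
          have harg : Df ((c i, c i • F₀) : ℝ × (Fin n → ℝ)) = c i • G := by
            have : ((c i, c i • F₀) : ℝ × (Fin n → ℝ)) = c i • ((1 : ℝ), F₀) := by
              simp [Prod.smul_mk]
            rw [this, map_smul, hG]
          rw [← harg]
          exact hcomp
        have hki_d : HasDerivAt (fun h => k h i) F₀ 0 := by
          rw [hkeq]
          simpa [hφ0] using (hasDerivAt_id (0:ℝ)).fun_smul hφ_d
        have hdφ_cd : ContDiff ℝ ∞ (deriv φ) := (contDiff_infty_iff_deriv.1 hφ_cd).2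
        have hdki : deriv (fun h => k h i) = fun h => φ h + h • deriv φ h := by
          funext h
          rw [hkeq]
          have : HasDerivAt (fun h => h • φ h) (φ h + h • deriv φ h) h := by
            have := (hasDerivAt_id h).fun_smul ((hφ_cd.differentiable h1le h).hasDerivAt)
            simpa [add_comm] using this
          exact this.deriv
        have hdki_d : HasDerivAt (deriv (fun h => k h i)) ((2 * c i) • G) 0 := by
          rw [hdki]
          have h2 : HasDerivAt (fun h : ℝ => h • deriv φ h) (c i • G) 0 := by
            simpa [hφ_d.deriv] using (hasDerivAt_id (0:ℝ)).fun_smul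
              ((hdφ_cd.differentiable h1le 0).hasDerivAt)
          have := hφ_d.add h2
          have harith : c i • G + c i • G = (2 * c i) • G := by
            rw [two_mul, add_smul]
          rwa [harith] at this
        exact ⟨hki_cd, hki_d, hdki_d⟩
    -- smoothness of y
    have hy_diff : Differentiable ℝ y := fun t => (hy t).differentiableAt
    have hy_cd : ContDiff ℝ ∞ y := by
      rw [contDiff_infty]
      intro m
      induction m with
      | zero => exact contDiff_zero.2 hy_diff.continuous
      | succ m IHm =>
        have : ((m + 1 : ℕ) : WithTop ℕ∞) = (m : WithTop ℕ∞) + 1 := by push_cast; ring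
        rw [this, contDiff_succ_iff_deriv]
        refine ⟨hy_diff, by simp, ?_⟩
        have hdy : deriv y = fun t => f t (y t) := funext fun t => (hy t).deriv
        rw [hdy]
        exact (hf'.of_le (by exact_mod_cast le_top)).comp (contDiff_id.prodMk IHm)
    set z : ℝ → (Fin n → ℝ) := fun t => f t (y t) with hz_def
    have hz_d : HasDerivAt z G t₀ := by
      have hψ : HasDerivAt (fun t : ℝ => (t, y t)) ((1, F₀) : ℝ × (Fin n → ℝ)) t₀ := by
        refine HasDerivAt.prodMk (hasDerivAt_id t₀) ?_
        simpa [hy0] using hy t₀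
      have hpt : ((t₀, y t₀) : ℝ × (Fin n → ℝ)) = (t₀, y₀) := by rw [hy0]
      have := HasFDerivAt.comp_hasDerivAt t₀ (hpt ▸ hDf) hψ
      exact this
    set g : ℝ → (Fin n → ℝ) := fun h => (y₀ + ∑ i, b i • k h i) - y (t₀ + h) with hg_def
    have hg_cd : ContDiff ℝ ∞ g := by
      refine ContDiff.sub (contDiff_const.add (ContDiff.sum fun i _ => ((key i).1).const_smul (b i)))
        (hy_cd.comp (contDiff_const.add contDiff_id))
    have hg0 : g 0 = 0 := by simp [hg_def, hk0, hy0]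
    have hyshift : ∀ h : ℝ, HasDerivAt (fun h' : ℝ => y (t₀ + h')) (z (t₀ + h)) h := by
      intro h
      have := (hy (t₀ + h)).scomp h ((hasDerivAt_id h).const_add t₀)
      simpa [Function.comp_def] using this
    have hg_d : HasDerivAt g 0 0 := by
      have h1 : HasDerivAt (fun h => y₀ + ∑ i, b i • k h i) (∑ i, b i • F₀) 0 := by
        simpa using (hasDerivAt_const (0:ℝ) y₀).fun_add
          (HasDerivAt.fun_sum fun i _ => ((key i).2.1).fun_const_smul (b i))
      have h2 : HasDerivAt (fun h : ℝ => y (t₀ + h)) F₀ 0 := by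
        have := hyshift 0
        simpa [hz_def, hy0, hF₀] using this
      have := h1.sub h2
      have harith : (∑ i, b i • F₀) - F₀ = 0 := by
        rw [← Finset.sum_smul, hb1, one_smul, sub_self]
      rwa [harith] at this
    have hdg : deriv g = fun h => (∑ i, b i • deriv (fun h' => k h' i) h) - z (t₀ + h) := by
      funext h
      have h1 : HasDerivAt g ((0 + ∑ i, b i • deriv (fun h' => k h' i) h) - z (t₀ + h)) h :=
        ((hasDerivAt_const h y₀).fun_add (HasDerivAt.fun_sum fun i _ =>
          (((key i).1.differentiable h1le h).hasDerivAt).fun_const_smul (b i))).fun_sub (hyshift h)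
      simpa using h1.deriv
    have hdg_d : HasDerivAt (deriv g) 0 0 := by
      rw [hdg]
      have h1 : HasDerivAt (fun h => ∑ i, b i • deriv (fun h' => k h' i) h)
          (∑ i, b i • ((2 * c i) • G)) 0 :=
        HasDerivAt.fun_sum fun i _ => ((key i).2.2).fun_const_smul (b i)
      have h2 : HasDerivAt (fun h : ℝ => z (t₀ + h)) G 0 := by
        have := (show HasDerivAt z G (t₀ + 0) by simpa using hz_d).scomp 0
          ((hasDerivAt_id (0:ℝ)).const_add t₀)
        simpa [Function.comp_def] using this
      have h3 := h1.sub h2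
      have harith : (∑ i, b i • (2 * c i) • G) - G = 0 := by
        have e1 : (∑ i, b i • (2 * c i) • G) = (∑ i, b i * (2 * c i)) • G := by
          rw [Finset.sum_smul]
          exact Finset.sum_congr rfl fun i _ => smul_smul _ _ _
        have e2 : (∑ i, b i * (2 * c i)) = 1 := by
          have : (∑ i, b i * (2 * c i)) = 2 * ∑ i, b i * c i := by
            rw [Finset.mul_sum]
            exact Finset.sum_congr rfl fun i _ => by ring
          rw [this, hbc]; norm_num
        rw [e1, e2, one_smul, sub_self]
      rwa [harith] at h3
    -- final asymptotics
    have hdg0 : deriv g 0 = 0 := hg_d.deriv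
    have hd20 : deriv (deriv g) 0 = 0 := hdg_d.deriv
    have hdg_cd : ContDiff ℝ ∞ (deriv g) := (contDiff_infty_iff_deriv.1 hg_cd).2
    have hd2_cd : ContDiff ℝ ∞ (deriv (deriv g)) := (contDiff_infty_iff_deriv.1 hdg_cd).2
    set L : Fin n → ℝ := deriv (deriv (deriv g)) 0 with hL_def
    have hL : HasDerivAt (deriv (deriv g)) L 0 := (hd2_cd.differentiable h1le 0).hasDerivAt
    have hlo := hasDerivAt_iff_isLittleO.1 hL
    simp only [sub_zero, hd20] at hlo
    have hO1 : deriv (deriv g) =O[nhds 0] (fun h : ℝ => h ^ 1) := by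
      have hsmul : (fun h : ℝ => h • L) =O[nhds 0] (fun h : ℝ => h) := by
        refine isBigO_iff.2 ⟨‖L‖, Filter.Eventually.of_forall fun x => ?_⟩
        rw [norm_smul, mul_comm]
      have := hlo.isBigO.add hsmul
      simpa [pow_one] using this
    have hO2 : deriv g =O[nhds 0] (fun h : ℝ => h ^ 2) := by
      have := isBigO_integrate (hdg_cd.differentiable h1le) hdg0 hO1
      simpa using this
    have hO3 := isBigO_integrate (hg_cd.differentiable h1le) hg0 hO2
    simpa using hO3
end

section
/- Let s ∈ ℕ, let A : Fin s → Fin s → ℝ be strictly lower-triangular (A i j = 0 whenever j ≥ i), let b : Fin s → ℝ, and let c := A·𝟙. If Σᵢ b i = 1, Σᵢ b i * c i = 1/2, Σᵢ b i * (c i)² = 1/3, and Σᵢ Σⱼ b i * A i j * c j = 1/6, then the explicit Runge–Kutta method (A, b) has order 3: for every n, every smooth f : ℝ × (Fin n → ℝ) → (Fin n → ℝ), and every initial value problem with solution y, the output satisfies ‖y₁(h) − y(t₀ + h)‖ = O(h⁴) as h → 0. (The Runge–Kutta order conditions b·𝟙 = 1, b·c = 1/2, b·c^⊙2 = 1/3,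 b·(Ac) = 1/6 are sufficient for order p = 3.) -/
open Asymptotics Filter

variable {E : Type*} [NormedAddCommGroup E] [NormedSpace ℝ E]

lemma mvt_step {ψ : ℝ → E} {m : ℕ}
    (hψ : Differentiable ℝ ψ) (h0 : ψ 0 = 0)
    (hd : (deriv ψ) =O[nhds 0] fun h : ℝ => h ^ m) :
    ψ =O[nhds 0] fun h : ℝ => h ^ (m + 1) := by
  obtain ⟨C, hC0, hC⟩ := hd.exists_pos
  rw [IsBigOWith, Metric.eventually_nhds_iff] at hC
  obtain ⟨δ, hδ, hball⟩ := hC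
  rw [isBigO_iff]
  refine ⟨C, Metric.eventually_nhds_iff.2 ⟨δ, hδ, ?_⟩⟩
  intro h hh
  have habs : ∀ x ∈ segment ℝ (0:ℝ) h, |x| ≤ |h| := by
    intro x hx
    rw [segment_eq_image] at hx
    obtain ⟨t, ht, rfl⟩ := hx
    simp only [smul_eq_mul, mul_zero, sub_zero, zero_add] at *
    rw [abs_mul]
    calc |t| * |h| ≤ 1 * |h| := by
          apply mul_le_mul_of_nonneg_right _ (abs_nonneg _)
          rw [abs_le]; constructor <;> linarith [ht.1, ht.2]
      _ = |h| := one_mul _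
  have key : ‖ψ h - ψ 0‖ ≤ (C * |h| ^ m) * ‖h - 0‖ := by
    apply Convex.norm_image_sub_le_of_norm_hasDerivWithin_le
      (f' := deriv ψ) (s := segment ℝ (0:ℝ) h)
    · intro x hx
      exact (hψ x).hasDerivAt.hasDerivWithinAt
    · intro x hx
      have hxδ : dist x 0 < δ := by
        rw [Real.dist_eq, sub_zero]
        exact lt_of_le_of_lt (habs x hx) (by rwa [Real.dist_eq, sub_zero] at hh)
      calc ‖deriv ψ x‖ ≤ C * ‖x ^ m‖ := hball hxδ
        _ = C * |x| ^ m := by rw [norm_pow]; rfl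
        _ ≤ C * |h| ^ m := by
            apply mul_le_mul_of_nonneg_left (pow_le_pow_left₀ (abs_nonneg _) (habs x hx) m) hC0.le
    · exact convex_segment _ _
    · exact left_mem_segment _ _ _
    · exact right_mem_segment _ _ _
  rw [h0, sub_zero, sub_zero] at key
  calc ‖ψ h‖ ≤ C * |h| ^ m * ‖h‖ := key
    _ = C * ‖h ^ (m+1)‖ := by rw [norm_pow, pow_succ, Real.norm_eq_abs]; ring

lemma taylor4 {Φ d1 d2 d3 : ℝ → E}
    (h1 : ∀ t, HasDerivAt Φ (d1 t) t) (h2 : ∀ t, HasDerivAt d1 (d2 t) t)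
    (h3 : ∀ t, HasDerivAt d2 (d3 t) t) (h4 : DifferentiableAt ℝ d3 0)
    (e0 : Φ 0 = 0) (e1 : d1 0 = 0) (e2 : d2 0 = 0) (e3 : d3 0 = 0) :
    Φ =O[nhds 0] fun h : ℝ => h ^ 4 := by
  have hd3 : d3 =O[nhds 0] fun h : ℝ => h ^ 1 := by
    have hb := h4.hasFDerivAt.isBigO_sub
    simp only [e3, sub_zero] at hb
    simpa using hb
  have hd2 : d2 =O[nhds 0] fun h : ℝ => h ^ 2 := by
    have := mvt_step (m := 1) (fun t => (h3 t).differentiableAt) e2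
      (by rwa [funext fun t => (h3 t).deriv])
    exact this
  have hd1 : d1 =O[nhds 0] fun h : ℝ => h ^ 3 := by
    have := mvt_step (m := 2) (fun t => (h2 t).differentiableAt) e1
      (by rwa [funext fun t => (h2 t).deriv])
    exact this
  have := mvt_step (m := 3) (fun t => (h1 t).differentiableAt) e0
    (by rwa [funext fun t => (h1 t).deriv])
  exact this

variable {G : Type*} [NormedAddCommGroup G] [NormedSpace ℝ G]

lemma curve_d1 {F : (ℝ × E) → G} (hF : ContDiff ℝ ((⊤:ℕ∞) : WithTop ℕ∞) F)
    {g g1 : ℝ → ℝ × E} (hg : ∀ t, HasDerivAt g (g1 t) t) (t : ℝ) :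
    HasDerivAt (fun t => F (g t)) (fderiv ℝ F (g t) (g1 t)) t :=
  ((hF.differentiable (by simp) (g t)).hasFDerivAt).comp_hasDerivAt t (hg t)

lemma curve_d2 {F : (ℝ × E) → G} (hF : ContDiff ℝ ((⊤:ℕ∞):WithTop ℕ∞) F)
    {g g1 g2 : ℝ → ℝ × E} (hg : ∀ t, HasDerivAt g (g1 t) t)
    (hg1 : ∀ t, HasDerivAt g1 (g2 t) t) (t : ℝ) :
    HasDerivAt (fun t => fderiv ℝ F (g t) (g1 t))
      (fderiv ℝ (fderiv ℝ F) (g t) (g1 t) (g1 t) + fderiv ℝ F (g t) (g2 t)) t := by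
  have hF' : ContDiff ℝ ((⊤:ℕ∞):WithTop ℕ∞) (fderiv ℝ F) := hF.fderiv_right (by simp)
  have hA : HasDerivAt (fun t => fderiv ℝ F (g t)) (fderiv ℝ (fderiv ℝ F) (g t) (g1 t)) t :=
    curve_d1 hF' hg t
  exact hA.clm_apply (hg1 t)

lemma ode_smooth {F : ℝ × E → E} (hF : ContDiff ℝ ((⊤:ℕ∞):WithTop ℕ∞) F)
    {y : ℝ → E} (hy : ∀ t, HasDerivAt y (F (t, y t)) t) :
    ContDiff ℝ ((⊤:ℕ∞):WithTop ℕ∞) y := by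
  rw [contDiff_infty]
  intro m
  induction m with
  | zero =>
    exact contDiff_zero.2 (continuous_iff_continuousAt.2
      fun t => (hy t).differentiableAt.continuousAt)
  | succ m ih =>
    rw [show ((m+1:ℕ) : WithTop ℕ∞) = (m:WithTop ℕ∞) + 1 by push_cast; rfl,
      contDiff_succ_iff_deriv]
    refine ⟨fun t => (hy t).differentiableAt, by simp, ?_⟩
    have hdy : deriv y = fun t => F (t, y t) := funext fun t => (hy t).deriv
    rw [hdy]
    exact (hF.of_le (by exact_mod_cast le_top)).comp (contDiff_id.prodMk ih)

/-- The Runge–Kutta order conditions `b·𝟙 = 1`, `b·c = 1/2`, `b·c^⊙2 = 1/3`,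
`b·(Ac) = 1/6` are sufficient for order `p = 3`. -/
theorem rk_order_three_of_conditions
    (s : ℕ) (A : Fin s → Fin s → ℝ) (hA : ∀ i j : Fin s, i ≤ j → A i j = 0)
    (b : Fin s → ℝ) (c : Fin s → ℝ) (hc : ∀ i, c i = ∑ j, A i j)
    (h1 : (∑ i, b i) = 1)
    (h2 : (∑ i, b i * c i) = 1 / 2)
    (h3 : (∑ i, b i * c i ^ 2) = 1 / 3)
    (h4 : (∑ i, ∑ j, b i * A i j * c j) = 1 / 6) :
    ∀ (n : ℕ) (f : ℝ → (Fin n → ℝ) → (Fin n → ℝ)),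
      ContDiff ℝ (⊤ : ℕ∞) (Function.uncurry f) →
      ∀ (t₀ : ℝ) (y₀ : Fin n → ℝ) (y : ℝ → (Fin n → ℝ)),
        (∀ t, HasDerivAt y (f t (y t)) t) → y t₀ = y₀ →
        ∀ k : ℝ → Fin s → (Fin n → ℝ),
          (∀ (h : ℝ) (i : Fin s),
            k h i = h • f (t₀ + c i * h) (y₀ + ∑ j, A i j • k h j)) →
          (fun h : ℝ => (y₀ + ∑ i, b i • k h i) - y (t₀ + h))
            =O[nhds 0] (fun h : ℝ => h ^ 4) := by
  intro n f hf t₀ y₀ y hy hy0 k hk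
  have hF : ContDiff ℝ ((⊤:ℕ∞):WithTop ℕ∞) (Function.uncurry f) := hf.of_le (by simp)
  have hk0 : ∀ i, k 0 i = 0 := fun i => by rw [hk]; simp
  -- smoothness of the stages, by strong induction on the stage index
  have hKsm : ∀ m : ℕ, ∀ i : Fin s, i.val < m →
      ContDiff ℝ ((⊤:ℕ∞):WithTop ℕ∞) (fun h => k h i) := by
    intro m
    induction m with
    | zero => intro i hi; omega
    | succ m ih =>
      intro i hi
      have hrw : (fun h => k h i)
          = fun h => h • Function.uncurry f (t₀ + c i * h, y₀ + ∑ j, A i j • k h j) :=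
        funext fun h => hk h i
      rw [hrw]
      apply ContDiff.smul contDiff_id
      apply hF.comp
      apply ContDiff.prodMk
      · exact contDiff_const.add (contDiff_const.mul contDiff_id)
      · apply contDiff_const.add
        apply ContDiff.sum
        intro j _
        rcases lt_or_ge j i with hj | hj
        · exact (ih j (by omega)).const_smul _
        · have h0 : A i j = 0 := hA i j hj
          simp only [h0, zero_smul]
          exact contDiff_const
  have hK : ∀ i : Fin s, ContDiff ℝ ((⊤:ℕ∞):WithTop ℕ∞) (fun h => k h i) :=
    fun i => hKsm (i.val + 1) i (Nat.lt_succ_self _)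
  -- abbreviations
  set F : ℝ × (Fin n → ℝ) → (Fin n → ℝ) := Function.uncurry f with hFdef
  set U : Fin s → ℝ → (Fin n → ℝ) :=
    fun i h => f (t₀ + c i * h) (y₀ + ∑ j, A i j • k h j) with hUdef
  set DU : Fin s → ℝ → (Fin n → ℝ) := fun i => deriv (U i) with hDUdef
  set DDU : Fin s → ℝ → (Fin n → ℝ) := fun i => deriv (DU i) with hDDUdef
  set D3U : Fin s → ℝ → (Fin n → ℝ) := fun i => deriv (DDU i) with hD3Udef
  have hkU : ∀ (h : ℝ) (i : Fin s), k h i = h • U i h := fun h i => hk h i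
  -- smoothness of U and derivatives
  have hUsm : ∀ i, ContDiff ℝ ((⊤:ℕ∞):WithTop ℕ∞) (U i) := by
    intro i
    have hcurve : ContDiff ℝ ((⊤:ℕ∞):WithTop ℕ∞)
        (fun h : ℝ => ((t₀ + c i * h, y₀ + ∑ j, A i j • k h j) : ℝ × (Fin n → ℝ))) :=
      (contDiff_const.add (contDiff_const.mul contDiff_id)).prodMk
        (contDiff_const.add (ContDiff.sum fun j _ => (hK j).const_smul _))
    exact hF.comp hcurve
  have hDUsm : ∀ i, ContDiff ℝ ((⊤:ℕ∞):WithTop ℕ∞) (DU i) :=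
    fun i => (contDiff_infty_iff_deriv.mp (hUsm i)).2
  have hDDUsm : ∀ i, ContDiff ℝ ((⊤:ℕ∞):WithTop ℕ∞) (DDU i) :=
    fun i => (contDiff_infty_iff_deriv.mp (hDUsm i)).2
  have hD3Usm : ∀ i, ContDiff ℝ ((⊤:ℕ∞):WithTop ℕ∞) (D3U i) :=
    fun i => (contDiff_infty_iff_deriv.mp (hDDUsm i)).2
  have hDU : ∀ i h, HasDerivAt (U i) (DU i h) h :=
    fun i h => ((hUsm i).differentiable (by simp) h).hasDerivAt
  have hDDU : ∀ i h, HasDerivAt (DU i) (DDU i h) h :=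
    fun i h => ((hDUsm i).differentiable (by simp) h).hasDerivAt
  have hD3U : ∀ i h, HasDerivAt (DDU i) (D3U i h) h :=
    fun i h => ((hDDUsm i).differentiable (by simp) h).hasDerivAt
  -- curves
  set Gc : Fin s → ℝ → ℝ × (Fin n → ℝ) :=
    fun i h => (t₀ + c i * h, y₀ + ∑ j, A i j • k h j) with hGcdef
  set GD : Fin s → ℝ → ℝ × (Fin n → ℝ) :=
    fun i h => (c i, ∑ j, A i j • (U j h + h • DU j h)) with hGDdef
  set GDD : Fin s → ℝ → ℝ × (Fin n → ℝ) :=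
    fun i h => ((0:ℝ), ∑ j, A i j • (DU j h + (h • DDU j h + (1:ℝ) • DU j h))) with hGDDdef
  -- derivative of each stage
  have hKd : ∀ (j : Fin s) (h : ℝ),
      HasDerivAt (fun h => k h j) (U j h + h • DU j h) h := by
    intro j h
    have hrw : (fun h => k h j) = fun h => h • U j h := funext fun h => hkU h j
    rw [hrw]
    have := (hasDerivAt_id h).fun_smul (hDU j h)
    simpa [add_comm] using this
  have hGd : ∀ i h, HasDerivAt (Gc i) (GD i h) h := by
    intro i h
    apply HasDerivAt.prodMk
    · simpa using ((hasDerivAt_id h).const_mul (c i)).const_add t₀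
    · exact (HasDerivAt.fun_sum fun j _ => ((hKd j h).fun_const_smul (A i j))).const_add y₀
  have hGDd : ∀ i h, HasDerivAt (GD i) (GDD i h) h := by
    intro i h
    apply HasDerivAt.prodMk
    · exact hasDerivAt_const h (c i)
    · apply HasDerivAt.fun_sum
      intro j _
      exact ((hDU j h).fun_add ((hasDerivAt_id h).fun_smul (hDDU j h))).fun_const_smul (A i j)
  have hUc : ∀ i, (U i) = fun h => F (Gc i h) := fun i => rfl
  have hUd : ∀ i h, HasDerivAt (U i) (fderiv ℝ F (Gc i h) (GD i h)) h := by
    intro i h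
    rw [hUc i]
    exact curve_d1 hF (hGd i) h
  have hDUeq : ∀ i h, DU i h = fderiv ℝ F (Gc i h) (GD i h) :=
    fun i h => (hUd i h).deriv
  have hDDUeq : ∀ i h, DDU i h
      = fderiv ℝ (fderiv ℝ F) (Gc i h) (GD i h) (GD i h) + fderiv ℝ F (Gc i h) (GDD i h) := by
    intro i h
    have hfun : (DU i) = fun h => fderiv ℝ F (Gc i h) (GD i h) := funext fun h => hDUeq i h
    have hd2 := curve_d2 hF (hGd i) (hGDd i) h
    rw [← hfun] at hd2
    exact hd2.deriv
  -- values at 0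
  set p₀ : ℝ × (Fin n → ℝ) := (t₀, y₀) with hp0def
  set v1 : Fin n → ℝ := f t₀ y₀ with hv1def
  set v2 : Fin n → ℝ := fderiv ℝ F p₀ (1, v1) with hv2def
  set Q11 : Fin n → ℝ := fderiv ℝ (fderiv ℝ F) p₀ (1, v1) (1, v1) with hQ11def
  set L02 : Fin n → ℝ := fderiv ℝ F p₀ ((0:ℝ), v2) with hL02def
  have hGc0 : ∀ i, Gc i 0 = p₀ := by
    intro i
    rw [hGcdef, hp0def]
    simp [hk0]
  have hU0 : ∀ i, U i 0 = v1 := by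
    intro i
    rw [hUdef, hv1def]
    simp [hk0]
  have hGD0 : ∀ i, GD i 0 = c i • ((1:ℝ), v1) := by
    intro i
    rw [hGDdef]
    have hsum : (∑ j, A i j • (U j 0 + (0:ℝ) • DU j 0)) = c i • v1 := by
      simp only [zero_smul, add_zero, hU0]
      rw [← Finset.sum_smul, ← hc i]
    simp only [hsum, Prod.smul_mk, smul_eq_mul, mul_one]
  have hDU0 : ∀ i, DU i 0 = c i • v2 := by
    intro i
    rw [hDUeq i 0, hGc0, hGD0, map_smul, hv2def]
  have hGDD0 : ∀ i, GDD i 0 = (2 * ∑ j, A i j * c j) • (((0:ℝ), v2) : ℝ × (Fin n → ℝ)) := by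
    intro i
    rw [hGDDdef]
    have hsum : (∑ j, A i j • (DU j 0 + ((0:ℝ) • DDU j 0 + (1:ℝ) • DU j 0)))
        = (2 * ∑ j, A i j * c j) • v2 := by
      simp only [zero_smul, one_smul, zero_add, hDU0]
      calc ∑ x, A i x • (c x • v2 + c x • v2)
          = ∑ x, (2 * (A i x * c x)) • v2 := Finset.sum_congr rfl fun j _ => by module
        _ = (∑ x, 2 * (A i x * c x)) • v2 := (Finset.sum_smul).symm
        _ = (2 * ∑ j, A i j * c j) • v2 := by rw [← Finset.mul_sum]
    simp only [hsum, Prod.smul_mk, smul_eq_mul, mul_zero, smul_zero]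
  have hDDU0 : ∀ i, DDU i 0
      = (c i ^ 2) • Q11 + (2 * ∑ j, A i j * c j) • L02 := by
    intro i
    rw [hDDUeq i 0, hGc0, hGD0, hGDD0, map_smul, map_smul, ContinuousLinearMap.smul_apply,
      map_smul, hQ11def, hL02def, smul_smul, ← sq]
  -- the exact solution side
  set Z1 : ℝ → Fin n → ℝ := fun h => f (t₀ + h) (y (t₀ + h)) with hZ1def
  set Γ : ℝ → ℝ × (Fin n → ℝ) := fun h => (t₀ + h, y (t₀ + h)) with hΓdef
  set Z2 : ℝ → Fin n → ℝ := fun h => fderiv ℝ F (Γ h) (1, Z1 h) with hZ2def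
  set Z3 : ℝ → Fin n → ℝ := fun h =>
    fderiv ℝ (fderiv ℝ F) (Γ h) (1, Z1 h) (1, Z1 h)
      + fderiv ℝ F (Γ h) ((0:ℝ), Z2 h) with hZ3def
  have hzd : ∀ h : ℝ, HasDerivAt (fun h => y (t₀ + h)) (Z1 h) h := by
    intro h
    have haff : HasDerivAt (fun x : ℝ => t₀ + x) 1 h := by
      simpa using (hasDerivAt_id h).const_add t₀
    have := (hy (t₀ + h)).scomp h haff
    simpa [hZ1def, Function.comp_def] using this
  have hΓd : ∀ h, HasDerivAt Γ ((1:ℝ), Z1 h) h := by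
    intro h
    apply HasDerivAt.prodMk
    · simpa using (hasDerivAt_id h).const_add t₀
    · exact hzd h
  have hZ1d : ∀ h, HasDerivAt Z1 (Z2 h) h := by
    intro h
    have : (Z1 : ℝ → Fin n → ℝ) = fun h => F (Γ h) := rfl
    rw [this]
    exact curve_d1 hF hΓd h
  have hΓ1d : ∀ h, HasDerivAt (fun h => (((1:ℝ), Z1 h) : ℝ × (Fin n → ℝ))) ((0:ℝ), Z2 h) h :=
    fun h => (hasDerivAt_const h (1:ℝ)).prodMk (hZ1d h)
  have hZ2d : ∀ h, HasDerivAt Z2 (Z3 h) h := by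
    intro h
    exact curve_d2 hF hΓd hΓ1d h
  have hΓ0 : Γ 0 = p₀ := by rw [hΓdef, hp0def]; simp [hy0]
  have hZ10 : Z1 0 = v1 := by rw [hZ1def, hv1def]; simp [hy0]
  have hZ20 : Z2 0 = v2 := by
    show fderiv ℝ F (Γ 0) (1, Z1 0) = v2
    rw [hΓ0, hZ10]
  have hZ30 : Z3 0 = Q11 + L02 := by
    show fderiv ℝ (fderiv ℝ F) (Γ 0) (1, Z1 0) (1, Z1 0)
        + fderiv ℝ F (Γ 0) ((0:ℝ), Z2 0) = Q11 + L02
    rw [hΓ0, hZ10, hZ20]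
  -- derivative chain for the difference function
  set d1 : ℝ → Fin n → ℝ :=
    fun h => (∑ i, b i • (U i h + h • DU i h)) - Z1 h with hd1def
  set d2 : ℝ → Fin n → ℝ :=
    fun h => (∑ i, b i • (DU i h + (h • DDU i h + (1:ℝ) • DU i h))) - Z2 h with hd2def
  set d3 : ℝ → Fin n → ℝ :=
    fun h => (∑ i, b i • (DDU i h + ((h • D3U i h + (1:ℝ) • DDU i h) + (1:ℝ) • DDU i h)))
      - Z3 h with hd3def
  have hΦd : ∀ h : ℝ,
      HasDerivAt (fun h : ℝ => (y₀ + ∑ i, b i • k h i) - y (t₀ + h)) (d1 h) h := by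
    intro h
    rw [hd1def]
    exact ((HasDerivAt.fun_sum fun i _ => (hKd i h).fun_const_smul (b i)).const_add y₀).fun_sub (hzd h)
  have hd1d : ∀ h, HasDerivAt d1 (d2 h) h := by
    intro h
    rw [hd1def, hd2def]
    refine HasDerivAt.sub ?_ (hZ1d h)
    exact HasDerivAt.fun_sum fun i _ =>
      ((hDU i h).fun_add ((hasDerivAt_id h).fun_smul (hDDU i h))).fun_const_smul (b i)
  have hD4U : ∀ i h, HasDerivAt (D3U i) (deriv (D3U i) h) h :=
    fun i h => ((hD3Usm i).differentiable (by simp) h).hasDerivAt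
  have hd2d : ∀ h, HasDerivAt d2 (d3 h) h := by
    intro h
    rw [hd2def, hd3def]
    refine HasDerivAt.sub ?_ (hZ2d h)
    exact HasDerivAt.fun_sum fun i _ =>
      ((hDDU i h).fun_add (((hasDerivAt_id h).fun_smul (hD3U i h)).fun_add
        ((hDDU i h).fun_const_smul (1:ℝ)))).fun_const_smul (b i)
  -- differentiability of d3 at 0
  have hZ3diff : Differentiable ℝ Z3 := by
    have hysm : ContDiff ℝ ((⊤:ℕ∞):WithTop ℕ∞) y := ode_smooth hF hy
    have hZ1sm : ContDiff ℝ ((⊤:ℕ∞):WithTop ℕ∞) Z1 := by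
      have hcurve : ContDiff ℝ ((⊤:ℕ∞):WithTop ℕ∞)
          (fun h : ℝ => ((t₀ + h, y (t₀ + h)) : ℝ × (Fin n → ℝ))) :=
        (contDiff_const.add contDiff_id).prodMk
          (hysm.comp (contDiff_const.add contDiff_id))
      exact hF.comp hcurve
    have e2 : Z2 = deriv Z1 := funext fun h => ((hZ1d h).deriv).symm
    have e3 : Z3 = deriv Z2 := funext fun h => ((hZ2d h).deriv).symm
    have hZ2sm : ContDiff ℝ ((⊤:ℕ∞):WithTop ℕ∞) Z2 := by
      rw [e2]; exact (contDiff_infty_iff_deriv.mp hZ1sm).2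
    have hZ3sm : ContDiff ℝ ((⊤:ℕ∞):WithTop ℕ∞) Z3 := by
      rw [e3]; exact (contDiff_infty_iff_deriv.mp hZ2sm).2
    exact hZ3sm.differentiable (by simp)
  have hDDUdiff : ∀ i, Differentiable ℝ (DDU i) :=
    fun i => (hDDUsm i).differentiable (by simp)
  have hD3Udiff : ∀ i, Differentiable ℝ (D3U i) :=
    fun i => (hD3Usm i).differentiable (by simp)
  have hd3diff : DifferentiableAt ℝ d3 0 := by
    rw [hd3def]
    refine DifferentiableAt.sub ?_ (hZ3diff 0)
    refine DifferentiableAt.fun_sum fun i _ => ?_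
    exact ((hDDUdiff i 0).add (((differentiableAt_fun_id.smul (hD3Udiff i 0)).add
      ((hDDUdiff i 0).const_smul (1:ℝ))).add
      ((hDDUdiff i 0).const_smul (1:ℝ)))).const_smul (b i)
  -- apply the Taylor estimate
  refine taylor4 hΦd hd1d hd2d hd3diff ?_ ?_ ?_ ?_
  · simp [hk0, hy0]
  · rw [hd1def]
    simp only [zero_smul, add_zero, hU0, hZ10]
    rw [← Finset.sum_smul, h1, one_smul, sub_self]
  · rw [hd2def]
    simp only [zero_smul, one_smul, zero_add, hDU0, hZ20]
    have hterm : ∀ i : Fin s, b i • (c i • v2 + c i • v2) = (2 * (b i * c i)) • v2 :=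
      fun i => by module
    rw [Finset.sum_congr rfl fun i _ => hterm i, ← Finset.sum_smul, ← Finset.mul_sum, h2]
    norm_num
  · rw [hd3def]
    simp only [zero_smul, one_smul, zero_add, hDDU0, hZ30]
    have hterm : ∀ i : Fin s,
        b i • ((c i ^ 2 • Q11 + (2 * ∑ j, A i j * c j) • L02)
          + ((c i ^ 2 • Q11 + (2 * ∑ j, A i j * c j) • L02)
            + (c i ^ 2 • Q11 + (2 * ∑ j, A i j * c j) • L02)))
        = (3 * (b i * c i ^ 2)) • Q11 + (6 * (b i * ∑ j, A i j * c j)) • L02 :=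
      fun i => by module
    rw [Finset.sum_congr rfl fun i _ => hterm i, Finset.sum_add_distrib,
      ← Finset.sum_smul, ← Finset.sum_smul, ← Finset.mul_sum, ← Finset.mul_sum, h3]
    have hAC : (∑ i, b i * ∑ j, A i j * c j) = 1/6 := by
      rw [← h4]
      refine Finset.sum_congr rfl fun i _ => ?_
      rw [Finset.mul_sum]
      exact Finset.sum_congr rfl fun j _ => (mul_assoc _ _ _).symm
    rw [hAC]
    norm_num
end

section
/- Let s ∈ ℕ, let A : Fin s → Fin s → ℝ be strictly lower-triangular (A i j = 0 whenever j ≥ i), let b : Fin s → ℝ, and let c := A·𝟙. If the eight conditions Σᵢ bᵢ = 1, Σᵢ bᵢcᵢ = 1/2, Σᵢ bᵢcᵢ² = 1/3, Σᵢⱼ bᵢAᵢⱼcⱼ = 1/6, Σᵢ bᵢcᵢ³ = 1/4, Σᵢⱼ bᵢcᵢAᵢⱼcⱼ = 1/8, Σᵢⱼ bᵢAᵢⱼcⱼ² = 1/12, and Σᵢⱼₗ bᵢAᵢⱼAⱼₗcₗ = 1/24 all hold, then the explicit Runge–Kutta method (A, b) has order 4: for every n, every smooth f : ℝ × (Fin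 n → ℝ) → (Fin n → ℝ), and every initial value problem with solution y, the output satisfies ‖y₁(h) − y(t₀ + h)‖ = O(h⁵) as h → 0. (The eight Runge–Kutta order conditions corresponding to the rooted trees of order ≤ 4 are sufficient for order p = 4.) -/
open Asymptotics
open scoped ContDiff

private lemma aux_mvt {E : Type*} [NormedAddCommGroup E] [NormedSpace ℝ E]
    (g : ℝ → E) (hg : ContDiff ℝ ∞ g) (h0 : g 0 = 0) (m : ℕ)
    (hO : (fun h => deriv g h) =O[nhds 0] fun h => h ^ m) :
    g =O[nhds 0] fun h : ℝ => h ^ (m + 1) := by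
  obtain ⟨C, hC, hev⟩ := hO.exists_pos
  rw [IsBigOWith, Metric.eventually_nhds_iff] at hev
  obtain ⟨δ, hδ, hball⟩ := hev
  rw [isBigO_iff]
  refine ⟨C, Metric.eventually_nhds_iff.mpr ⟨δ, hδ, fun {h} hh => ?_⟩⟩
  have hd : ∀ t ∈ Metric.closedBall (0:ℝ) ‖h‖,
      HasDerivWithinAt g (deriv g t) (Metric.closedBall (0:ℝ) ‖h‖) t := fun t _ =>
    ((hg.differentiable (by norm_num) t).hasDerivAt).hasDerivWithinAt
  have hb : ∀ t ∈ Metric.closedBall (0:ℝ) ‖h‖, ‖deriv g t‖ ≤ C * ‖h‖ ^ m := by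
    intro t ht
    simp only [Metric.mem_closedBall, Real.dist_eq, sub_zero] at ht
    have h1 : dist t (0:ℝ) < δ := by
      simp only [Real.dist_eq, sub_zero]
      calc |t| ≤ ‖h‖ := ht
      _ < δ := by simpa [Real.norm_eq_abs] using hh
    have := hball h1
    calc ‖deriv g t‖ ≤ C * ‖t ^ m‖ := this
      _ ≤ C * ‖h‖ ^ m := by
          rw [norm_pow]
          exact mul_le_mul_of_nonneg_left (pow_le_pow_left₀ (norm_nonneg t) ht m) hC.le
  have key := (convex_closedBall (0:ℝ) ‖h‖).norm_image_sub_le_of_norm_hasDerivWithin_le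
    hd hb (Metric.mem_closedBall_self (norm_nonneg h))
    (show h ∈ Metric.closedBall (0:ℝ) ‖h‖ by simp [Metric.mem_closedBall, Real.dist_eq, Real.norm_eq_abs])
  calc ‖g h‖ = ‖g h - g 0‖ := by rw [h0, sub_zero]
    _ ≤ C * ‖h‖ ^ m * ‖h - 0‖ := key
    _ = C * ‖h ^ (m+1)‖ := by rw [sub_zero, norm_pow]; ring

private lemma aux_bigO {E : Type*} [NormedAddCommGroup E] [NormedSpace ℝ E]
    (m : ℕ) : ∀ g : ℝ → E, ContDiff ℝ ∞ g →
    (∀ j ≤ m, iteratedDeriv j g 0 = 0) →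
    g =O[nhds 0] fun h : ℝ => h ^ (m + 1) := by
  induction m with
  | zero =>
    intro g hg hd
    refine aux_mvt g hg (by simpa using hd 0 le_rfl) 0 ?_
    have : ContinuousAt (deriv g) 0 :=
      (hg.continuous_deriv (by norm_num)).continuousAt
    simpa using this.isBigO_one ℝ
  | succ m ih =>
    intro g hg hd
    have hdg : ContDiff ℝ ∞ (deriv g) := (contDiff_infty_iff_deriv.mp hg).2
    have hO := ih (deriv g) hdg (fun j hj => by
      rw [← iteratedDeriv_succ']; exact hd (j+1) (by omega))
    exact aux_mvt g hg (by simpa using hd 0 (by omega)) (m+1) hO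

private lemma aux_sum_smul {n s : ℕ} (r : Fin s → ℝ) (g : Fin s → Fin n → ℝ)
    (v : Fin n → ℝ) (h : ∀ j, g j = r j • v) :
    (∑ j, g j) = (∑ j, r j) • v := by
  simp only [h, ← Finset.sum_smul]

set_option maxHeartbeats 1000000 in

private lemma sum_smul_one {s n : ℕ} (a r : Fin s → ℝ) (v : Fin n → ℝ) :
    (∑ j, a j • (r j • v)) = (∑ j, a j * r j) • v := by
  simp only [smul_smul, Finset.sum_smul]

private lemma sum_smul_two {s n : ℕ} (a r1 r2 : Fin s → ℝ) (v1 v2 : Fin n → ℝ) :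
    (∑ j, a j • (r1 j • v1 + r2 j • v2))
      = (∑ j, a j * r1 j) • v1 + (∑ j, a j * r2 j) • v2 := by
  simp only [smul_add, smul_smul, Finset.sum_add_distrib, Finset.sum_smul]

private lemma sum_smul_five {s n : ℕ} (a r1 r2 r3 r4 r5 : Fin s → ℝ)
    (v1 v2 v3 v4 v5 : Fin n → ℝ) :
    (∑ j, a j • (r1 j • v1 + r2 j • v2 + r3 j • v3 + r4 j • v4 + r5 j • v5))
      = (∑ j, a j * r1 j) • v1 + (∑ j, a j * r2 j) • v2 + (∑ j, a j * r3 j) • v3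
        + (∑ j, a j * r4 j) • v4 + (∑ j, a j * r5 j) • v5 := by
  simp only [smul_add, smul_smul, Finset.sum_add_distrib, Finset.sum_smul]

set_option maxHeartbeats 1000000 in
/-- The eight Runge–Kutta order conditions corresponding to the rooted trees of
order ≤ 4 are sufficient for order `p = 4`. -/
theorem rk_order_four_of_conditions
    (s : ℕ) (A : Fin s → Fin s → ℝ) (hA : ∀ i j : Fin s, i ≤ j → A i j = 0)
    (b : Fin s → ℝ) (c : Fin s → ℝ) (hc : ∀ i, c i = ∑ j, A i j)
    (h1 : (∑ i, b i) = 1)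
    (h2 : (∑ i, b i * c i) = 1 / 2)
    (h3 : (∑ i, b i * c i ^ 2) = 1 / 3)
    (h4 : (∑ i, ∑ j, b i * A i j * c j) = 1 / 6)
    (h5 : (∑ i, b i * c i ^ 3) = 1 / 4)
    (h6 : (∑ i, ∑ j, b i * c i * A i j * c j) = 1 / 8)
    (h7 : (∑ i, ∑ j, b i * A i j * c j ^ 2) = 1 / 12)
    (h8 : (∑ i, ∑ j, ∑ l, b i * A i j * A j l * c l) = 1 / 24) :
    ∀ (n : ℕ) (f : ℝ → (Fin n → ℝ) → (Fin n → ℝ)),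
      ContDiff ℝ (⊤ : ℕ∞) (Function.uncurry f) →
      ∀ (t₀ : ℝ) (y₀ : Fin n → ℝ) (y : ℝ → (Fin n → ℝ)),
        (∀ t, HasDerivAt y (f t (y t)) t) → y t₀ = y₀ →
        ∀ k : ℝ → Fin s → (Fin n → ℝ),
          (∀ (h : ℝ) (i : Fin s),
            k h i = h • f (t₀ + c i * h) (y₀ + ∑ j, A i j • k h j)) →
          (fun h : ℝ => (y₀ + ∑ i, b i • k h i) - y (t₀ + h))
            =O[nhds 0] (fun h : ℝ => h ^ 5) := by
  intro n f hf t₀ y₀ y hy hy0 k hk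
  set F : ℝ × (Fin n → ℝ) → (Fin n → ℝ) := Function.uncurry f with hFdef
  have hFs : ContDiff ℝ ∞ F := hf.of_le (by simp)
  set F1 := fderiv ℝ F with hF1def
  set F2 := fderiv ℝ F1 with hF2def
  set F3 := fderiv ℝ F2 with hF3def
  have hF1s : ContDiff ℝ ∞ F1 := hFs.fderiv_right (by norm_num)
  have hF2s : ContDiff ℝ ∞ F2 := hF1s.fderiv_right (by norm_num)
  letI : NormedAddCommGroup (ℝ × (Fin n → ℝ) →L[ℝ] ℝ × (Fin n → ℝ) →L[ℝ] ℝ × (Fin n → ℝ) →L[ℝ] Fin n → ℝ) :=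
    ContinuousLinearMap.toNormedAddCommGroup (𝕜 := ℝ) (𝕜₂ := ℝ) (E := ℝ × (Fin n → ℝ))
      (F := ℝ × (Fin n → ℝ) →L[ℝ] ℝ × (Fin n → ℝ) →L[ℝ] Fin n → ℝ) (σ₁₂ := RingHom.id ℝ)
  letI : NormedSpace ℝ (ℝ × (Fin n → ℝ) →L[ℝ] ℝ × (Fin n → ℝ) →L[ℝ] ℝ × (Fin n → ℝ) →L[ℝ] Fin n → ℝ) :=
    ContinuousLinearMap.toNormedSpace (𝕜 := ℝ) (𝕜₂ := ℝ) (𝕜' := ℝ) (E := ℝ × (Fin n → ℝ))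
      (F := ℝ × (Fin n → ℝ) →L[ℝ] ℝ × (Fin n → ℝ) →L[ℝ] Fin n → ℝ) (σ₁₂ := RingHom.id ℝ)
  have hF3s : ContDiff ℝ ∞ F3 := hF2s.fderiv_right (by norm_num)
  have hFd : ∀ x, HasFDerivAt F (F1 x) x :=
    fun x => (hFs.differentiable (by norm_num) x).hasFDerivAt
  have hF1d : ∀ x, HasFDerivAt F1 (F2 x) x :=
    fun x => (hF1s.differentiable (by norm_num) x).hasFDerivAt
  have hF2d : ∀ x, HasFDerivAt F2 (F3 x) x :=
    fun x => (hF2s.differentiable (by norm_num) x).hasFDerivAt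
  have hy' : ∀ t, HasDerivAt y (F (t, y t)) t := hy
  -- smoothness of y
  have hysm : ContDiff ℝ ∞ y := by
    rw [contDiff_infty]
    intro m
    induction m with
    | zero =>
      exact contDiff_zero.mpr (continuous_iff_continuousAt.mpr fun t => (hy' t).continuousAt)
    | succ m ih =>
      have : ((m + 1 : ℕ) : WithTop ℕ∞) = (m : WithTop ℕ∞) + 1 := by push_cast; rfl
      rw [this, contDiff_succ_iff_deriv]
      refine ⟨fun t => (hy' t).differentiableAt, by simp, ?_⟩
      have hdy : deriv y = fun t => F (t, y t) := funext fun t => (hy' t).deriv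
      rw [hdy]
      exact (hFs.of_le (by exact_mod_cast le_top)).comp (contDiff_id.prodMk ih)
  -- smoothness of the stages k
  have hkfun : ∀ i : Fin s, (fun h => k h i)
      = fun h => h • F (t₀ + c i * h, y₀ + ∑ j, A i j • k h j) :=
    fun i => funext fun h => hk h i
  have hksm : ∀ i : Fin s, ContDiff ℝ ∞ fun h => k h i := by
    have key : ∀ m : ℕ, ∀ i : Fin s, (i : ℕ) < m → ContDiff ℝ ∞ fun h => k h i := by
      intro m
      induction m with
      | zero => exact fun i hi => absurd hi (by omega)
      | succ m ih =>
        intro i hi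
        rw [hkfun i]
        refine contDiff_id.smul (hFs.comp (ContDiff.prodMk
          (contDiff_const.add (contDiff_const.mul contDiff_id))
          (contDiff_const.add (ContDiff.sum fun j _ => ?_))))
        by_cases hji : (j : ℕ) < (i : ℕ)
        · exact (ih j (by omega)).const_smul (A i j)
        · have hz : A i j = 0 := hA i j (Fin.le_def.mpr (by omega))
          simp only [hz, zero_smul]
          exact contDiff_const
    exact fun i => key s i i.isLt
  -- derivative ladder for k
  set k1 : Fin s → ℝ → (Fin n → ℝ) := fun i => deriv fun h => k h i with hk1def
  have hk1d : ∀ (i) (h : ℝ), HasDerivAt (fun h' => k h' i) (k1 i h) h :=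
    fun i h => ((hksm i).differentiable (by norm_num) h).hasDerivAt
  have hk1sm : ∀ i, ContDiff ℝ ∞ (k1 i) := fun i => (contDiff_infty_iff_deriv.mp (hksm i)).2
  set k2 : Fin s → ℝ → (Fin n → ℝ) := fun i => deriv (k1 i) with hk2def
  have hk2d : ∀ (i) (h : ℝ), HasDerivAt (k1 i) (k2 i h) h :=
    fun i h => ((hk1sm i).differentiable (by norm_num) h).hasDerivAt
  have hk2sm : ∀ i, ContDiff ℝ ∞ (k2 i) := fun i => (contDiff_infty_iff_deriv.mp (hk1sm i)).2
  set k3 : Fin s → ℝ → (Fin n → ℝ) := fun i => deriv (k2 i) with hk3def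
  have hk3d : ∀ (i) (h : ℝ), HasDerivAt (k2 i) (k3 i h) h :=
    fun i h => ((hk2sm i).differentiable (by norm_num) h).hasDerivAt
  have hk3sm : ∀ i, ContDiff ℝ ∞ (k3 i) := fun i => (contDiff_infty_iff_deriv.mp (hk2sm i)).2
  set P : Fin s → ℝ → ℝ × (Fin n → ℝ) :=
    fun i h => (t₀ + c i * h, y₀ + ∑ j, A i j • k h j) with hPdef
  set P1 : Fin s → ℝ → ℝ × (Fin n → ℝ) :=
    fun i h => (c i, ∑ j, A i j • k1 j h) with hP1def
  set P2 : Fin s → ℝ → ℝ × (Fin n → ℝ) :=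
    fun i h => ((0 : ℝ), ∑ j, A i j • k2 j h) with hP2def
  set P3 : Fin s → ℝ → ℝ × (Fin n → ℝ) :=
    fun i h => ((0 : ℝ), ∑ j, A i j • k3 j h) with hP3def
  have hPd : ∀ (i) (h : ℝ), HasDerivAt (P i) (P1 i h) h := by
    intro i h
    refine HasDerivAt.prodMk ?_ ?_
    · simpa using ((hasDerivAt_id h).const_mul (c i)).const_add t₀
    · exact (HasDerivAt.fun_sum fun j _ => (hk1d j h).const_smul (A i j)).const_add y₀
  have hP1d : ∀ (i) (h : ℝ), HasDerivAt (P1 i) (P2 i h) h := fun i h =>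
    HasDerivAt.prodMk (hasDerivAt_const h (c i)) (HasDerivAt.fun_sum fun j _ => (hk2d j h).const_smul (A i j))
  have hP2d : ∀ (i) (h : ℝ), HasDerivAt (P2 i) (P3 i h) h := fun i h =>
    HasDerivAt.prodMk (hasDerivAt_const h (0 : ℝ)) (HasDerivAt.fun_sum fun j _ => (hk3d j h).const_smul (A i j))
  set W1 : Fin s → ℝ → (Fin n → ℝ) := fun i h => F1 (P i h) (P1 i h) with hW1def
  set W2 : Fin s → ℝ → (Fin n → ℝ) :=
    fun i h => F2 (P i h) (P1 i h) (P1 i h) + F1 (P i h) (P2 i h) with hW2def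
  set W3 : Fin s → ℝ → (Fin n → ℝ) := fun i h =>
    ((F3 (P i h) (P1 i h) (P1 i h) + F2 (P i h) (P2 i h)) (P1 i h)
      + F2 (P i h) (P1 i h) (P2 i h))
    + (F2 (P i h) (P1 i h) (P2 i h) + F1 (P i h) (P3 i h)) with hW3def
  have hFP : ∀ (i) (h : ℝ), HasDerivAt (fun h' => F (P i h')) (W1 i h) h :=
    fun i h => (hFd (P i h)).comp_hasDerivAt h (hPd i h)
  have hW1d : ∀ (i) (h : ℝ), HasDerivAt (W1 i) (W2 i h) h :=
    fun i h => ((hF1d (P i h)).comp_hasDerivAt h (hPd i h)).clm_apply (hP1d i h)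
  have hW2d : ∀ (i) (h : ℝ), HasDerivAt (W2 i) (W3 i h) h := by
    intro i h
    refine HasDerivAt.add ?_ ?_
    · exact (((hF2d (P i h)).comp_hasDerivAt h (hPd i h)).clm_apply (hP1d i h)).clm_apply
        (hP1d i h)
    · exact ((hF1d (P i h)).comp_hasDerivAt h (hPd i h)).clm_apply (hP2d i h)
  have hk1f : ∀ (i) (h : ℝ), k1 i h = h • W1 i h + F (P i h) := by
    intro i h
    have H : HasDerivAt (fun h' => k h' i) (h • W1 i h + (1:ℝ) • F (P i h)) h := by
      rw [hkfun i]
      exact (hasDerivAt_id h).smul (hFP i h)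
    have heq := (hk1d i h).unique H
    rw [heq]; module
  have hk1fun : ∀ i, k1 i = fun h => h • W1 i h + F (P i h) := fun i => funext (hk1f i)
  have hk2f : ∀ (i) (h : ℝ), k2 i h = h • W2 i h + (2:ℝ) • W1 i h := by
    intro i h
    have H : HasDerivAt (k1 i) ((h • W2 i h + (1:ℝ) • W1 i h) + W1 i h) h := by
      rw [hk1fun i]
      exact ((hasDerivAt_id h).smul (hW1d i h)).add (hFP i h)
    have heq := (hk2d i h).unique H
    rw [heq]; module
  have hk2fun : ∀ i, k2 i = fun h => h • W2 i h + (2:ℝ) • W1 i h := fun i => funext (hk2f i)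
  have hk3f : ∀ (i) (h : ℝ), k3 i h = h • W3 i h + (3:ℝ) • W2 i h := by
    intro i h
    have H : HasDerivAt (k2 i) ((h • W3 i h + (1:ℝ) • W2 i h) + (2:ℝ) • W2 i h) h := by
      rw [hk2fun i]
      exact ((hasDerivAt_id h).smul (hW2d i h)).add ((hW1d i h).const_smul (2:ℝ))
    have heq := (hk3d i h).unique H
    rw [heq]; module
  have hk3fun : ∀ i, k3 i = fun h => h • W3 i h + (3:ℝ) • W2 i h := fun i => funext (hk3f i)
  have hPsm : ∀ i, ContDiff ℝ ∞ (P i) := fun i =>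
    (contDiff_const.add (contDiff_const.mul contDiff_id)).prodMk
      (contDiff_const.add (ContDiff.sum fun j _ => (hksm j).const_smul (A i j)))
  have hP1sm : ∀ i, ContDiff ℝ ∞ (P1 i) := fun i =>
    contDiff_const.prodMk (ContDiff.sum fun j _ => (hk1sm j).const_smul (A i j))
  have hP2sm : ∀ i, ContDiff ℝ ∞ (P2 i) := fun i =>
    contDiff_const.prodMk (ContDiff.sum fun j _ => (hk2sm j).const_smul (A i j))
  have hP3sm : ∀ i, ContDiff ℝ ∞ (P3 i) := fun i =>
    contDiff_const.prodMk (ContDiff.sum fun j _ => (hk3sm j).const_smul (A i j))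
  have hW3diff : ∀ i, DifferentiableAt ℝ (W3 i) 0 := by
    intro i
    have dP1 : DifferentiableAt ℝ (P1 i) 0 := ((hP1sm i).differentiable (by norm_num)) 0
    have dP2 : DifferentiableAt ℝ (P2 i) 0 := ((hP2sm i).differentiable (by norm_num)) 0
    have dP3 : DifferentiableAt ℝ (P3 i) 0 := ((hP3sm i).differentiable (by norm_num)) 0
    have dF1P : DifferentiableAt ℝ (fun h => F1 (P i h)) 0 :=
      ((hF1s.comp (hPsm i)).differentiable (by norm_num)) 0
    have dF2P : DifferentiableAt ℝ (fun h => F2 (P i h)) 0 :=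
      ((hF2s.comp (hPsm i)).differentiable (by norm_num)) 0
    have dF3P : DifferentiableAt ℝ (fun h => F3 (P i h)) 0 :=
      ((hF3s.comp (hPsm i)).differentiable (by norm_num)) 0
    simp only [hW3def]
    exact (((((dF3P.clm_apply dP1).clm_apply dP1).add (dF2P.clm_apply dP2)).clm_apply dP1).add
      ((dF2P.clm_apply dP1).clm_apply dP2)).add
      (((dF2P.clm_apply dP1).clm_apply dP2).add (dF1P.clm_apply dP3))
  have hk4v : ∀ i, deriv (k3 i) 0 = (4:ℝ) • W3 i 0 := by
    intro i
    have hW3_0 : HasDerivAt (W3 i) (deriv (W3 i) 0) 0 := (hW3diff i).hasDerivAt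
    have H : HasDerivAt (k3 i)
        (((0:ℝ) • deriv (W3 i) 0 + (1:ℝ) • W3 i 0) + (3:ℝ) • W3 i 0) 0 := by
      rw [hk3fun i]
      exact ((hasDerivAt_id 0).smul hW3_0).add ((hW2d i 0).const_smul (3:ℝ))
    rw [H.deriv]; module
  -- y-side ladder
  set y1 := deriv y with hy1def
  have hyd1 : ∀ t, HasDerivAt y (y1 t) t :=
    fun t => ((hysm.differentiable (by norm_num)) t).hasDerivAt
  have hy1f : ∀ t, y1 t = F (t, y t) := fun t => (hy' t).deriv
  set Q : ℝ → ℝ × (Fin n → ℝ) := fun t => (t, y t) with hQdef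
  set Q1 : ℝ → ℝ × (Fin n → ℝ) := fun t => ((1:ℝ), F (Q t)) with hQ1def
  have hy1fun : y1 = fun t => F (Q t) := funext fun t => hy1f t
  have hQd : ∀ t, HasDerivAt Q (Q1 t) t := fun t => HasDerivAt.prodMk (hasDerivAt_id t) (hy' t)
  set Y2 : ℝ → (Fin n → ℝ) := fun t => F1 (Q t) (Q1 t) with hY2def
  have hy1d : ∀ t, HasDerivAt y1 (Y2 t) t := by
    intro t
    rw [hy1fun]
    exact (hFd (Q t)).comp_hasDerivAt t (hQd t)
  set Q2 : ℝ → ℝ × (Fin n → ℝ) := fun t => ((0:ℝ), Y2 t) with hQ2def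
  have hQ1d : ∀ t, HasDerivAt Q1 (Q2 t) t := fun t =>
    HasDerivAt.prodMk (hasDerivAt_const t (1:ℝ)) ((hFd (Q t)).comp_hasDerivAt t (hQd t))
  set Y3 : ℝ → (Fin n → ℝ) :=
    fun t => F2 (Q t) (Q1 t) (Q1 t) + F1 (Q t) (Q2 t) with hY3def
  have hY2d : ∀ t, HasDerivAt Y2 (Y3 t) t := fun t =>
    ((hF1d (Q t)).comp_hasDerivAt t (hQd t)).clm_apply (hQ1d t)
  set Q3 : ℝ → ℝ × (Fin n → ℝ) := fun t => ((0:ℝ), Y3 t) with hQ3def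
  have hQ2d : ∀ t, HasDerivAt Q2 (Q3 t) t := fun t =>
    HasDerivAt.prodMk (hasDerivAt_const t (0:ℝ)) (hY2d t)
  set Y4 : ℝ → (Fin n → ℝ) := fun t =>
    ((F3 (Q t) (Q1 t) (Q1 t) + F2 (Q t) (Q2 t)) (Q1 t) + F2 (Q t) (Q1 t) (Q2 t))
    + (F2 (Q t) (Q1 t) (Q2 t) + F1 (Q t) (Q3 t)) with hY4def
  have hY3d : ∀ t, HasDerivAt Y3 (Y4 t) t := by
    intro t
    simp only [hY3def, hY4def]
    exact ((((hF2d (Q t)).comp_hasDerivAt t (hQd t)).clm_apply (hQ1d t)).clm_apply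
      (hQ1d t)).add (((hF1d (Q t)).comp_hasDerivAt t (hQd t)).clm_apply (hQ2d t))
  -- the local error function and its derivatives
  have hshift : ∀ (g gd : ℝ → (Fin n → ℝ)), (∀ t, HasDerivAt g (gd t) t) →
      ∀ h : ℝ, HasDerivAt (fun h' => g (t₀ + h')) (gd (t₀ + h)) h := by
    intro g gd hg h
    have := (hg (t₀ + h)).scomp (x := h) ((hasDerivAt_id h).const_add t₀)
    simpa [Function.comp_def] using this
  set G0 : ℝ → (Fin n → ℝ) := fun h => (y₀ + ∑ i, b i • k h i) - y (t₀ + h) with hG0def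
  set G1 : ℝ → (Fin n → ℝ) := fun h => (∑ i, b i • k1 i h) - y1 (t₀ + h) with hG1def
  set G2 : ℝ → (Fin n → ℝ) := fun h => (∑ i, b i • k2 i h) - Y2 (t₀ + h) with hG2def
  set G3 : ℝ → (Fin n → ℝ) := fun h => (∑ i, b i • k3 i h) - Y3 (t₀ + h) with hG3def
  have hG0sm : ContDiff ℝ ∞ G0 :=
    (contDiff_const.add (ContDiff.sum fun i _ => (hksm i).const_smul (b i))).sub
      (hysm.comp (contDiff_const.add contDiff_id))
  have hG0d : ∀ h, HasDerivAt G0 (G1 h) h := by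
    intro h
    simp only [hG0def, hG1def]
    exact ((HasDerivAt.fun_sum fun i _ => (hk1d i h).const_smul (b i)).const_add y₀).sub
      (hshift y y1 hyd1 h)
  have hG1d : ∀ h, HasDerivAt G1 (G2 h) h := by
    intro h
    simp only [hG1def, hG2def]
    exact (HasDerivAt.fun_sum fun i _ => (hk2d i h).const_smul (b i)).sub
      (hshift y1 Y2 hy1d h)
  have hG2d : ∀ h, HasDerivAt G2 (G3 h) h := by
    intro h
    simp only [hG2def, hG3def]
    exact (HasDerivAt.fun_sum fun i _ => (hk3d i h).const_smul (b i)).sub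
      (hshift Y2 Y3 hY2d h)
  have hG3d0 : HasDerivAt G3 ((∑ i, b i • deriv (k3 i) 0) - Y4 (t₀ + 0)) 0 := by
    simp only [hG3def]
    exact (HasDerivAt.fun_sum fun i _ =>
        (((hk3sm i).differentiable (by norm_num) 0).hasDerivAt).const_smul (b i)).sub
      (hshift Y3 Y4 hY3d 0)
  have hD1 : deriv G0 = G1 := funext fun h => (hG0d h).deriv
  have hD2 : deriv G1 = G2 := funext fun h => (hG1d h).deriv
  have hD3 : deriv G2 = G3 := funext fun h => (hG2d h).deriv
  -- values at the base point
  set p0 : ℝ × (Fin n → ℝ) := (t₀, y₀) with hp0def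
  set a1 : Fin n → ℝ := F p0 with ha1def
  set v : ℝ × (Fin n → ℝ) := ((1:ℝ), a1) with hvdef
  set a2 : Fin n → ℝ := F1 p0 v with ha2def
  set w : ℝ × (Fin n → ℝ) := ((0:ℝ), a2) with hwdef
  set a3 : Fin n → ℝ := F2 p0 v v with ha3def
  set a4 : Fin n → ℝ := F1 p0 w with ha4def
  set w3 : ℝ × (Fin n → ℝ) := ((0:ℝ), a3) with hw3def
  set w4 : ℝ × (Fin n → ℝ) := ((0:ℝ), a4) with hw4def
  set a5 : Fin n → ℝ := F3 p0 v v v with ha5def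
  set a6 : Fin n → ℝ := F2 p0 w v with ha6def
  set a7 : Fin n → ℝ := F2 p0 v w with ha7def
  set a8 : Fin n → ℝ := F1 p0 w3 with ha8def
  set a9 : Fin n → ℝ := F1 p0 w4 with ha9def
  set d : Fin s → ℝ := fun i => ∑ j, A i j * c j with hddef
  set ee : Fin s → ℝ := fun i => ∑ j, A i j * (c j * c j) with heedef
  set qq : Fin s → ℝ := fun i => ∑ j, A i j * d j with hqqdef
  have hk00 : ∀ i, k 0 i = 0 := fun i => by rw [hk 0 i, zero_smul]
  have hP0 : ∀ i, P i 0 = p0 := by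
    intro i
    simp only [hPdef, hp0def, hk00, smul_zero, Finset.sum_const_zero, add_zero, mul_zero]
  have hk10 : ∀ i, k1 i 0 = a1 := by
    intro i
    rw [hk1f i 0, hP0 i, zero_smul, zero_add, ha1def]
  have hP10 : ∀ i, P1 i 0 = c i • v := by
    intro i
    simp only [hP1def, hvdef, Prod.smul_mk, smul_eq_mul, mul_one]
    congr 1
    simp only [hk10]
    rw [← Finset.sum_smul, ← hc i]
  have hW10 : ∀ i, W1 i 0 = c i • a2 := by
    intro i
    simp only [hW1def, hP0, hP10, map_smul, ha2def]
  have hk20 : ∀ i, k2 i 0 = (2 * c i) • a2 := by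
    intro i
    rw [hk2f i 0, hW10 i]
    module
  have hP20 : ∀ i, P2 i 0 = (2 * d i) • w := by
    intro i
    simp only [hP2def, hwdef, Prod.smul_mk, smul_eq_mul, mul_zero]
    congr 1
    simp only [hk20]
    rw [sum_smul_one]
    congr 1
    simp only [hddef]
    rw [Finset.mul_sum]
    exact Finset.sum_congr rfl fun j _ => by ring
  have hW20 : ∀ i, W2 i 0 = (c i * c i) • a3 + (2 * d i) • a4 := by
    intro i
    simp only [hW2def, hP0, hP10, hP20, map_smul, ContinuousLinearMap.smul_apply,
      smul_smul, ha3def, ha4def]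
  have hk30 : ∀ i, k3 i 0 = (3 * (c i * c i)) • a3 + (6 * d i) • a4 := by
    intro i
    rw [hk3f i 0, hW20 i]
    module
  have hP30 : ∀ i, P3 i 0 = (3 * ee i) • w3 + (6 * qq i) • w4 := by
    intro i
    simp only [hP3def, hw3def, hw4def, Prod.smul_mk, Prod.mk_add_mk, smul_eq_mul,
      mul_zero, add_zero]
    congr 1
    simp only [hk30]
    rw [sum_smul_two]
    congr 1
    · congr 1
      simp only [heedef]
      rw [Finset.mul_sum]
      exact Finset.sum_congr rfl fun j _ => by ring
    · congr 1
      simp only [hqqdef]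
      rw [Finset.mul_sum]
      exact Finset.sum_congr rfl fun j _ => by ring
  have hW30 : ∀ i, W3 i 0 = (c i * c i * c i) • a5 + (2 * (d i * c i)) • a6
      + (4 * (c i * d i)) • a7 + (3 * ee i) • a8 + (6 * qq i) • a9 := by
    intro i
    simp only [hW3def, hP0, hP10, hP20, hP30, map_smul, map_add,
      ContinuousLinearMap.add_apply, ContinuousLinearMap.smul_apply, smul_smul,
      ha5def, ha6def, ha7def, ha8def, ha9def]
    module
  have hk4full : ∀ i, deriv (k3 i) 0 = (4 * (c i * c i * c i)) • a5
      + (8 * (d i * c i)) • a6 + (16 * (c i * d i)) • a7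
      + (12 * ee i) • a8 + (24 * qq i) • a9 := by
    intro i
    rw [hk4v i, hW30 i]
    module
  -- y-side values at t₀
  have hQ0 : Q t₀ = p0 := by simp only [hQdef, hp0def, hy0]
  have hQ10 : Q1 t₀ = v := by simp only [hQ1def, hQ0, hvdef, ha1def]
  have hY20 : Y2 t₀ = a2 := by simp only [hY2def, hQ0, hQ10, ha2def]
  have hQ20 : Q2 t₀ = w := by simp only [hQ2def, hY20, hwdef]
  have hY30 : Y3 t₀ = a3 + a4 := by simp only [hY3def, hQ0, hQ10, hQ20, ha3def, ha4def]
  have hQ30 : Q3 t₀ = w3 + w4 := by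
    simp only [hQ3def, hY30, hw3def, hw4def, Prod.mk_add_mk, add_zero]
  have hY40 : Y4 t₀ = a5 + a6 + a7 + (a7 + (a8 + a9)) := by
    simp only [hY4def, hQ0, hQ10, hQ20, hQ30, ContinuousLinearMap.add_apply, map_add,
      ha5def, ha6def, ha7def, ha8def, ha9def]
  -- scalar consequences of the order conditions
  have hbd : (∑ i, b i * d i) = 1 / 6 := by
    rw [← h4]
    refine Finset.sum_congr rfl fun i _ => ?_
    simp only [hddef]
    rw [Finset.mul_sum]
    exact Finset.sum_congr rfl fun j _ => by ring
  have hbcd : (∑ i, b i * c i * d i) = 1 / 8 := by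
    rw [← h6]
    refine Finset.sum_congr rfl fun i _ => ?_
    simp only [hddef]
    rw [Finset.mul_sum]
    exact Finset.sum_congr rfl fun j _ => by ring
  have hbe : (∑ i, b i * ee i) = 1 / 12 := by
    rw [← h7]
    refine Finset.sum_congr rfl fun i _ => ?_
    simp only [heedef]
    rw [Finset.mul_sum]
    exact Finset.sum_congr rfl fun j _ => by ring
  have hbq : (∑ i, b i * qq i) = 1 / 24 := by
    rw [← h8]
    refine Finset.sum_congr rfl fun i _ => ?_
    simp only [hqqdef]
    rw [Finset.mul_sum]
    refine Finset.sum_congr rfl fun j _ => ?_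
    simp only [hddef]
    rw [Finset.mul_sum, Finset.mul_sum]
    exact Finset.sum_congr rfl fun l _ => by ring
  have S2 : (∑ i, b i * (2 * c i)) = 1 := by
    calc (∑ i, b i * (2 * c i)) = ∑ i, 2 * (b i * c i) :=
          Finset.sum_congr rfl fun i _ => by ring
      _ = 2 * ∑ i, b i * c i := (Finset.mul_sum _ _ _).symm
      _ = 1 := by rw [h2]; norm_num
  have S3a : (∑ i, b i * (3 * (c i * c i))) = 1 := by
    calc (∑ i, b i * (3 * (c i * c i))) = ∑ i, 3 * (b i * c i ^ 2) :=
          Finset.sum_congr rfl fun i _ => by ring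
      _ = 3 * ∑ i, b i * c i ^ 2 := (Finset.mul_sum _ _ _).symm
      _ = 1 := by rw [h3]; norm_num
  have S3b : (∑ i, b i * (6 * d i)) = 1 := by
    calc (∑ i, b i * (6 * d i)) = ∑ i, 6 * (b i * d i) :=
          Finset.sum_congr rfl fun i _ => by ring
      _ = 6 * ∑ i, b i * d i := (Finset.mul_sum _ _ _).symm
      _ = 1 := by rw [hbd]; norm_num
  have S5 : (∑ i, b i * (4 * (c i * c i * c i))) = 1 := by
    calc (∑ i, b i * (4 * (c i * c i * c i))) = ∑ i, 4 * (b i * c i ^ 3) :=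
          Finset.sum_congr rfl fun i _ => by ring
      _ = 4 * ∑ i, b i * c i ^ 3 := (Finset.mul_sum _ _ _).symm
      _ = 1 := by rw [h5]; norm_num
  have S6 : (∑ i, b i * (8 * (d i * c i))) = 1 := by
    calc (∑ i, b i * (8 * (d i * c i))) = ∑ i, 8 * (b i * c i * d i) :=
          Finset.sum_congr rfl fun i _ => by ring
      _ = 8 * ∑ i, b i * c i * d i := (Finset.mul_sum _ _ _).symm
      _ = 1 := by rw [hbcd]; norm_num
  have S7 : (∑ i, b i * (16 * (c i * d i))) = 2 := by
    calc (∑ i, b i * (16 * (c i * d i))) = ∑ i, 16 * (b i * c i * d i) :=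
          Finset.sum_congr rfl fun i _ => by ring
      _ = 16 * ∑ i, b i * c i * d i := (Finset.mul_sum _ _ _).symm
      _ = 2 := by rw [hbcd]; norm_num
  have S8 : (∑ i, b i * (12 * ee i)) = 1 := by
    calc (∑ i, b i * (12 * ee i)) = ∑ i, 12 * (b i * ee i) :=
          Finset.sum_congr rfl fun i _ => by ring
      _ = 12 * ∑ i, b i * ee i := (Finset.mul_sum _ _ _).symm
      _ = 1 := by rw [hbe]; norm_num
  have S9 : (∑ i, b i * (24 * qq i)) = 1 := by
    calc (∑ i, b i * (24 * qq i)) = ∑ i, 24 * (b i * qq i) :=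
          Finset.sum_congr rfl fun i _ => by ring
      _ = 24 * ∑ i, b i * qq i := (Finset.mul_sum _ _ _).symm
      _ = 1 := by rw [hbq]; norm_num
  -- the five vanishing derivatives
  have hv0 : G0 0 = 0 := by
    simp only [hG0def, hk00, smul_zero, Finset.sum_const_zero, add_zero]
    rw [hy0, sub_self]
  have hv1 : G1 0 = 0 := by
    have hy10 : y1 (t₀ + 0) = a1 := by
      rw [add_zero, hy1f t₀, hy0, ha1def, hp0def]
    simp only [hG1def, hk10, hy10]
    rw [← Finset.sum_smul, h1, one_smul, sub_self]
  have hv2 : G2 0 = 0 := by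
    have hY2t : Y2 (t₀ + 0) = a2 := by rw [add_zero, hY20]
    simp only [hG2def, hk20, hY2t]
    rw [sum_smul_one, S2, one_smul, sub_self]
  have hv3 : G3 0 = 0 := by
    have hY3t : Y3 (t₀ + 0) = a3 + a4 := by rw [add_zero, hY30]
    simp only [hG3def, hk30, hY3t]
    rw [sum_smul_two, S3a, S3b, one_smul, one_smul, sub_self]
  have hv4 : deriv G3 0 = 0 := by
    rw [hG3d0.deriv]
    have hY4t : Y4 (t₀ + 0) = a5 + a6 + a7 + (a7 + (a8 + a9)) := by rw [add_zero, hY40]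
    simp only [hk4full, hY4t]
    rw [sum_smul_five, S5, S6, S7, S8, S9]
    module
  have hders : ∀ j ≤ 4, iteratedDeriv j G0 0 = 0 := by
    intro j hj
    interval_cases j
    · rw [iteratedDeriv_zero]; exact hv0
    · rw [iteratedDeriv_one, hD1]; exact hv1
    · show iteratedDeriv (1 + 1) G0 0 = 0
      rw [iteratedDeriv_succ, iteratedDeriv_one, hD1, hD2]; exact hv2
    · show iteratedDeriv (2 + 1) G0 0 = 0
      rw [iteratedDeriv_succ]
      show deriv (iteratedDeriv (1 + 1) G0) 0 = 0
      rw [iteratedDeriv_succ, iteratedDeriv_one, hD1, hD2, hD3]; exact hv3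
    · show iteratedDeriv (3 + 1) G0 0 = 0
      rw [iteratedDeriv_succ]
      show deriv (iteratedDeriv (2 + 1) G0) 0 = 0
      rw [iteratedDeriv_succ]
      show deriv (deriv (iteratedDeriv (1 + 1) G0)) 0 = 0
      rw [iteratedDeriv_succ, iteratedDeriv_one, hD1, hD2, hD3]; exact hv4
  exact aux_bigO 4 G0 hG0sm hders
end

section
/- Let p, s ∈ ℕ, let A : Fin s → Fin s → ℝ be strictly lower-triangular (A i j = 0 whenever j ≥ i), and let b : Fin s → ℝ. Suppose the explicit Runge–Kutta method (A, b) has order p, in the sense that for every n, every smooth f : ℝ × (Fin n → ℝ) → (Fin n → ℝ), every t₀, y₀, and every differentiable y with y′(t) = f(t, y(t)) and y(t₀) = y₀, the output satisfies ‖y₁(h) − y(t₀ + h)‖ = O(h^{p+1}) as h → 0. Then s ≥ p. (Theorem 1.26: any explicit Runge–Kutta method of order p must have at least p stages.) -/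
open Asymptotics Polynomial Filter

private lemma coeff_eq_zero_of_isBigO :
    ∀ (m : ℕ) (P : Polynomial ℝ),
      (fun h : ℝ => P.eval h) =O[nhdsWithin 0 {(0:ℝ)}ᶜ] (fun h : ℝ => h ^ m) →
      ∀ j < m, P.coeff j = 0 := by
  intro m
  induction m with
  | zero => intro P _ j hj; omega
  | succ m ih =>
    intro P hO j hj
    have h0 : P.eval 0 = 0 := by
      have t1 : Tendsto (fun h : ℝ => P.eval h) (nhdsWithin 0 {(0:ℝ)}ᶜ) (nhds (P.eval 0)) :=
        ((P.continuous_aeval.tendsto 0).mono_left nhdsWithin_le_nhds)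
      have t2 : Tendsto (fun h : ℝ => P.eval h) (nhdsWithin 0 {(0:ℝ)}ᶜ) (nhds 0) := by
        apply hO.trans_tendsto
        have : Tendsto (fun h : ℝ => h ^ (m+1)) (nhds 0) (nhds ((0:ℝ) ^ (m+1))) :=
          (continuous_pow (m+1)).tendsto 0
        simpa using this.mono_left nhdsWithin_le_nhds
      exact tendsto_nhds_unique t1 t2
    have hc0 : P.coeff 0 = 0 := by rwa [coeff_zero_eq_eval_zero]
    have hPX : P.divX * X = P := by
      have := P.divX_mul_X_add
      rwa [hc0, map_zero, add_zero] at this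
    have hOd : (fun h : ℝ => (P.divX).eval h) =O[nhdsWithin 0 {(0:ℝ)}ᶜ]
        (fun h : ℝ => h ^ m) := by
      rcases hO.bound with ⟨C, hC⟩
      rw [isBigO_iff]
      refine ⟨C, ?_⟩
      filter_upwards [hC, self_mem_nhdsWithin] with h hh hne
      have hne' : (h : ℝ) ≠ 0 := hne
      have habs : 0 < |h| := abs_pos.mpr hne'
      have hPe : P.eval h = (P.divX).eval h * h := by
        conv_lhs => rw [← hPX]
        simp
      rw [hPe] at hh
      have hh' : |(P.divX).eval h| * |h| ≤ C * |h| ^ (m+1) := by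
        simpa [abs_mul, abs_pow] using hh
      have h1 : |(P.divX).eval h| * |h| ≤ (C * |h| ^ m) * |h| := by
        calc |(P.divX).eval h| * |h| ≤ C * |h| ^ (m+1) := hh'
          _ = (C * |h| ^ m) * |h| := by ring
      have := le_of_mul_le_mul_right h1 habs
      simpa [abs_pow] using this
    rcases j with _ | j
    · exact hc0
    · have := ih P.divX hOd j (by omega)
      rwa [coeff_divX] at this

/-- Any explicit Runge–Kutta method of order `p` must have at least `p`
stages. -/
theorem rk_order_barrier
    (p s : ℕ) (A : Fin s → Fin s → ℝ) (hA : ∀ i j : Fin s, i ≤ j → A i j = 0)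
    (b : Fin s → ℝ)
    (horder : ∀ (n : ℕ) (f : ℝ → (Fin n → ℝ) → (Fin n → ℝ)),
      ContDiff ℝ (⊤ : ℕ∞) (Function.uncurry f) →
      ∀ (t₀ : ℝ) (y₀ : Fin n → ℝ) (y : ℝ → (Fin n → ℝ)),
        (∀ t, HasDerivAt y (f t (y t)) t) → y t₀ = y₀ →
        ∀ k : ℝ → Fin s → (Fin n → ℝ),
          (∀ (h : ℝ) (i : Fin s),
            k h i = h • f (t₀ + (∑ j, A i j) * h) (y₀ + ∑ j, A i j • k h j)) →
          (fun h : ℝ => (y₀ + ∑ i, b i • k h i) - y (t₀ + h))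
            =O[nhds 0] (fun h : ℝ => h ^ (p + 1))) :
    s ≥ p := by
  by_contra hs
  push_neg at hs
  have hp1 : 1 ≤ p := by omega
  -- iterated vectors v m = A^m · 1
  set v : ℕ → Fin s → ℝ :=
    fun m => (fun (w : Fin s → ℝ) (i : Fin s) => ∑ j, A i j * w j)^[m] (fun _ => 1) with hv_def
  have hv0 : ∀ i, v 0 i = 1 := fun i => rfl
  have hvs : ∀ m i, v (m+1) i = ∑ j, A i j * v m j := by
    intro m i
    simp only [hv_def, Function.iterate_succ_apply']
  have hvanish : ∀ m (i : Fin s), (i : ℕ) < m → v m i = 0 := by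
    intro m
    induction m with
    | zero => intro i hi; omega
    | succ m ih =>
      intro i hi
      rw [hvs]
      apply Finset.sum_eq_zero
      intro j _
      rcases le_or_gt i j with hij | hij
      · rw [hA i j hij, zero_mul]
      · rw [ih j (by omega), mul_zero]
  -- scalar stages
  set κ : ℝ → Fin s → ℝ :=
    fun h i => ∑ m ∈ Finset.range s, v m i * h ^ (m+1) with hκ_def
  have hκrec : ∀ (h : ℝ) (i : Fin s), κ h i = h * (1 + ∑ j, A i j * κ h j) := by
    intro h i
    have key : ∑ m ∈ Finset.range (s+1), v m i * h ^ (m+1)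
        = κ h i := by
      rw [Finset.sum_range_succ, hvanish s i i.isLt, zero_mul, add_zero]
    have key2 : ∑ m ∈ Finset.range (s+1), v m i * h ^ (m+1)
        = v 0 i * h ^ 1 + ∑ m ∈ Finset.range s, v (m+1) i * h ^ (m+1+1) := by
      rw [Finset.sum_range_succ', add_comm]
    have hsum : ∑ j, A i j * κ h j
        = ∑ m ∈ Finset.range s, v (m+1) i * h ^ (m+1) := by
      rw [hκ_def]
      simp only [Finset.mul_sum]
      rw [Finset.sum_comm]
      apply Finset.sum_congr rfl
      intro m _
      rw [hvs, Finset.sum_mul]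
      apply Finset.sum_congr rfl
      intro j _
      ring
    rw [← key, key2, hv0, hsum, mul_add, mul_one, Finset.mul_sum]
    congr 1
    · ring
    · apply Finset.sum_congr rfl; intro m _; ring
  -- apply the order hypothesis with f t y = y, y t = exp t
  have hcd : ContDiff ℝ (⊤ : ℕ∞) (Function.uncurry (fun (_ : ℝ) (y : Fin 1 → ℝ) => y)) :=
    contDiff_snd
  set y : ℝ → (Fin 1 → ℝ) := fun t _ => Real.exp t with hy_def
  have hy : ∀ t, HasDerivAt y ((fun (_ : ℝ) (y : Fin 1 → ℝ) => y) t (y t)) t := by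
    intro t
    rw [hasDerivAt_pi]
    intro i
    exact Real.hasDerivAt_exp t
  set k : ℝ → Fin s → (Fin 1 → ℝ) := fun h i _ => κ h i with hk_def
  have hk : ∀ (h : ℝ) (i : Fin s),
      k h i = h • (fun (_ : ℝ) (y : Fin 1 → ℝ) => y) (0 + (∑ j, A i j) * h)
        ((fun _ => 1) + ∑ j, A i j • k h j) := by
    intro h i
    funext x
    have : ((fun (_ : Fin 1) => (1:ℝ)) + ∑ j, A i j • k h j) x
        = 1 + ∑ j, A i j * κ h j := by
      simp [hk_def, Finset.sum_apply]
    simp only [Pi.smul_apply, smul_eq_mul, this, hk_def]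
    simpa [Finset.sum_apply] using hκrec h i
  have hbigO := horder 1 (fun (_ : ℝ) (y : Fin 1 → ℝ) => y) hcd 0 (fun _ => 1) y hy
    (by rw [hy_def]; funext x; simp) k hk
  -- extract scalar big-O
  have hscal : (fun h : ℝ => (1 + ∑ i, b i * κ h i) - Real.exp h)
      =O[nhds 0] (fun h : ℝ => h ^ (p+1)) := by
    have hle : ∀ h : ℝ, ‖(1 + ∑ i, b i * κ h i) - Real.exp h‖
        ≤ ‖((fun _ => 1) + ∑ i, b i • k h i) - y (0 + h)‖ := by
      intro h
      have := norm_le_pi_norm ((((fun (_ : Fin 1) => (1:ℝ)) + ∑ i, b i • k h i) - y (0 + h))) 0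
      convert this using 2
      · rfl
      simp [hk_def, hy_def, Finset.sum_apply]
    exact (Asymptotics.isBigO_of_le _ hle).trans hbigO
  -- polynomial form
  set P : Polynomial ℝ := C 1 + ∑ i, C (b i) *
    ∑ m ∈ Finset.range s, C (v m i) * X ^ (m+1) with hP_def
  have hPeval : ∀ h : ℝ, P.eval h = 1 + ∑ i, b i * κ h i := by
    intro h
    rw [hP_def]
    simp [eval_finset_sum, hκ_def, Finset.mul_sum]
  -- Taylor polynomial of exp
  set T : Polynomial ℝ := ∑ j ∈ Finset.range (p+1), C (1 / (j.factorial : ℝ)) * X ^ j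
    with hT_def
  have hTeval : ∀ h : ℝ, T.eval h = ∑ j ∈ Finset.range (p+1), h ^ j / (j.factorial : ℝ) := by
    intro h
    rw [hT_def]
    simp [eval_finset_sum]
    apply Finset.sum_congr rfl
    intro j _
    ring
  have hexpO : (fun h : ℝ => Real.exp h - T.eval h) =O[nhds 0] (fun h : ℝ => h ^ (p+1)) := by
    rw [isBigO_iff]
    refine ⟨(((p+1).succ : ℕ) : ℝ) / ((((p+1).factorial : ℕ) : ℝ) * (((p+1) : ℕ) : ℝ)), ?_⟩
    have hev : ∀ᶠ h : ℝ in nhds 0, |h| ≤ 1 := by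
      filter_upwards [Metric.closedBall_mem_nhds (0:ℝ) one_pos] with h hh
      simpa [Real.dist_eq] using hh
    filter_upwards [hev] with h hh
    have := Real.exp_bound hh (n := p+1) (by omega)
    rw [hTeval]
    rw [Real.norm_eq_abs, Real.norm_eq_abs]
    calc |Real.exp h - ∑ j ∈ Finset.range (p+1), h ^ j / (j.factorial : ℝ)|
        ≤ |h| ^ (p+1) * ((((p+1).succ : ℕ) : ℝ) / ((((p+1).factorial : ℕ) : ℝ) * (((p+1) : ℕ) : ℝ))) := this
      _ = (((p+1).succ : ℕ) : ℝ) / ((((p+1).factorial : ℕ) : ℝ) * (((p+1) : ℕ) : ℝ)) * |h ^ (p+1)| := by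
          rw [abs_pow]; ring
  -- combine
  have hDO : (fun h : ℝ => (P - T).eval h) =O[nhds 0] (fun h : ℝ => h ^ (p+1)) := by
    have : (fun h : ℝ => (P - T).eval h)
        = (fun h : ℝ => ((1 + ∑ i, b i * κ h i) - Real.exp h) + (Real.exp h - T.eval h)) := by
      funext h
      rw [eval_sub, hPeval]
      ring
    rw [this]
    exact hscal.add hexpO
  have hcoeff := coeff_eq_zero_of_isBigO (p+1) (P - T)
    (hDO.mono nhdsWithin_le_nhds) p (by omega)
  rw [coeff_sub] at hcoeff
  have hPc : P.coeff p = 0 := by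
    rw [hP_def]
    rw [coeff_add, finset_sum_coeff]
    have h1 : (C (1:ℝ)).coeff p = 0 := by
      rw [coeff_C, if_neg (by omega)]
    rw [h1, zero_add]
    apply Finset.sum_eq_zero
    intro i _
    rw [coeff_C_mul, finset_sum_coeff]
    convert mul_zero (b i)
    apply Finset.sum_eq_zero
    intro m hm
    rw [coeff_C_mul, coeff_X_pow, if_neg ?_, mul_zero]
    have := Finset.mem_range.mp hm
    omega
  have hTc : T.coeff p = 1 / (p.factorial : ℝ) := by
    rw [hT_def, finset_sum_coeff]
    rw [Finset.sum_eq_single p]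
    · simp [coeff_C_mul, coeff_X_pow]
    · intro j _ hj
      simp [coeff_C_mul, coeff_X_pow, Ne.symm hj]
    · intro hp
      exact absurd (Finset.mem_range.mpr (by omega)) hp
  rw [hPc, hTc, zero_sub, neg_eq_zero] at hcoeff
  have : (p.factorial : ℝ) ≠ 0 := Nat.cast_ne_zero.mpr p.factorial_ne_zero
  simp [this] at hcoeff
end

section
/- Let α be a finite partially ordered set with n elements such that α has a least element and, for every x ∈ α, the set {y ∈ α | y < x} is a chain (linearly ordered). For x ∈ α let h(x) := |{y ∈ α | x ≤ y}| denote the size of the principal up-set at x. Then the number of bijections ℓ : α → {1, 2, …, n} that are strictly order-preserving (x < y implies ℓ(x) < ℓ(y)) equals n! / ∏_{x ∈ α} h(x). (The number of rooted labelings of a rooted tree τ equals |τ|!/τ!, where the tree factorial τ! is the product over vertices v of the order of the subtree rooted at v — the intermediate counting claim in the proof of Proposition 1.22.) -/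
/-!
The element labelled `0` by a strictly monotone labeling is minimal, so such labelings by
`Fin (n + 1)` correspond to pairs of a minimal element `m` and a labeling of `α \ {m}` by `Fin n`.
Deleting a minimal element does not change the up-sets of the other elements, so writing `N` for
the number of labelings, `P` for the product of the up-set sizes and `u m` for the size of the
up-set of `m`, induction gives `N(α) P(α) = ∑ₘ u m · N(α \ {m}) P(α \ {m}) = n! ∑ₘ u m`.
Since the strict down-sets are chains, every element lies above exactly one minimal element,
hence `∑ₘ u m = n + 1`.
-/

section Labelings

variable {α : Type*} {n : ℕ}

def tailLabeling (ℓ : α ≃ Fin (n + 1)) : {x // x ≠ ℓ.symm 0} ≃ Fin n :=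
  (ℓ.subtypeEquiv fun _ => ℓ.eq_symm_apply.not).trans (finSuccAboveEquiv 0).symm

theorem succ_tailLabeling (ℓ : α ≃ Fin (n + 1)) (x : {x // x ≠ ℓ.symm 0}) :
    (tailLabeling ℓ x).succ = ℓ x := by
  have h := (finSuccAboveEquiv 0).apply_symm_apply ⟨ℓ x, ℓ.eq_symm_apply.not.1 x.2⟩
  rw [finSuccAboveEquiv_apply, Subtype.mk.injEq, Fin.succAbove_zero] at h
  exact h

variable [DecidableEq α]

def consLabeling (m : α) (ℓ : {x // x ≠ m} ≃ Fin n) : α ≃ Fin (n + 1) :=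
  (Equiv.optionSubtypeNe m).symm.trans (ℓ.optionCongr.trans (finSuccEquiv n).symm)

@[simp]
theorem consLabeling_self (m : α) (ℓ : {x // x ≠ m} ≃ Fin n) : consLabeling m ℓ m = 0 := by
  simp [consLabeling]

theorem consLabeling_of_ne {m x : α} (h : x ≠ m) (ℓ : {x // x ≠ m} ≃ Fin n) :
    consLabeling m ℓ x = (ℓ ⟨x, h⟩).succ := by
  simp [consLabeling, Equiv.optionSubtypeNe_symm_of_ne h]

theorem consLabeling_symm_zero (m : α) (ℓ : {x // x ≠ m} ≃ Fin n) :
    (consLabeling m ℓ).symm 0 = m := by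
  rw [Equiv.symm_apply_eq, consLabeling_self]

theorem consLabeling_injective (m : α) : Function.Injective (consLabeling (n := n) m) := by
  intro ℓ₁ ℓ₂ h
  refine Equiv.ext fun x => ?_
  simpa [consLabeling_of_ne x.2] using congr($h x)

theorem consLabeling_tailLabeling (ℓ : α ≃ Fin (n + 1)) :
    consLabeling (ℓ.symm 0) (tailLabeling ℓ) = ℓ := by
  ext x
  by_cases h : x = ℓ.symm 0
  · simp [h]
  · rw [consLabeling_of_ne h, succ_tailLabeling]

end Labelings

section StrictMonoLabelings

variable {α : Type*} [PartialOrder α] {n : ℕ}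

theorem isMin_symm_zero {ℓ : α ≃ Fin (n + 1)} (hℓ : StrictMono ℓ) : IsMin (ℓ.symm 0) :=
  fun x hx => by_contra fun hnot => Fin.not_lt_zero (ℓ x) <| by
    simpa using hℓ (lt_of_le_not_ge hx hnot)

theorem StrictMono.tailLabeling {ℓ : α ≃ Fin (n + 1)} (hℓ : StrictMono ℓ) :
    StrictMono (tailLabeling ℓ) := fun x y hxy => by
  rw [← Fin.succ_lt_succ_iff, succ_tailLabeling, succ_tailLabeling]
  exact hℓ hxy

variable [DecidableEq α]

theorem StrictMono.consLabeling {m : α} (hm : IsMin m) {ℓ : {x // x ≠ m} ≃ Fin n}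
    (hℓ : StrictMono ℓ) : StrictMono (consLabeling m ℓ) := by
  intro x y hxy
  have hy : y ≠ m := fun h => (h ▸ hxy).not_ge (hm (h ▸ hxy).le)
  rw [consLabeling_of_ne hy]
  by_cases hx : x = m
  · rw [hx, consLabeling_self]
    exact Fin.succ_pos _
  · rw [consLabeling_of_ne hx, Fin.succ_lt_succ_iff]
    exact hℓ (show (⟨x, hx⟩ : {x // x ≠ m}) < ⟨y, hy⟩ from hxy)

noncomputable def strictMonoLabelingSuccEquiv :
    (Σ m : {m : α // IsMin m}, {ℓ : {x // x ≠ m.1} ≃ Fin n // StrictMono ℓ}) ≃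
      {ℓ : α ≃ Fin (n + 1) // StrictMono ℓ} :=
  Equiv.ofBijective (fun σ => ⟨consLabeling σ.1.1 σ.2.1, σ.2.2.consLabeling σ.1.2⟩) <| by
    constructor
    · rintro ⟨⟨m₁, hm₁⟩, ℓ₁, hℓ₁⟩ ⟨⟨m₂, hm₂⟩, ℓ₂, hℓ₂⟩ h
      obtain rfl : m₁ = m₂ := by
        rw [← consLabeling_symm_zero m₁ ℓ₁, ← consLabeling_symm_zero m₂ ℓ₂]
        exact congr($h.1.symm 0)
      obtain rfl : ℓ₁ = ℓ₂ := consLabeling_injective m₁ congr($h.1)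
      rfl
    · rintro ⟨ℓ, hℓ⟩
      exact ⟨⟨⟨ℓ.symm 0, isMin_symm_zero hℓ⟩, tailLabeling ℓ, hℓ.tailLabeling⟩,
        Subtype.ext (consLabeling_tailLabeling ℓ)⟩

end StrictMonoLabelings

section Forest

variable {α : Type*} [PartialOrder α]

theorem exists_isMin_le [WellFoundedLT α] (y : α) : ∃ m, IsMin m ∧ m ≤ y := by
  obtain ⟨m, hmy, hm⟩ := exists_minimal_le_of_wellFoundedLT (fun _ => True) y trivial
  exact ⟨m, minimal_true.1 hm, hmy⟩

theorem eq_of_isMin_of_le_of_le (hchain : ∀ x : α, IsChain (· ≤ ·) (Set.Iio x)) {m₁ m₂ y : α}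
    (h₁ : IsMin m₁) (h₂ : IsMin m₂) (hy₁ : m₁ ≤ y) (hy₂ : m₂ ≤ y) : m₁ = m₂ := by
  have hcomparable : m₁ ≤ m₂ ∨ m₂ ≤ m₁ := by
    rcases hy₁.eq_or_lt with rfl | hlt₁
    · exact .inr hy₂
    rcases hy₂.eq_or_lt with rfl | hlt₂
    · exact .inl hy₁
    exact (hchain y).total hlt₁ hlt₂
  rcases hcomparable with h | h
  exacts [h₂.eq_of_le h, h₁.eq_of_ge h]

noncomputable def sigmaIsMinLeEquiv [WellFoundedLT α]
    (hchain : ∀ x : α, IsChain (· ≤ ·) (Set.Iio x)) :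
    (Σ m : {m : α // IsMin m}, {y // m.1 ≤ y}) ≃ α :=
  Equiv.ofBijective (fun σ => σ.2.1) <| by
    constructor
    · rintro ⟨⟨m₁, hm₁⟩, y, hy₁⟩ ⟨⟨m₂, hm₂⟩, _, hy₂⟩ rfl
      obtain rfl := eq_of_isMin_of_le_of_le hchain hm₁ hm₂ hy₁ hy₂
      rfl
    · intro y
      obtain ⟨m, hm, hmy⟩ := exists_isMin_le y
      exact ⟨⟨⟨m, hm⟩, y, hmy⟩, rfl⟩

theorem isChain_Iio_subtype (hchain : ∀ x : α, IsChain (· ≤ ·) (Set.Iio x)) (p : α → Prop)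
    (x : Subtype p) : IsChain (· ≤ ·) (Set.Iio x) :=
  (hchain x.1).preimage_embedding (OrderEmbedding.subtype p)

theorem card_Ici_subtype_ne_of_isMin {m : α} (hm : IsMin m) (x : {x // x ≠ m}) :
    Nat.card {y : {x // x ≠ m} // x ≤ y} = Nat.card {y // x.1 ≤ y} :=
  Nat.card_congr <| (Equiv.subtypeSubtypeEquivSubtypeInter (· ≠ m) (x.1 ≤ ·)).trans <|
    Equiv.subtypeEquivRight fun _ => and_iff_right_of_imp fun hxy hym =>
      x.2 (hm.eq_of_le (hym ▸ hxy))

theorem prod_card_Ici_eq_mul_of_isMin [Fintype α] [DecidableEq α] {m : α} (hm : IsMin m) :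
    ∏ x : α, Nat.card {y // x ≤ y} =
      Nat.card {y // m ≤ y} * ∏ x : {x // x ≠ m}, Nat.card {y : {x // x ≠ m} // x ≤ y} := by
  simp_rw [card_Ici_subtype_ne_of_isMin hm]
  rw [Fintype.prod_eq_mul_prod_compl m, Finset.prod_subtype (p := (· ≠ m)) _ fun _ => by simp]

end Forest

theorem card_strictMonoLabeling_mul_prod_card_Ici (n : ℕ) :
    ∀ (α : Type*) [Fintype α] [PartialOrder α], Fintype.card α = n →
      (∀ x : α, IsChain (· ≤ ·) (Set.Iio x)) →
      Nat.card {ℓ : α ≃ Fin n // StrictMono ℓ} * ∏ x : α, Nat.card {y // x ≤ y} = n.factorial := by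
  induction n with
  | zero =>
    intro α _ _ hα _
    have : IsEmpty α := Fintype.card_eq_zero_iff.1 hα
    have : Unique {ℓ : α ≃ Fin 0 // StrictMono ℓ} :=
      ⟨⟨Equiv.equivOfIsEmpty _ _, isEmptyElim⟩, fun _ => Subsingleton.elim _ _⟩
    simp
  | succ n ih =>
    intro α _ _ hα hchain
    classical
    have hcard_ne (m : α) : Fintype.card {x // x ≠ m} = n := by
      simp [Fintype.card_subtype_compl, hα]
    calc Nat.card {ℓ : α ≃ Fin (n + 1) // StrictMono ℓ} * ∏ x : α, Nat.card {y // x ≤ y}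
        = ∑ m : {m : α // IsMin m}, Nat.card {ℓ : {x // x ≠ m.1} ≃ Fin n // StrictMono ℓ} *
            ∏ x : α, Nat.card {y // x ≤ y} := by
          rw [← Nat.card_congr strictMonoLabelingSuccEquiv, Nat.card_sigma, Finset.sum_mul]
      _ = ∑ m : {m : α // IsMin m}, Nat.card {y // m.1 ≤ y} * n.factorial := by
          refine Finset.sum_congr rfl fun m _ => ?_
          rw [prod_card_Ici_eq_mul_of_isMin m.2, mul_left_comm,
            ih _ (hcard_ne m) (isChain_Iio_subtype hchain _)]
      _ = (n + 1).factorial := by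
          rw [← Finset.sum_mul, ← Nat.card_sigma, Nat.card_congr (sigmaIsMinLeEquiv hchain),
            Nat.card_eq_fintype_card, hα, Nat.factorial_succ]

theorem rooted_labelings_count_general
    (α : Type) [Fintype α] [PartialOrder α]
    (n : ℕ) (hn : Fintype.card α = n)
    (hchain : ∀ x : α, IsChain (· ≤ ·) {y : α | y < x}) :
    Nat.card {ℓ : α ≃ Fin n // ∀ x y : α, x < y → ℓ x < ℓ y} =
      Nat.factorial n / ∏ x : α, Nat.card {y : α // x ≤ y} := by
  have hpos : 0 < ∏ x : α, Nat.card {y : α // x ≤ y} :=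
    Finset.prod_pos fun x _ => Nat.card_pos_iff.2 ⟨⟨⟨x, le_rfl⟩⟩, inferInstance⟩
  exact Nat.eq_div_of_mul_eq_left hpos.ne' (card_strictMonoLabeling_mul_prod_card_Ici n α hn hchain)

/-- The number of rooted labelings of a rooted tree `τ` equals `|τ|!/τ!`:
for a finite poset with a least element in which the strict down-set of every
element is a chain, the number of strictly order-preserving bijections onto
`{1, …, n}` is `n!` divided by the product of the sizes of the principal
up-sets. -/
theorem rooted_labelings_count
    (α : Type) [Fintype α] [PartialOrder α]
    (n : ℕ) (hn : Fintype.card α = n)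
    (hbot : ∃ m : α, ∀ x : α, m ≤ x)
    (hchain : ∀ x : α, IsChain (· ≤ ·) {y : α | y < x}) :
    Nat.card {ℓ : α ≃ Fin n // ∀ x y : α, x < y → ℓ x < ℓ y} =
      Nat.factorial n / ∏ x : α, Nat.card {y : α // x ≤ y} :=
  rooted_labelings_count_general α n hn hchain
end
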